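/- arXiv:0904.2144 — 6 statements merged into one kernel-verified Lean document; each statement's English description precedes it below -/
import Mathlib

section
/- Fix z ∈ 𝒳 with p(z) > 0 and let (y_ℓ)_{ℓ≥1} be i.i.d. random variables with density q(·|z). Then the random variable ξ̂ = 1 + Σ_{j=1}^∞ Π_{ℓ=1}^{j} (1 − α(z,y_ℓ)) is almost surely finite and is an unbiased estimator of 1/p(z), i.e. E[ξ̂] = 1/p(z). -/
open MeasureTheory ProbabilityTheory Filter Set
open scoped ENNReal NNReal

/-- The Metropolis–Hastings acceptance probability
`α(x,y) = min {1, π(y) q(x|y) / (π(x) q(y|x))}`, where `qq x y` denotes the proposal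
density `q(y|x)` and `pi` is the target density. -/
noncomputable def mhAlpha {X : Type*} (pi : X → ℝ) (qq : X → X → ℝ) (x y : X) : ℝ :=
  min 1 (pi y * qq y x / (pi x * qq x y))

lemma mhAlpha_mem {X : Type*} (pi : X → ℝ) (qq : X → X → ℝ)
    (hpi0 : ∀ x, 0 ≤ pi x) (hqq0 : ∀ x y, 0 ≤ qq x y) (x y : X) :
    0 ≤ mhAlpha pi qq x y ∧ mhAlpha pi qq x y ≤ 1 := by
  constructor
  · exact le_min one_pos.le (div_nonneg (mul_nonneg (hpi0 y) (hqq0 y x))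
      (mul_nonneg (hpi0 x) (hqq0 x y)))
  · exact min_le_left _ _

/-- Fix `z` with `p(z) > 0` and let `(y_ℓ)_{ℓ ≥ 1}` be i.i.d. with
density `q(·|z)`.  Then `ξ̂ = 1 + ∑_{j ≥ 1} ∏_{ℓ ≤ j} (1 - α(z, y_ℓ))` is almost surely
finite and is an unbiased estimator of `1/p(z)`, i.e. `E[ξ̂] = 1/p(z)`.
(`ξ̂` is formalized as an `ℝ≥0∞`-valued sum, so "almost surely finite" is `ξ̂ < ∞` a.s.
and unbiasedness is `∫⁻ ξ̂ dP = ENNReal.ofReal (1/p(z))`;  sequences are `0`-indexed.) -/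
theorem vanillaRB_xi_unbiased
    {X : Type*} [MeasurableSpace X] (ν : Measure X) [SigmaFinite ν]
    (pi : X → ℝ) (qq : X → X → ℝ)
    (hpi : Measurable pi) (hqq : Measurable (Function.uncurry qq))
    (hpi0 : ∀ x, 0 ≤ pi x) (hqq0 : ∀ x y, 0 ≤ qq x y)
    (z : X)
    [IsProbabilityMeasure (ν.withDensity fun y => ENNReal.ofReal (qq z y))]
    (p : ℝ) (hp : p = ∫ y, mhAlpha pi qq z y * qq z y ∂ν) (hppos : 0 < p)
    {Ω : Type*} [MeasurableSpace Ω] (P : Measure Ω) [IsProbabilityMeasure P]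
    (Y : ℕ → Ω → X) (hYmeas : ∀ ℓ, Measurable (Y ℓ))
    (hindep : iIndepFun Y P)
    (hlaw : ∀ ℓ, P.map (Y ℓ) = ν.withDensity fun y => ENNReal.ofReal (qq z y)) :
    (∀ᵐ ω ∂P,
        (1 + ∑' j : ℕ, ∏ ℓ ∈ Finset.range (j + 1),
          ENNReal.ofReal (1 - mhAlpha pi qq z (Y ℓ ω))) < ⊤) ∧
      ∫⁻ ω, (1 + ∑' j : ℕ, ∏ ℓ ∈ Finset.range (j + 1),
          ENNReal.ofReal (1 - mhAlpha pi qq z (Y ℓ ω))) ∂P = ENNReal.ofReal (1 / p) := by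
  -- basic measurability
  have hqzy : Measurable fun y => qq z y := hqq.comp (measurable_const.prodMk measurable_id)
  have hqyz : Measurable fun y => qq y z := hqq.comp (measurable_id.prodMk measurable_const)
  have halpha : Measurable fun y => mhAlpha pi qq z y := by
    unfold mhAlpha
    exact measurable_const.min (((hpi.mul hqyz).div (hqzy.const_mul (pi z))))
  set f : X → ℝ≥0∞ := fun y => ENNReal.ofReal (1 - mhAlpha pi qq z y) with hf
  have hfmeas : Measurable f := (measurable_const.sub halpha).ennreal_ofReal
  set μ : Measure X := ν.withDensity fun y => ENNReal.ofReal (qq z y) with hμ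
  -- a := ∫⁻ ofReal (α q)
  set a : ℝ≥0∞ := ∫⁻ y, ENNReal.ofReal (mhAlpha pi qq z y * qq z y) ∂ν with ha
  have haq_meas : Measurable fun y => mhAlpha pi qq z y * qq z y := halpha.mul hqzy
  have hsplit : (∫⁻ y, f y * ENNReal.ofReal (qq z y) ∂ν) + a = 1 := by
    rw [← lintegral_add_left (show Measurable fun y => f y * ENNReal.ofReal (qq z y) from
      hfmeas.mul hqzy.ennreal_ofReal)]
    have : ∀ y, f y * ENNReal.ofReal (qq z y) + ENNReal.ofReal (mhAlpha pi qq z y * qq z y)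
        = ENNReal.ofReal (qq z y) := by
      intro y
      obtain ⟨h0, h1⟩ := mhAlpha_mem pi qq hpi0 hqq0 z y
      rw [hf, ← ENNReal.ofReal_mul (by linarith), ← ENNReal.ofReal_add
        (mul_nonneg (by linarith) (hqq0 z y)) (mul_nonneg h0 (hqq0 z y))]
      ring_nf
    simp_rw [this]
    have h1 : μ univ = 1 := measure_univ
    rw [hμ, withDensity_apply _ MeasurableSet.univ] at h1
    simpa [Measure.restrict_univ] using h1
  have hall : (∫⁻ y, ENNReal.ofReal (qq z y) ∂ν) = 1 := by
    have h1 : μ univ = 1 := measure_univ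
    rw [hμ, withDensity_apply _ MeasurableSet.univ] at h1
    simpa [Measure.restrict_univ] using h1
  have ha_le : a ≤ 1 := by
    rw [← hall]
    refine lintegral_mono fun y => ENNReal.ofReal_le_ofReal ?_
    obtain ⟨h0, h1⟩ := mhAlpha_mem pi qq hpi0 hqq0 z y
    nlinarith [hqq0 z y]
  have ha_ne_top : a ≠ ⊤ := (lt_of_le_of_lt ha_le ENNReal.one_lt_top).ne
  -- a = ofReal p
  have hint : Integrable (fun y => mhAlpha pi qq z y * qq z y) ν := by
    refine ⟨haq_meas.aestronglyMeasurable, ?_⟩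
    rw [HasFiniteIntegral]
    have : ∀ y, ‖mhAlpha pi qq z y * qq z y‖ₑ
        = ENNReal.ofReal (mhAlpha pi qq z y * qq z y) := by
      intro y
      obtain ⟨h0, _⟩ := mhAlpha_mem pi qq hpi0 hqq0 z y
      rw [← Real.enorm_eq_ofReal (mul_nonneg h0 (hqq0 z y))]
    simp_rw [this]
    exact lt_of_le_of_lt ha_le ENNReal.one_lt_top
  have hap : a = ENNReal.ofReal p := by
    rw [hp, ofReal_integral_eq_lintegral_ofReal hint]
    exact Eventually.of_forall fun y =>
      mul_nonneg (mhAlpha_mem pi qq hpi0 hqq0 z y).1 (hqq0 z y)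
  have ha_ne : a ≠ 0 := by
    rw [hap]
    simpa using hppos
  -- β := E f (Y ℓ)
  set β : ℝ≥0∞ := 1 - a with hβ
  have hEf : ∀ ℓ, ∫⁻ ω, f (Y ℓ ω) ∂P = β := by
    intro ℓ
    rw [← lintegral_map hfmeas (hYmeas ℓ), hlaw ℓ,
      lintegral_withDensity_eq_lintegral_mul _ hqzy.ennreal_ofReal hfmeas]
    have hc : ∫⁻ y, ENNReal.ofReal (qq z y) * f y ∂ν = ∫⁻ y, f y * ENNReal.ofReal (qq z y) ∂ν :=
      lintegral_congr fun y => mul_comm _ _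
    simp only [Pi.mul_apply]
    rw [hc, hβ, ← hsplit]
    simp [ENNReal.add_sub_cancel_right ha_ne_top]
  have hβ_ne_top : β ≠ ⊤ := by
    rw [hβ]; exact (tsub_le_self.trans_lt ENNReal.one_lt_top).ne
  -- E of products
  have hgmeas : ∀ ℓ, Measurable fun ω => f (Y ℓ ω) := fun ℓ => hfmeas.comp (hYmeas ℓ)
  have hgindep : iIndepFun (fun ℓ ω => f (Y ℓ ω)) P :=
    hindep.comp _ fun _ => hfmeas
  have hprod : ∀ n : ℕ, ∫⁻ ω, ∏ ℓ ∈ Finset.range n, f (Y ℓ ω) ∂P = β ^ n := by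
    intro n
    induction n with
    | zero => simp
    | succ n ih =>
      have hIndep : IndepFun (∏ ℓ ∈ Finset.range n, fun ω => f (Y ℓ ω))
          (fun ω => f (Y n ω)) P :=
        hgindep.indepFun_prod_range_succ hgmeas n
      have hpe : (∏ ℓ ∈ Finset.range n, fun ω => f (Y ℓ ω))
          = fun ω => ∏ ℓ ∈ Finset.range n, f (Y ℓ ω) := by
        funext ω; simp [Finset.prod_apply]
      have hpm : Measurable (∏ ℓ ∈ Finset.range n, fun ω => f (Y ℓ ω)) := by
        rw [hpe]; exact Finset.measurable_prod _ fun ℓ _ => hgmeas ℓ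
      have := lintegral_mul_eq_lintegral_mul_lintegral_of_indepFun hpm (hgmeas n) hIndep
      calc ∫⁻ ω, ∏ ℓ ∈ Finset.range (n + 1), f (Y ℓ ω) ∂P
          = ∫⁻ ω, (∏ ℓ ∈ Finset.range n, fun ω => f (Y ℓ ω)) ω * f (Y n ω) ∂P := by
            simp only [hpe, Finset.prod_range_succ]
        _ = (∫⁻ ω, (∏ ℓ ∈ Finset.range n, fun ω => f (Y ℓ ω)) ω ∂P)
            * ∫⁻ ω, f (Y n ω) ∂P := this
        _ = β ^ n * β := by
            rw [hEf n, hpe, ih]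
        _ = β ^ (n + 1) := (pow_succ β n).symm
  -- total expectation
  have hterm_meas : ∀ j : ℕ, Measurable fun ω =>
      ∏ ℓ ∈ Finset.range (j + 1), f (Y ℓ ω) :=
    fun j => Finset.measurable_prod _ fun ℓ _ => hgmeas ℓ
  have hxi_meas : Measurable fun ω =>
      (1 + ∑' j : ℕ, ∏ ℓ ∈ Finset.range (j + 1), f (Y ℓ ω) : ℝ≥0∞) :=
    measurable_const.add (Measurable.ennreal_tsum hterm_meas)
  have hone_sub : 1 - β = a := by
    rw [hβ]; exact ENNReal.sub_sub_cancel ENNReal.one_ne_top ha_le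
  have hE : ∫⁻ ω, (1 + ∑' j : ℕ, ∏ ℓ ∈ Finset.range (j + 1), f (Y ℓ ω)) ∂P
      = ENNReal.ofReal (1 / p) := by
    rw [lintegral_add_left measurable_const,
      lintegral_tsum fun j => (hterm_meas j).aemeasurable]
    simp_rw [hprod]
    have hsum : ∑' j : ℕ, β ^ (j + 1) = β * a⁻¹ := by
      have : ∀ j : ℕ, β ^ (j + 1) = β * β ^ j := fun j => by rw [pow_succ, mul_comm]
      simp_rw [this]
      rw [ENNReal.tsum_mul_left, ENNReal.tsum_geometric, hone_sub]
    rw [lintegral_const, measure_univ, mul_one, hsum]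
    have hmul : a * a⁻¹ = 1 := ENNReal.mul_inv_cancel ha_ne ha_ne_top
    have : (1 : ℝ≥0∞) + β * a⁻¹ = (a + β) * a⁻¹ := by
      rw [add_mul, hmul]
    rw [this, hβ, add_tsub_cancel_of_le ha_le, one_mul, hap, one_div,
      ENNReal.ofReal_inv_of_pos hppos]
  refine ⟨?_, hE⟩
  have := ae_lt_top hxi_meas (by rw [hE]; exact ENNReal.ofReal_ne_top)
  exact this
end

section
/- Fix z ∈ 𝒳 with p(z) > 0 and let (y_ℓ)_{ℓ≥1} be i.i.d. random variables with density q(·|z). Then the variance of ξ̂ = 1 + Σ_{j=1}^∞ Π_{ℓ=1}^{j} (1 − α(z,y_ℓ)) is at most (1 − p(z))/p(z)², the variance of a geometric random variable with success probability p(z). -/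
open MeasureTheory ProbabilityTheory Filter Set
open scoped ENNReal NNReal

section Aux

/-- Real geometric-type double sum computation. -/
lemma aux_pair_sum {a : ℝ} (ha0 : 0 ≤ a) (ha1 : a < 1) :
    Summable (fun zz : ℕ × ℕ => a ^ max zz.1 zz.2) ∧
      ∑' zz : ℕ × ℕ, a ^ max zz.1 zz.2 = (1 + a) / (1 - a) ^ 2 := by
  have hgeo : Summable (fun n : ℕ => a ^ n) := summable_geometric_of_lt_one ha0 ha1
  have hnorm : ‖a‖ < 1 := by rwa [Real.norm_eq_abs, abs_of_nonneg ha0]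
  have hinner : ∀ j : ℕ, Summable (fun k : ℕ => a ^ max j k) := fun j =>
    Summable.of_nonneg_of_le (fun k => pow_nonneg ha0 _)
      (fun k => pow_le_pow_of_le_one ha0 ha1.le (le_max_right j k)) hgeo
  have htail : ∀ j : ℕ, ∑' i : ℕ, a ^ (i + (j + 1)) = (1 - a)⁻¹ * a ^ (j + 1) := by
    intro j
    have : ∀ i : ℕ, a ^ (i + (j + 1)) = a ^ i * a ^ (j + 1) := fun i => pow_add a i (j + 1)
    rw [tsum_congr this, tsum_mul_right, tsum_geometric_of_lt_one ha0 ha1]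
  have hinner_val : ∀ j : ℕ,
      ∑' k : ℕ, a ^ max j k = (j + 1 : ℝ) * a ^ j + (1 - a)⁻¹ * a ^ (j + 1) := by
    intro j
    rw [← (hinner j).sum_add_tsum_nat_add (k := j + 1)]
    have h1 : ∑ i ∈ Finset.range (j + 1), a ^ max j i = (j + 1 : ℝ) * a ^ j := by
      rw [Finset.sum_congr rfl (fun i hi => by
        rw [max_eq_left (Nat.lt_succ_iff.mp (Finset.mem_range.mp hi))])]
      simp [Finset.sum_const, nsmul_eq_mul]
    have h2 : ∑' i : ℕ, a ^ max j (i + (j + 1)) = (1 - a)⁻¹ * a ^ (j + 1) := by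
      rw [tsum_congr (fun i => by rw [max_eq_right (by omega : j ≤ i + (j + 1))]), htail j]
    rw [h1, h2]
  have hA : Summable (fun j : ℕ => (j : ℝ) * a ^ j) :=
    (summable_pow_mul_geometric_of_norm_lt_one 1 hnorm).congr fun n => by rw [pow_one]
  have s1 : Summable (fun j : ℕ => ((j : ℝ) + 1) * a ^ j) :=
    (hA.add hgeo).congr fun j => by ring
  have s2 : Summable (fun j : ℕ => (1 - a)⁻¹ * a ^ (j + 1)) :=
    ((hgeo.mul_left a).mul_left (1 - a)⁻¹).congr fun j => by rw [pow_succ']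
  have souter : Summable (fun j : ℕ => ∑' k : ℕ, a ^ max j k) :=
    (s1.add s2).congr fun j => (hinner_val j).symm
  have hpair : Summable (fun zz : ℕ × ℕ => a ^ max zz.1 zz.2) :=
    (summable_prod_of_nonneg (fun zz => pow_nonneg ha0 _)).mpr ⟨hinner, souter⟩
  refine ⟨hpair, ?_⟩
  have hne : (1 : ℝ) - a ≠ 0 := by linarith
  have t1 : ∑' j : ℕ, ((j : ℝ) + 1) * a ^ j = a / (1 - a) ^ 2 + (1 - a)⁻¹ := by
    rw [← tsum_coe_mul_geometric_of_norm_lt_one hnorm, ← tsum_geometric_of_lt_one ha0 ha1,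
      ← hA.tsum_add hgeo]
    exact tsum_congr fun j => by ring
  have t2 : ∑' j : ℕ, (1 - a)⁻¹ * a ^ (j + 1) = (1 - a)⁻¹ * (a * (1 - a)⁻¹) := by
    rw [tsum_mul_left]
    congr 1
    rw [tsum_congr (fun j => pow_succ' a j), tsum_mul_left, tsum_geometric_of_lt_one ha0 ha1]
  calc ∑' zz : ℕ × ℕ, a ^ max zz.1 zz.2
      = ∑' j : ℕ, ∑' k : ℕ, a ^ max j k := hpair.tsum_prod' hinner
    _ = ∑' j : ℕ, (((j : ℝ) + 1) * a ^ j + (1 - a)⁻¹ * a ^ (j + 1)) :=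
        tsum_congr hinner_val
    _ = (a / (1 - a) ^ 2 + (1 - a)⁻¹) + (1 - a)⁻¹ * (a * (1 - a)⁻¹) := by
        rw [s1.tsum_add s2, t1, t2]
    _ = (1 + a) / (1 - a) ^ 2 := by field_simp; ring

end Aux

/-- Fix `z` with `p(z) > 0` and let `(y_ℓ)_{ℓ ≥ 1}` be i.i.d. with
density `q(·|z)`.  Then the variance of
`ξ̂ = 1 + ∑_{j ≥ 1} ∏_{ℓ ≤ j} (1 - α(z, y_ℓ))` is at most `(1 - p(z))/p(z)²`, the
variance of a geometric random variable of success probability `p(z)`.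
(Sequences are `0`-indexed.) -/
theorem vanillaRB_xi_variance_le_geometric
    {X : Type*} [MeasurableSpace X] (ν : Measure X) [SigmaFinite ν]
    (pi : X → ℝ) (qq : X → X → ℝ)
    (hpi : Measurable pi) (hqq : Measurable (Function.uncurry qq))
    (hpi0 : ∀ x, 0 ≤ pi x) (hqq0 : ∀ x y, 0 ≤ qq x y)
    (z : X)
    [IsProbabilityMeasure (ν.withDensity fun y => ENNReal.ofReal (qq z y))]
    (p : ℝ) (hp : p = ∫ y, mhAlpha pi qq z y * qq z y ∂ν) (hppos : 0 < p)
    {Ω : Type*} [MeasurableSpace Ω] (P : Measure Ω) [IsProbabilityMeasure P]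
    (Y : ℕ → Ω → X) (hYmeas : ∀ ℓ, Measurable (Y ℓ))
    (hindep : iIndepFun Y P)
    (hlaw : ∀ ℓ, P.map (Y ℓ) = ν.withDensity fun y => ENNReal.ofReal (qq z y)) :
    variance
        (fun ω => 1 + ∑' j : ℕ, ∏ ℓ ∈ Finset.range (j + 1),
          (1 - mhAlpha pi qq z (Y ℓ ω))) P ≤ (1 - p) / p ^ 2 := by
  classical
  set μ : Measure X := ν.withDensity fun y => ENNReal.ofReal (qq z y) with hμdef
  -- basic properties of the acceptance probability
  have hα0 : ∀ y, 0 ≤ mhAlpha pi qq z y := fun y =>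
    le_min zero_le_one
      (div_nonneg (mul_nonneg (hpi0 y) (hqq0 y z)) (mul_nonneg (hpi0 z) (hqq0 z y)))
  have hα1 : ∀ y, mhAlpha pi qq z y ≤ 1 := fun y => min_le_left _ _
  set g : X → ℝ := fun y => 1 - mhAlpha pi qq z y with hgdef
  have hg0 : ∀ y, 0 ≤ g y := fun y => by simp [hgdef, hα1 y]
  have hg1 : ∀ y, g y ≤ 1 := fun y => by
    simp only [hgdef]; linarith [hα0 y]
  have hqzm : Measurable fun y => qq z y :=
    hqq.comp (measurable_const.prodMk measurable_id)
  have hqzm' : Measurable fun y => qq y z :=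
    hqq.comp (measurable_id.prodMk measurable_const)
  have hαm : Measurable (mhAlpha pi qq z) := by
    unfold mhAlpha
    exact measurable_const.min ((hpi.mul hqzm').div (measurable_const.mul hqzm))
  have hgm : Measurable g := measurable_const.sub hαm
  -- integrability facts on X
  have hq1 : ∫⁻ y, ENNReal.ofReal (qq z y) ∂ν = 1 := by
    have := measure_univ (μ := μ)
    rwa [hμdef, withDensity_apply _ MeasurableSet.univ, setLIntegral_univ] at this
  have hqint : Integrable (fun y => qq z y) ν := by
    refine ⟨hqzm.aestronglyMeasurable, ?_⟩
    rw [hasFiniteIntegral_iff_ofReal (Filter.Eventually.of_forall fun y => hqq0 z y)]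
    simp [hq1]
  have hαqint : Integrable (fun y => mhAlpha pi qq z y * qq z y) ν := by
    refine hqint.mono' (hαm.mul hqzm).aestronglyMeasurable
      (Filter.Eventually.of_forall fun y => ?_)
    rw [Real.norm_eq_abs, abs_of_nonneg (mul_nonneg (hα0 y) (hqq0 z y))]
    nlinarith [hα0 y, hα1 y, hqq0 z y]
  have hqv : ∫ y, qq z y ∂ν = 1 := by
    have h := ofReal_integral_eq_lintegral_ofReal hqint
      (Filter.Eventually.of_forall fun y => hqq0 z y)
    rw [hq1] at h
    have h0 : 0 ≤ ∫ y, qq z y ∂ν := integral_nonneg fun y => hqq0 z y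
    rw [← ENNReal.ofReal_one] at h
    exact (ENNReal.ofReal_eq_ofReal_iff h0 zero_le_one).mp h
  have hp1 : p ≤ 1 := by
    rw [hp, ← hqv]
    refine integral_mono hαqint hqint fun y => ?_
    nlinarith [hα0 y, hα1 y, hqq0 z y]
  set a : ℝ := 1 - p with hadef
  have ha0 : 0 ≤ a := by simp [hadef]; linarith
  have ha1 : a < 1 := by simp [hadef]; linarith
  have hane : (1 : ℝ) - a ≠ 0 := by simp [hadef]; linarith
  -- integral of g against μ
  have hgqint : Integrable (fun y => g y * qq z y) ν := by
    refine hqint.mono' (hgm.mul hqzm).aestronglyMeasurable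
      (Filter.Eventually.of_forall fun y => ?_)
    rw [Real.norm_eq_abs, abs_of_nonneg (mul_nonneg (hg0 y) (hqq0 z y))]
    nlinarith [hg0 y, hg1 y, hqq0 z y]
  have hgq_val : ∫ y, g y * qq z y ∂ν = a := by
    have : (fun y => g y * qq z y) = fun y => qq z y - mhAlpha pi qq z y * qq z y := by
      funext y; simp [hgdef]; ring
    rw [this, integral_sub hqint hαqint, hqv, ← hp, hadef]
  have haval : ∫⁻ y, ENNReal.ofReal (g y) ∂μ = ENNReal.ofReal a := by
    rw [hμdef, lintegral_withDensity_eq_lintegral_mul ν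
      (hqzm.ennreal_ofReal) (hgm.ennreal_ofReal)]
    have : ∀ y, ((fun y => ENNReal.ofReal (qq z y)) * fun y => ENNReal.ofReal (g y)) y
        = ENNReal.ofReal (g y * qq z y) := by
      intro y
      simp [Pi.mul_apply, ← ENNReal.ofReal_mul (hqq0 z y), mul_comm]
    rw [lintegral_congr this, ← ofReal_integral_eq_lintegral_ofReal hgqint
      (Filter.Eventually.of_forall fun y => mul_nonneg (hg0 y) (hqq0 z y)), hgq_val]
  -- the ENNReal-valued factors
  set G : ℕ → Ω → ℝ≥0∞ := fun ℓ ω => ENNReal.ofReal (g (Y ℓ ω)) with hGdef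
  have hGmeas : ∀ ℓ, Measurable (G ℓ) := fun ℓ =>
    (hgm.comp (hYmeas ℓ)).ennreal_ofReal
  have hGle1 : ∀ ℓ ω, G ℓ ω ≤ 1 := fun ℓ ω => ENNReal.ofReal_le_one.mpr (hg1 _)
  have hGindep : iIndepFun G P :=
    hindep.comp (fun _ => fun x => ENNReal.ofReal (g x))
      (fun _ => hgm.ennreal_ofReal)
  have hGint : ∀ ℓ, ∫⁻ ω, G ℓ ω ∂P = ENNReal.ofReal a := by
    intro ℓ
    have : ∫⁻ ω, G ℓ ω ∂P = ∫⁻ y, ENNReal.ofReal (g y) ∂(P.map (Y ℓ)) :=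
      (lintegral_map (hgm.ennreal_ofReal) (hYmeas ℓ)).symm
    rw [this, hlaw ℓ, haval]
  -- the partial products
  set T : ℕ → Ω → ℝ≥0∞ := fun m ω => ∏ ℓ ∈ Finset.range m, G ℓ ω with hTdef
  have hTmeas : ∀ m, Measurable (T m) := fun m =>
    Finset.measurable_prod _ fun ℓ _ => hGmeas ℓ
  have hTle1 : ∀ m ω, T m ω ≤ 1 := fun m ω =>
    Finset.prod_le_one (fun ℓ _ => zero_le) (fun ℓ _ => hGle1 ℓ ω)
  have hTofReal : ∀ m ω,
      T m ω = ENNReal.ofReal (∏ ℓ ∈ Finset.range m, (1 - mhAlpha pi qq z (Y ℓ ω))) := by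
    intro m ω
    rw [hTdef, ENNReal.ofReal_prod_of_nonneg fun ℓ _ => hg0 (Y ℓ ω)]
  have hTnetop : ∀ m ω, T m ω ≠ ⊤ := fun m ω => by
    rw [hTofReal]; exact ENNReal.ofReal_ne_top
  have hT : ∀ m, ∫⁻ ω, T m ω ∂P = ENNReal.ofReal a ^ m := by
    intro m
    induction m with
    | zero => simp [hTdef]
    | succ n ih =>
      have hind : IndepFun (∏ ℓ ∈ Finset.range n, G ℓ) (G n) P :=
        hGindep.indepFun_prod_range_succ hGmeas n
      have hfm : Measurable (∏ ℓ ∈ Finset.range n, G ℓ) := by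
        convert hTmeas n using 1
        funext ω; rw [hTdef, Finset.prod_apply]
      have key := lintegral_mul_eq_lintegral_mul_lintegral_of_indepFun hfm (hGmeas n) hind
      calc ∫⁻ ω, T (n + 1) ω ∂P
          = ∫⁻ ω, ((∏ ℓ ∈ Finset.range n, G ℓ) * G n) ω ∂P := by
            refine lintegral_congr fun ω => ?_
            simp only [hTdef, Finset.prod_range_succ, Pi.mul_apply, Finset.prod_apply]
        _ = (∫⁻ ω, (∏ ℓ ∈ Finset.range n, G ℓ) ω ∂P) * ∫⁻ ω, G n ω ∂P := key
        _ = ENNReal.ofReal a ^ n * ENNReal.ofReal a := by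
            rw [hGint n, ← ih]
            congr 1
            exact lintegral_congr fun ω => by simp only [hTdef, Finset.prod_apply]
        _ = ENNReal.ofReal a ^ (n + 1) := (pow_succ _ n).symm
  have haE1 : ENNReal.ofReal a < 1 := by
    rw [← ENNReal.ofReal_one]
    exact ENNReal.ofReal_lt_ofReal_iff_of_nonneg ha0 |>.mpr ha1
  -- the tail sum is a.e. finite
  have htail_meas : Measurable fun ω => ∑' j : ℕ, T (j + 1) ω :=
    Measurable.ennreal_tsum fun j => hTmeas (j + 1)
  have htail_int : ∫⁻ ω, ∑' j : ℕ, T (j + 1) ω ∂P = ∑' j : ℕ, ENNReal.ofReal a ^ (j + 1) := by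
    rw [lintegral_tsum fun j => (hTmeas (j + 1)).aemeasurable]
    exact tsum_congr fun j => hT (j + 1)
  have htail_ne_top : ∑' j : ℕ, ENNReal.ofReal a ^ (j + 1) ≠ ⊤ := by
    rw [ENNReal.tsum_geometric_add_one]
    exact ENNReal.mul_ne_top ENNReal.ofReal_ne_top
      (ENNReal.inv_ne_top.mpr (tsub_pos_of_lt haE1).ne')
  have hae : ∀ᵐ ω ∂P, ∑' j : ℕ, T (j + 1) ω ≠ ⊤ := by
    have := ae_lt_top htail_meas (by rw [htail_int]; exact htail_ne_top)
    exact this.mono fun ω h => h.ne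
  -- the main function agrees a.e. with the `toReal` of the ENNReal sum
  set fE : Ω → ℝ≥0∞ := fun ω => ∑' m : ℕ, T m ω with hfEdef
  have hfEmeas : Measurable fE := Measurable.ennreal_tsum fun m => hTmeas m
  set f : Ω → ℝ := fun ω => 1 + ∑' j : ℕ, ∏ ℓ ∈ Finset.range (j + 1),
      (1 - mhAlpha pi qq z (Y ℓ ω)) with hfdef
  have hfE_split : ∀ ω, fE ω = 1 + ∑' j : ℕ, T (j + 1) ω := by
    intro ω
    have h0 : T 0 ω = 1 := by simp [hTdef]
    calc fE ω = ∑' m : ℕ, T m ω := rfl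
      _ = T 0 ω + ∑' j : ℕ, T (j + 1) ω := tsum_eq_zero_add' ENNReal.summable
      _ = 1 + ∑' j : ℕ, T (j + 1) ω := by rw [h0]
  have hfE_ne_top : ∀ᵐ ω ∂P, fE ω ≠ ⊤ := by
    filter_upwards [hae] with ω hω
    rw [hfE_split ω]
    exact ENNReal.add_ne_top.mpr ⟨ENNReal.one_ne_top, hω⟩
  have hfae : f =ᵐ[P] fun ω => (fE ω).toReal := by
    filter_upwards [hae] with ω hω
    have h0 : f ω = 1 + ∑' j : ℕ, ∏ ℓ ∈ Finset.range (j + 1),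
        (1 - mhAlpha pi qq z (Y ℓ ω)) := rfl
    rw [h0, hfE_split ω, ENNReal.toReal_add ENNReal.one_ne_top hω, ENNReal.toReal_one,
      ENNReal.tsum_toReal_eq fun j => hTnetop (j + 1) ω]
    congr 1
    exact tsum_congr fun j => by rw [hTofReal (j + 1) ω, ENNReal.toReal_ofReal
      (Finset.prod_nonneg fun ℓ _ => hg0 (Y ℓ ω))]
  have hf_nonneg : ∀ ω, 0 ≤ f ω := by
    intro ω
    have h0 : 0 ≤ ∑' j : ℕ, ∏ ℓ ∈ Finset.range (j + 1), (1 - mhAlpha pi qq z (Y ℓ ω)) :=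
      tsum_nonneg fun j => Finset.prod_nonneg fun ℓ _ => hg0 (Y ℓ ω)
    show (0:ℝ) ≤ 1 + ∑' j : ℕ, ∏ ℓ ∈ Finset.range (j + 1), (1 - mhAlpha pi qq z (Y ℓ ω))
    linarith
  have hofReal : ∀ᵐ ω ∂P, ENNReal.ofReal (f ω) = fE ω := by
    filter_upwards [hfae, hfE_ne_top] with ω h1 h2
    rw [h1, ENNReal.ofReal_toReal h2]
  -- second moment bound
  obtain ⟨hpair_sum, hpair_val⟩ := aux_pair_sum ha0 ha1
  set C : ℝ := (1 + a) / (1 - a) ^ 2 with hCdef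
  have hC0 : 0 ≤ C := by
    apply div_nonneg (by linarith) (sq_nonneg _)
  have hsq : ∫⁻ ω, fE ω ^ 2 ∂P ≤ ENNReal.ofReal C := by
    have hsq_eq : ∀ ω, fE ω ^ 2 = ∑' zz : ℕ × ℕ, T zz.1 ω * T zz.2 ω := by
      intro ω
      have h0 : fE ω = ∑' m : ℕ, T m ω := rfl
      calc fE ω ^ 2 = (∑' m : ℕ, T m ω) * (∑' k : ℕ, T k ω) := by rw [sq, h0]
        _ = ∑' m : ℕ, (T m ω * ∑' k : ℕ, T k ω) := ENNReal.tsum_mul_right.symm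
        _ = ∑' m : ℕ, ∑' k : ℕ, (T m ω * T k ω) :=
            tsum_congr fun m => ENNReal.tsum_mul_left.symm
        _ = ∑' zz : ℕ × ℕ, T zz.1 ω * T zz.2 ω :=
            (ENNReal.tsum_prod (f := fun m k => T m ω * T k ω)).symm
    calc ∫⁻ ω, fE ω ^ 2 ∂P
        = ∫⁻ ω, ∑' zz : ℕ × ℕ, T zz.1 ω * T zz.2 ω ∂P := lintegral_congr hsq_eq
      _ = ∑' zz : ℕ × ℕ, ∫⁻ ω, T zz.1 ω * T zz.2 ω ∂P :=
          lintegral_tsum fun zz => ((hTmeas zz.1).mul (hTmeas zz.2)).aemeasurable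
      _ ≤ ∑' zz : ℕ × ℕ, ENNReal.ofReal a ^ max zz.1 zz.2 := by
          refine ENNReal.tsum_le_tsum fun zz => ?_
          rw [← hT (max zz.1 zz.2)]
          refine lintegral_mono fun ω => ?_
          rcases le_total zz.1 zz.2 with h | h
          · rw [max_eq_right h]
            calc T zz.1 ω * T zz.2 ω ≤ 1 * T zz.2 ω :=
                  mul_le_mul_left (hTle1 _ ω) _
              _ = T zz.2 ω := one_mul _
          · rw [max_eq_left h]
            calc T zz.1 ω * T zz.2 ω ≤ T zz.1 ω * 1 :=
                  mul_le_mul_right (hTle1 _ ω) _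
              _ = T zz.1 ω := mul_one _
      _ = ENNReal.ofReal C := by
          rw [← hpair_val, ENNReal.ofReal_tsum_of_nonneg (fun zz => pow_nonneg ha0 _) hpair_sum]
          exact tsum_congr fun zz => (ENNReal.ofReal_pow ha0 _).symm
  -- membership in L²
  have hfaesm : AEStronglyMeasurable f P :=
    ((ENNReal.measurable_toReal.comp hfEmeas).aestronglyMeasurable).congr hfae.symm
  have hsqint : ∫⁻ ω, ENNReal.ofReal (f ω ^ 2) ∂P ≤ ENNReal.ofReal C := by
    have : ∀ᵐ ω ∂P, ENNReal.ofReal (f ω ^ 2) = fE ω ^ 2 := by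
      filter_upwards [hofReal] with ω h
      rw [ENNReal.ofReal_pow (hf_nonneg ω), h]
    calc ∫⁻ ω, ENNReal.ofReal (f ω ^ 2) ∂P = ∫⁻ ω, fE ω ^ 2 ∂P := lintegral_congr_ae this
      _ ≤ ENNReal.ofReal C := hsq
  have hmem : MemLp f 2 P := by
    rw [memLp_two_iff_integrable_sq hfaesm]
    refine ⟨(hfaesm.mul hfaesm).congr (Filter.Eventually.of_forall fun ω => (pow_two (f ω)).symm), ?_⟩
    rw [hasFiniteIntegral_iff_ofReal (Filter.Eventually.of_forall fun ω => sq_nonneg (f ω))]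
    exact lt_of_le_of_lt hsqint ENNReal.ofReal_lt_top
  -- second moment: ∫ f² ≤ C
  have hfsq_aesm : AEStronglyMeasurable (fun ω => f ω ^ 2) P :=
    (hfaesm.mul hfaesm).congr (Filter.Eventually.of_forall fun ω => (pow_two (f ω)).symm)
  have hEfsq : ∫ ω, f ω ^ 2 ∂P ≤ C := by
    rw [integral_eq_lintegral_of_nonneg_ae
      (Filter.Eventually.of_forall fun ω => sq_nonneg (f ω)) hfsq_aesm]
    calc (∫⁻ ω, ENNReal.ofReal (f ω ^ 2) ∂P).toReal
        ≤ (ENNReal.ofReal C).toReal := ENNReal.toReal_mono ENNReal.ofReal_ne_top hsqint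
      _ = C := ENNReal.toReal_ofReal hC0
  -- first moment computations
  have hPm_meas : ∀ m : ℕ,
      Measurable fun ω => ∏ ℓ ∈ Finset.range m, (1 - mhAlpha pi qq z (Y ℓ ω)) :=
    fun m => Finset.measurable_prod _ fun ℓ _ => hgm.comp (hYmeas ℓ)
  have hnorm_eq : ∀ m ω,
      (‖∏ ℓ ∈ Finset.range m, (1 - mhAlpha pi qq z (Y ℓ ω))‖ₑ : ℝ≥0∞) = T m ω := by
    intro m ω
    rw [Real.enorm_eq_ofReal (Finset.prod_nonneg fun ℓ _ => hg0 (Y ℓ ω))]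
    exact (hTofReal m ω).symm
  have hint_tsum : ∫ ω, (∑' j : ℕ, ∏ ℓ ∈ Finset.range (j + 1),
        (1 - mhAlpha pi qq z (Y ℓ ω))) ∂P
      = ∑' j : ℕ, ∫ ω, (∏ ℓ ∈ Finset.range (j + 1), (1 - mhAlpha pi qq z (Y ℓ ω))) ∂P := by
    refine integral_tsum (fun j => (hPm_meas (j + 1)).aestronglyMeasurable) ?_
    have heq : ∑' j : ℕ, ∫⁻ ω, ‖∏ ℓ ∈ Finset.range (j + 1),
          (1 - mhAlpha pi qq z (Y ℓ ω))‖ₑ ∂P = ∑' j : ℕ, ENNReal.ofReal a ^ (j + 1) :=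
      tsum_congr fun j => by
        rw [lintegral_congr fun ω => hnorm_eq (j + 1) ω, hT (j + 1)]
    rw [heq]
    exact htail_ne_top
  have hPm_int : ∀ m : ℕ,
      ∫ ω, (∏ ℓ ∈ Finset.range m, (1 - mhAlpha pi qq z (Y ℓ ω))) ∂P = a ^ m := by
    intro m
    rw [integral_eq_lintegral_of_nonneg_ae
      (Filter.Eventually.of_forall fun ω => Finset.prod_nonneg fun ℓ _ => hg0 (Y ℓ ω))
      (hPm_meas m).aestronglyMeasurable]
    have heq : ∫⁻ ω, ENNReal.ofReal (∏ ℓ ∈ Finset.range m, (1 - mhAlpha pi qq z (Y ℓ ω))) ∂P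
        = ENNReal.ofReal a ^ m := by
      rw [lintegral_congr fun ω => (hTofReal m ω).symm, hT m]
    rw [heq, ← ENNReal.ofReal_pow ha0, ENNReal.toReal_ofReal (pow_nonneg ha0 m)]
  have htail_int_f : Integrable (fun ω => ∑' j : ℕ, ∏ ℓ ∈ Finset.range (j + 1),
      (1 - mhAlpha pi qq z (Y ℓ ω))) P := by
    have h1 : Integrable f P := hmem.integrable one_le_two
    have h2 : Integrable (fun ω => f ω - 1) P := h1.sub (integrable_const 1)
    refine h2.congr (Filter.Eventually.of_forall fun ω => ?_)
    have h0 : f ω = 1 + ∑' j : ℕ, ∏ ℓ ∈ Finset.range (j + 1),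
        (1 - mhAlpha pi qq z (Y ℓ ω)) := rfl
    show f ω - 1 = ∑' j : ℕ, ∏ ℓ ∈ Finset.range (j + 1), (1 - mhAlpha pi qq z (Y ℓ ω))
    rw [h0]; ring
  have hEf : ∫ ω, f ω ∂P = (1 - a)⁻¹ := by
    have htsv : ∑' j : ℕ, a ^ (j + 1) = a * (1 - a)⁻¹ := by
      rw [tsum_congr (fun j => pow_succ' a j), tsum_mul_left,
        tsum_geometric_of_lt_one ha0 ha1]
    calc ∫ ω, f ω ∂P
        = ∫ ω, ((1 : ℝ) + ∑' j : ℕ, ∏ ℓ ∈ Finset.range (j + 1),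
            (1 - mhAlpha pi qq z (Y ℓ ω))) ∂P := rfl
      _ = ∫ _ω, (1 : ℝ) ∂P + ∫ ω, (∑' j : ℕ, ∏ ℓ ∈ Finset.range (j + 1),
            (1 - mhAlpha pi qq z (Y ℓ ω))) ∂P := integral_add (integrable_const 1) htail_int_f
      _ = 1 + ∑' j : ℕ, a ^ (j + 1) := by
          rw [integral_const, probReal_univ, one_smul, hint_tsum]
          congr 1
          exact tsum_congr fun j => hPm_int (j + 1)
      _ = (1 - a)⁻¹ := by
          rw [htsv]
          field_simp
          ring
  -- conclusion
  have hpne : p ≠ 0 := ne_of_gt hppos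
  calc variance f P
      = (∫ ω, (f ^ 2) ω ∂P) - (∫ ω, f ω ∂P) ^ 2 := variance_eq_sub hmem
    _ = (∫ ω, f ω ^ 2 ∂P) - ((1 - a)⁻¹) ^ 2 := by rw [hEf]; rfl
    _ ≤ C - ((1 - a)⁻¹) ^ 2 := sub_le_sub_right hEfsq _
    _ = (1 - p) / p ^ 2 := by
        rw [hCdef, hadef, sub_sub_cancel]
        field_simp
        ring
end

section
/- Fix z ∈ 𝒳 with p(z) > 0, let (y_ℓ)_{ℓ≥1} be i.i.d. random variables with density q(·|z) and (u_ℓ)_{ℓ≥1} be i.i.d. uniform random variables on (0,1), independent of (y_ℓ). Then for every integer k ≥ 0, the random variable ξ̂^k = 1 + Σ_{j=1}^∞ [Π_{1≤ℓ≤min(k,j)} (1 − α(z,y_ℓ))]·[Π_{k+1≤ℓ≤j} 1{u_ℓ ≥ α(z,y_ℓ)}] has an almost surely finite number of nonzero summands and satisfies E[ξ̂^k] = 1/p(z). -/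
open MeasureTheory ProbabilityTheory Filter Set

lemma myLintegralProd {Ω : Type*} [MeasurableSpace Ω] {P : Measure Ω} [IsProbabilityMeasure P]
    {W : ℕ → Ω → ENNReal} (hW : ∀ i, Measurable (W i))
    (hind : iIndepFun W P) (n : ℕ) :
    ∫⁻ ω, ∏ ℓ ∈ Finset.range n, W ℓ ω ∂P = ∏ ℓ ∈ Finset.range n, ∫⁻ ω, W ℓ ω ∂P := by
  induction n with
  | zero => simp
  | succ n ih =>
    have hin := hind.indepFun_prod_range_succ hW n
    have hm : Measurable (∏ j ∈ Finset.range n, W j) := by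
      rw [Finset.prod_fn]; exact Finset.measurable_prod _ fun i _ => hW i
    have h := lintegral_mul_eq_lintegral_mul_lintegral_of_indepFun hm (hW n) hin
    simp only [Finset.prod_range_succ, ← ih]
    simpa [Finset.prod_apply] using h

lemma myUnifInt (a : ℝ) (h0 : 0 ≤ a) :
    ∫⁻ u, (if a ≤ u then (1:ENNReal) else 0) ∂(volume.restrict (Set.Ioo (0:ℝ) 1))
      = ENNReal.ofReal (1 - a) := by
  have hind : (fun u : ℝ => if a ≤ u then (1:ENNReal) else 0)
      = Set.indicator (Set.Ici a) (fun _ => 1) := by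
    ext u; by_cases h : a ≤ u <;> simp [Set.indicator, h]
  rw [hind, lintegral_indicator measurableSet_Ici, setLIntegral_one,
    Measure.restrict_apply measurableSet_Ici]
  rcases eq_or_lt_of_le h0 with h|h
  · have he : Set.Ici a ∩ Set.Ioo (0:ℝ) 1 = Set.Ioo (0:ℝ) 1 :=
      Set.inter_eq_right.mpr (fun u hu => by rw [Set.mem_Ici, ← h]; exact hu.1.le)
    rw [he, Real.volume_Ioo, ← h]
  · have : Set.Ici a ∩ Set.Ioo (0:ℝ) 1 = Set.Ico a 1 := by
      ext u
      simp only [Set.mem_inter_iff, Set.mem_Ici, Set.mem_Ioo, Set.mem_Ico]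
      exact ⟨fun ⟨h1, _, h3⟩ => ⟨h1, h3⟩, fun ⟨h1, h2⟩ => ⟨h1, lt_of_lt_of_le h h1, h2⟩⟩
    rw [this, Real.volume_Ico]


/-- The `j`-th summand (for the paper's index `j ≥ 1`, here `0`-indexed) of the truncated
Rao–Blackwellised estimator
`ξ̂ᵏ = 1 + ∑_{j ≥ 1} ∏_{1 ≤ ℓ ≤ k ∧ j} (1 - α(z, y_ℓ)) ∏_{k+1 ≤ ℓ ≤ j} 1{u_ℓ ≥ α(z, y_ℓ)}`. -/
noncomputable def rbTerm {X : Type*} (a : X → ℝ) (Y : ℕ → X) (U : ℕ → ℝ) (k j : ℕ) : ℝ :=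
  (∏ ℓ ∈ Finset.range (min k (j + 1)), (1 - a (Y ℓ))) *
    ∏ ℓ ∈ Finset.Ico k (j + 1), (if a (Y ℓ) ≤ U ℓ then (1 : ℝ) else 0)

/-- Fix `z` with `p(z) > 0`, and let `(y_ℓ, u_ℓ)_{ℓ ≥ 1}` be i.i.d. with
`y_ℓ` of density `q(·|z)` and `u_ℓ` uniform on `(0,1)`, independent.  For every `k ≥ 0`
the truncated estimator `ξ̂ᵏ` has an almost surely finite number of nonzero summands and
satisfies `E[ξ̂ᵏ] = 1/p(z)`. -/
theorem vanillaRB_truncated_xi_unbiased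
    {X : Type*} [MeasurableSpace X] (ν : Measure X) [SigmaFinite ν]
    (pi : X → ℝ) (qq : X → X → ℝ)
    (hpi : Measurable pi) (hqq : Measurable (Function.uncurry qq))
    (hpi0 : ∀ x, 0 ≤ pi x) (hqq0 : ∀ x y, 0 ≤ qq x y)
    (z : X)
    [IsProbabilityMeasure (ν.withDensity fun y => ENNReal.ofReal (qq z y))]
    (p : ℝ) (hp : p = ∫ y, mhAlpha pi qq z y * qq z y ∂ν) (hppos : 0 < p)
    {Ω : Type*} [MeasurableSpace Ω] (P : Measure Ω) [IsProbabilityMeasure P]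
    (Y : ℕ → Ω → X) (U : ℕ → Ω → ℝ)
    (hmeas : ∀ ℓ, Measurable fun ω => (Y ℓ ω, U ℓ ω))
    (hindep : iIndepFun (fun ℓ ω => (Y ℓ ω, U ℓ ω)) P)
    (hlaw : ∀ ℓ, P.map (fun ω => (Y ℓ ω, U ℓ ω)) =
      (ν.withDensity fun y => ENNReal.ofReal (qq z y)).prod
        (volume.restrict (Set.Ioo (0:ℝ) 1)))
    (k : ℕ) :
    (∀ᵐ ω ∂P,
        {j : ℕ | rbTerm (mhAlpha pi qq z) (fun ℓ => Y ℓ ω) (fun ℓ => U ℓ ω) k j ≠ 0}.Finite) ∧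
      ∫ ω, (1 + ∑' j : ℕ,
          rbTerm (mhAlpha pi qq z) (fun ℓ => Y ℓ ω) (fun ℓ => U ℓ ω) k j) ∂P = 1 / p := by
  set a : X → ℝ := mhAlpha pi qq z with ha_def
  have ha0 : ∀ y, 0 ≤ a y := fun y =>
    le_min zero_le_one (div_nonneg (mul_nonneg (hpi0 y) (hqq0 y z)) (mul_nonneg (hpi0 z) (hqq0 z y)))
  have ha1 : ∀ y, a y ≤ 1 := fun y => min_le_left _ _
  have hameas : Measurable a :=
    measurable_const.min ((hpi.mul (hqq.comp (measurable_id.prodMk measurable_const))).div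
      (measurable_const.mul (hqq.comp (measurable_const.prodMk measurable_id))))
  have hqmeas : Measurable (qq z) := hqq.comp (measurable_const.prodMk measurable_id)
  set μ : Measure X := ν.withDensity fun y => ENNReal.ofReal (qq z y) with hμ_def
  set lam : Measure ℝ := volume.restrict (Set.Ioo (0:ℝ) 1) with hlam_def
  haveI hlamprob : IsProbabilityMeasure lam := by
    constructor
    rw [hlam_def, Measure.restrict_apply MeasurableSet.univ, Set.univ_inter, Real.volume_Ioo]
    norm_num
  have hq1 : ∫⁻ y, ENNReal.ofReal (qq z y) ∂ν = 1 := by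
    have h := measure_univ (μ := μ)
    rwa [hμ_def, withDensity_apply _ MeasurableSet.univ, Measure.restrict_univ] at h
  have hqint : Integrable (qq z) ν := by
    refine ⟨hqmeas.aestronglyMeasurable, ?_⟩
    rw [hasFiniteIntegral_iff_ofReal (ae_of_all _ (hqq0 z)), hq1]
    exact ENNReal.one_lt_top
  have hq_int1 : ∫ y, qq z y ∂ν = 1 := by
    have h := ofReal_integral_eq_lintegral_ofReal hqint (ae_of_all _ (hqq0 z))
    rw [hq1] at h
    rwa [ENNReal.ofReal_eq_one] at h
  have haq_int : Integrable (fun y => a y * qq z y) ν := by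
    refine hqint.mono' ((hameas.mul hqmeas).aestronglyMeasurable) (ae_of_all _ fun y => ?_)
    rw [Real.norm_eq_abs, abs_of_nonneg (mul_nonneg (ha0 y) (hqq0 z y))]
    exact mul_le_of_le_one_left (hqq0 z y) (ha1 y)
  have hple : p ≤ 1 := by
    rw [hp, ← hq_int1]
    exact integral_mono haq_int hqint fun y => mul_le_of_le_one_left (hqq0 z y) (ha1 y)
  have h1p0 : (0:ℝ) ≤ 1 - p := by linarith
  have hIa : ∫⁻ y, ENNReal.ofReal (1 - a y) ∂μ = ENNReal.ofReal (1 - p) := by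
    rw [hμ_def, lintegral_withDensity_eq_lintegral_mul ν hqmeas.ennreal_ofReal
      (show Measurable fun y => ENNReal.ofReal (1 - a y) from (measurable_const.sub hameas).ennreal_ofReal)]
    have heq : ∀ y, (ENNReal.ofReal (qq z y) * ENNReal.ofReal (1 - a y)) =
        ENNReal.ofReal (qq z y * (1 - a y)) := fun y =>
      (ENNReal.ofReal_mul (hqq0 z y)).symm
    calc ∫⁻ y, (fun y => ENNReal.ofReal (qq z y)) y * (fun y => ENNReal.ofReal (1 - a y)) y ∂ν
        = ∫⁻ y, ENNReal.ofReal (qq z y * (1 - a y)) ∂ν := by simp_rw [heq]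
      _ = ENNReal.ofReal (∫ y, qq z y * (1 - a y) ∂ν) := by
          rw [← ofReal_integral_eq_lintegral_ofReal]
          · exact (hqint.sub haq_int).congr (ae_of_all _ fun y => by simp [Pi.sub_apply]; ring)
          · exact ae_of_all _ fun y => mul_nonneg (hqq0 z y) (by linarith [ha1 y])
      _ = ENNReal.ofReal (1 - p) := by
          congr 1
          have : ∀ y, qq z y * (1 - a y) = qq z y - a y * qq z y := fun y => by ring
          rw [integral_congr_ae (ae_of_all _ this), integral_sub hqint haq_int, hq_int1, hp]
  -- per-factor functions
  set G : ℕ → X × ℝ → ENNReal := fun ℓ x =>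
    if ℓ < k then ENNReal.ofReal (1 - a x.1) else (if a x.1 ≤ x.2 then 1 else 0) with hG_def
  have hGmeas : ∀ ℓ, Measurable (G ℓ) := by
    intro ℓ
    by_cases h : ℓ < k
    · simpa [hG_def, h] using
        ((measurable_const.sub (hameas.comp measurable_fst)).ennreal_ofReal)
    · simpa [hG_def, h] using
        (Measurable.ite (measurableSet_le (hameas.comp measurable_fst) measurable_snd)
          measurable_const measurable_const)
  set W : ℕ → Ω → ENNReal := fun ℓ => G ℓ ∘ (fun ω => (Y ℓ ω, U ℓ ω)) with hW_def
  have hWmeas : ∀ ℓ, Measurable (W ℓ) := fun ℓ => (hGmeas ℓ).comp (hmeas ℓ)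
  have hWind : iIndepFun W P := hindep.comp G hGmeas
  set r : ENNReal := ENNReal.ofReal (1 - p) with hr_def
  have hWE : ∀ ℓ, ∫⁻ ω, W ℓ ω ∂P = r := by
    intro ℓ
    have h1 : ∫⁻ ω, W ℓ ω ∂P = ∫⁻ x, G ℓ x ∂(P.map (fun ω => (Y ℓ ω, U ℓ ω))) :=
      (lintegral_map (hGmeas ℓ) (hmeas ℓ)).symm
    rw [h1, hlaw ℓ, lintegral_prod _ (hGmeas ℓ).aemeasurable]
    by_cases h : ℓ < k
    · simp only [hG_def, if_pos h]
      calc ∫⁻ y, ∫⁻ u, ENNReal.ofReal (1 - a y) ∂lam ∂μ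
          = ∫⁻ y, ENNReal.ofReal (1 - a y) ∂μ := by
            simp [lintegral_const, measure_univ]
        _ = r := hIa
    · simp only [hG_def, if_neg h]
      calc ∫⁻ y, ∫⁻ u, (if a y ≤ u then (1:ENNReal) else 0) ∂lam ∂μ
          = ∫⁻ y, ENNReal.ofReal (1 - a y) ∂μ := by
            refine lintegral_congr fun y => ?_
            rw [hlam_def]; exact myUnifInt (a y) (ha0 y)
        _ = r := hIa
  have htermnn : ∀ ω j, 0 ≤ rbTerm a (fun ℓ => Y ℓ ω) (fun ℓ => U ℓ ω) k j := by
    intro ω j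
    refine mul_nonneg (Finset.prod_nonneg fun ℓ _ => by linarith [ha1 (Y ℓ ω)])
      (Finset.prod_nonneg fun ℓ _ => by split_ifs <;> norm_num)
  have hterm : ∀ ω j, ENNReal.ofReal (rbTerm a (fun ℓ => Y ℓ ω) (fun ℓ => U ℓ ω) k j)
      = ∏ ℓ ∈ Finset.range (j+1), W ℓ ω := by
    intro ω j
    set f : ℕ → ℝ := fun ℓ =>
      if ℓ < k then 1 - a (Y ℓ ω) else (if a (Y ℓ ω) ≤ U ℓ ω then 1 else 0) with hf_def
    have hfnn : ∀ ℓ, 0 ≤ f ℓ := fun ℓ => by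
      rw [hf_def]; dsimp only; split_ifs <;> first | linarith [ha1 (Y ℓ ω)] | norm_num
    have hreal : rbTerm a (fun ℓ => Y ℓ ω) (fun ℓ => U ℓ ω) k j
        = ∏ ℓ ∈ Finset.range (j+1), f ℓ := by
      have hmin : min k (j+1) ≤ j+1 := min_le_right _ _
      rw [rbTerm]
      have h1 : ∏ ℓ ∈ Finset.range (min k (j+1)), (1 - a (Y ℓ ω))
          = ∏ ℓ ∈ Finset.range (min k (j+1)), f ℓ :=
        Finset.prod_congr rfl (fun ℓ hℓ => by
          have hlk : ℓ < k := lt_of_lt_of_le (Finset.mem_range.mp hℓ) (min_le_left _ _)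
          simp [hf_def, hlk])
      have h2 : ∏ ℓ ∈ Finset.Ico k (j+1), (if a (Y ℓ ω) ≤ U ℓ ω then (1:ℝ) else 0)
          = ∏ ℓ ∈ Finset.Ico (min k (j+1)) (j+1), f ℓ := by
        by_cases hk : k ≤ j+1
        · rw [min_eq_left hk]
          exact Finset.prod_congr rfl (fun ℓ hℓ => by
            have hlk : ¬ ℓ < k := not_lt.mpr (Finset.mem_Ico.mp hℓ).1
            simp [hf_def, hlk])
        · rw [min_eq_right (le_of_not_ge hk), Finset.Ico_self,
            Finset.Ico_eq_empty (by omega), Finset.prod_empty, Finset.prod_empty]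
      rw [h1, h2, Finset.range_eq_Ico, Finset.range_eq_Ico]
      exact Finset.prod_Ico_consecutive f (Nat.zero_le _) hmin
    rw [hreal, ENNReal.ofReal_prod_of_nonneg (fun ℓ _ => hfnn ℓ)]
    refine Finset.prod_congr rfl fun ℓ _ => ?_
    by_cases h : ℓ < k
    · simp [hf_def, hW_def, hG_def, h]
    · simp only [hf_def, hW_def, hG_def, if_neg h, Function.comp]
      split_ifs <;> simp
  set S : Ω → ENNReal := fun ω => ∑' j : ℕ, ∏ ℓ ∈ Finset.range (j+1), W ℓ ω with hS_def
  have hSmeas : Measurable S :=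
    Measurable.ennreal_tsum (fun j => Finset.measurable_prod _ fun ℓ _ => hWmeas ℓ)
  have hSlint : ∫⁻ ω, S ω ∂P = r * (1 - r)⁻¹ := by
    rw [hS_def]
    rw [lintegral_tsum (fun j =>
      (Finset.measurable_prod _ fun ℓ _ => hWmeas ℓ).aemeasurable)]
    have hj : ∀ j:ℕ, ∫⁻ ω, ∏ ℓ ∈ Finset.range (j+1), W ℓ ω ∂P = r^(j+1) := by
      intro j
      rw [myLintegralProd hWmeas hWind]
      rw [Finset.prod_congr rfl fun ℓ _ => hWE ℓ, Finset.prod_const, Finset.card_range]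
    simp_rw [hj]
    exact ENNReal.tsum_geometric_add_one r
  have h1r : (1:ENNReal) - r = ENNReal.ofReal p := by
    rw [hr_def, ← ENNReal.ofReal_one, ← ENNReal.ofReal_sub _ h1p0]
    norm_num
  have hfin : ∫⁻ ω, S ω ∂P ≠ ⊤ := by
    rw [hSlint, h1r]
    exact ENNReal.mul_ne_top ENNReal.ofReal_ne_top
      (ENNReal.inv_ne_top.mpr (ENNReal.ofReal_pos.mpr hppos).ne')
  have hae : ∀ᵐ ω ∂P, S ω < ⊤ := ae_lt_top hSmeas hfin
  constructor
  · filter_upwards [hae] with ω hω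
    by_contra hinf0
    have hE : ({j : ℕ | rbTerm a (fun ℓ => Y ℓ ω) (fun ℓ => U ℓ ω) k j ≠ 0} \ Set.Iio k).Infinite :=
      Set.Infinite.diff hinf0 (Set.finite_Iio k)
    have hsum : Summable (fun j => rbTerm a (fun ℓ => Y ℓ ω) (fun ℓ => U ℓ ω) k j) := by
      have h := ENNReal.summable_toReal hω.ne
      refine h.congr fun j => ?_
      rw [← hterm ω j, ENNReal.toReal_ofReal (htermnn ω j)]
    set c : ℝ := ∏ ℓ ∈ Finset.range k, (1 - a (Y ℓ ω)) with hc_def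
    have hc0 : 0 ≤ c := Finset.prod_nonneg fun ℓ _ => by linarith [ha1 (Y ℓ ω)]
    have hval : ∀ j ∈ ({j : ℕ | rbTerm a (fun ℓ => Y ℓ ω) (fun ℓ => U ℓ ω) k j ≠ 0} \ Set.Iio k),
        rbTerm a (fun ℓ => Y ℓ ω) (fun ℓ => U ℓ ω) k j = c ∧ c ≠ 0 := by
      rintro j ⟨hne, hjk⟩
      simp only [Set.mem_Iio, not_lt] at hjk
      rw [Set.mem_setOf_eq, rbTerm, min_eq_left (by omega)] at hne
      obtain ⟨hcne, hine⟩ := mul_ne_zero_iff.mp hne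
      have hone : ∏ ℓ ∈ Finset.Ico k (j+1), (if a (Y ℓ ω) ≤ U ℓ ω then (1:ℝ) else 0) = 1 := by
        refine Finset.prod_eq_one fun ℓ hℓ => ?_
        have hne2 := Finset.prod_ne_zero_iff.mp hine ℓ hℓ
        split_ifs at hne2 ⊢ with h
        · rfl
        · exact absurd rfl hne2
      refine ⟨?_, hcne⟩
      rw [rbTerm, min_eq_left (by omega), hone, mul_one, hc_def]
    obtain ⟨j0, hj0⟩ := hE.nonempty
    have hcpos : 0 < c := lt_of_le_of_ne hc0 (Ne.symm (hval j0 hj0).2)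
    have hfreq : ∃ᶠ j in atTop,
        j ∈ ({j : ℕ | rbTerm a (fun ℓ => Y ℓ ω) (fun ℓ => U ℓ ω) k j ≠ 0} \ Set.Iio k) := by
      rw [frequently_atTop]
      intro n
      obtain ⟨j, hj, hjn⟩ := hE.exists_gt n
      exact ⟨j, hjn.le, hj⟩
    have hev : ∀ᶠ j in atTop, rbTerm a (fun ℓ => Y ℓ ω) (fun ℓ => U ℓ ω) k j < c :=
      (hsum.tendsto_atTop_zero).eventually_lt_const hcpos
    obtain ⟨j, hjE, hjlt⟩ := (hfreq.and_eventually hev).exists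
    rw [(hval j hjE).1] at hjlt
    exact lt_irrefl _ hjlt
  · have hSr : ∀ᵐ ω ∂P, (S ω).toReal
        = ∑' j : ℕ, rbTerm a (fun ℓ => Y ℓ ω) (fun ℓ => U ℓ ω) k j := by
      filter_upwards [hae] with ω hω
      have hne : ∀ j : ℕ, (∏ ℓ ∈ Finset.range (j+1), W ℓ ω) ≠ ⊤ := fun j => by
        rw [← hterm ω j]; exact ENNReal.ofReal_ne_top
      rw [hS_def]
      calc (∑' j : ℕ, ∏ ℓ ∈ Finset.range (j+1), W ℓ ω).toReal
          = ∑' j : ℕ, (∏ ℓ ∈ Finset.range (j+1), W ℓ ω).toReal := ENNReal.tsum_toReal_eq hne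
        _ = ∑' j : ℕ, rbTerm a (fun ℓ => Y ℓ ω) (fun ℓ => U ℓ ω) k j := by
            refine tsum_congr fun j => ?_
            rw [← hterm ω j, ENNReal.toReal_ofReal (htermnn ω j)]
    have hint : Integrable (fun ω => (S ω).toReal) P :=
      integrable_toReal_of_lintegral_ne_top hSmeas.aemeasurable hfin
    calc ∫ ω, (1 + ∑' j : ℕ, rbTerm a (fun ℓ => Y ℓ ω) (fun ℓ => U ℓ ω) k j) ∂P
        = ∫ ω, (1 + (S ω).toReal) ∂P :=
          integral_congr_ae (hSr.mono fun ω h => by simp only [h])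
      _ = ∫ ω, (1:ℝ) ∂P + ∫ ω, (S ω).toReal ∂P := integral_add (integrable_const 1) hint
      _ = 1 + (∫⁻ ω, S ω ∂P).toReal := by
          rw [integral_toReal hSmeas.aemeasurable hae, integral_const]; simp
      _ = 1 + (1 - p) * p⁻¹ := by
          rw [hSlint, h1r, ENNReal.toReal_mul, ENNReal.toReal_inv, hr_def,
            ENNReal.toReal_ofReal h1p0, ENNReal.toReal_ofReal hppos.le]
      _ = 1 / p := by field_simp; ring
end

section
/- Fix z ∈ 𝒳 with p(z) > 0, let (y_ℓ)_{ℓ≥1} be i.i.d. random variables with density q(·|z) and (u_ℓ)_{ℓ≥1} be i.i.d. uniform random variables on (0,1), independent of (y_ℓ). For k ≥ 0 define ξ̂^k = 1 + Σ_{j=1}^∞ [Π_{1≤ℓ≤min(k,j)} (1 − α(z,y_ℓ))]·[Π_{k+1≤ℓ≤j} 1{u_ℓ ≥ α(z,y_ℓ)}]. Then for every integer k ≥ 1, writing p = p(z) and r = r(z), the variance of ξ̂^k equals (1−p)/p² − [(1 − (1 − 2p + r)^k)/(2p − r)]·[(2−p)/p²]·(p − r). -/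
open MeasureTheory ProbabilityTheory Filter Set

open scoped ENNReal NNReal Topology

section VanillaRBAux


lemma aux_exp_prod {E Ω : Type*} [MeasurableSpace E] [MeasurableSpace Ω]
    (P : Measure Ω) [IsProbabilityMeasure P]
    (V : ℕ → Ω → E) (hVmeas : ∀ ℓ, Measurable (V ℓ))
    (hindep : iIndepFun V P)
    (g : ℕ → E → ℝ) (hg : ∀ ℓ, Measurable (g ℓ)) (n : ℕ) :
    ∫ ω, ∏ ℓ ∈ Finset.range n, g ℓ (V ℓ ω) ∂P
      = ∏ ℓ ∈ Finset.range n, ∫ ω, g ℓ (V ℓ ω) ∂P := by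
  induction n with
  | zero => simp
  | succ n ih =>
      have hiid : iIndepFun
          (fun ℓ => fun ω => g ℓ (V ℓ ω)) P := hindep.comp g hg
      have hmeas : ∀ ℓ, Measurable fun ω => g ℓ (V ℓ ω) := fun ℓ => (hg ℓ).comp (hVmeas ℓ)
      have hind := hiid.indepFun_prod_range_succ hmeas n
      have hfun : (∏ j ∈ Finset.range n, fun ω => g j (V j ω))
          = fun ω => ∏ j ∈ Finset.range n, g j (V j ω) := by
        funext ω; simp
      rw [hfun] at hind
      have hmul := hind.integral_fun_mul_eq_mul_integral
        ((Finset.measurable_prod (Finset.range n) (fun i _ => hmeas i)).aestronglyMeasurable)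
        (hmeas n).aestronglyMeasurable
      simp only [Finset.prod_range_succ]
      rw [hmul, ih]

lemma aux_ET {E Ω : Type*} [MeasurableSpace E] [MeasurableSpace Ω]
    (P : Measure Ω) [IsProbabilityMeasure P]
    (V : ℕ → Ω → E) (hVmeas : ∀ ℓ, Measurable (V ℓ))
    (hindep : iIndepFun V P)
    (h : ℕ → E → ℝ) (hhm : ∀ ℓ, Measurable (h ℓ)) (qb : ℝ)
    (hq : ∀ ℓ, ∫ ω, h ℓ (V ℓ ω) ∂P = qb) (j : ℕ) :
    ∫ ω, ∏ ℓ ∈ Finset.range (j+1), h ℓ (V ℓ ω) ∂P = qb^(j+1) := by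
  rw [aux_exp_prod P V hVmeas hindep h hhm (j+1)]
  simp [hq]

lemma aux_ETT {E Ω : Type*} [MeasurableSpace E] [MeasurableSpace Ω]
    (P : Measure Ω) [IsProbabilityMeasure P]
    (V : ℕ → Ω → E) (hVmeas : ∀ ℓ, Measurable (V ℓ))
    (hindep : iIndepFun V P)
    (h : ℕ → E → ℝ) (hhm : ∀ ℓ, Measurable (h ℓ)) (qb s : ℝ) (k : ℕ)
    (hq : ∀ ℓ, ∫ ω, h ℓ (V ℓ ω) ∂P = qb)
    (he2 : ∀ ℓ, ∫ ω, (h ℓ (V ℓ ω))^2 ∂P = if ℓ < k then s else qb)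
    {i j : ℕ} (hij : i ≤ j) :
    ∫ ω, (∏ ℓ ∈ Finset.range (i+1), h ℓ (V ℓ ω)) *
        (∏ ℓ ∈ Finset.range (j+1), h ℓ (V ℓ ω)) ∂P
      = s ^ (min (i+1) k) * qb ^ (j+1 - min (i+1) k) := by
  set g : ℕ → E → ℝ := fun ℓ => if ℓ ≤ i then (fun x => h ℓ x * h ℓ x) else h ℓ with hg
  have hgmeas : ∀ ℓ, Measurable (g ℓ) := by
    intro ℓ; by_cases hl : ℓ ≤ i <;> simp only [hg, hl, if_true, if_false]
    · exact (hhm ℓ).mul (hhm ℓ)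
    · exact hhm ℓ
  have hTT : ∀ ω, (∏ ℓ ∈ Finset.range (i+1), h ℓ (V ℓ ω)) *
      (∏ ℓ ∈ Finset.range (j+1), h ℓ (V ℓ ω))
      = ∏ ℓ ∈ Finset.range (j+1), g ℓ (V ℓ ω) := by
    intro ω
    rw [← Finset.prod_range_mul_prod_Ico (fun ℓ => h ℓ (V ℓ ω)) (show i+1 ≤ j+1 by omega),
      ← Finset.prod_range_mul_prod_Ico (fun ℓ => g ℓ (V ℓ ω)) (show i+1 ≤ j+1 by omega),
      ← mul_assoc, ← Finset.prod_mul_distrib]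
    congr 1
    · exact Finset.prod_congr rfl fun ℓ hl => by
        have : ℓ ≤ i := by simpa [Nat.lt_succ_iff] using Finset.mem_range.mp hl
        simp [hg, this]
    · exact Finset.prod_congr rfl fun ℓ hl => by
        have : ¬ ℓ ≤ i := by have := (Finset.mem_Ico.mp hl).1; omega
        simp [hg, this]
  calc ∫ ω, (∏ ℓ ∈ Finset.range (i+1), h ℓ (V ℓ ω)) *
        (∏ ℓ ∈ Finset.range (j+1), h ℓ (V ℓ ω)) ∂P
      = ∫ ω, ∏ ℓ ∈ Finset.range (j+1), g ℓ (V ℓ ω) ∂P := by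
        exact integral_congr_ae (ae_of_all _ fun ω => hTT ω)
    _ = ∏ ℓ ∈ Finset.range (j+1), ∫ ω, g ℓ (V ℓ ω) ∂P :=
        aux_exp_prod P V hVmeas hindep g hgmeas (j+1)
    _ = ∏ ℓ ∈ Finset.range (j+1), (if ℓ < min (i+1) k then s else qb) := by
        refine Finset.prod_congr rfl fun ℓ _ => ?_
        by_cases hl : ℓ ≤ i
        · have h1 : ∫ ω, g ℓ (V ℓ ω) ∂P = if ℓ < k then s else qb := by
            rw [← he2 ℓ]
            refine integral_congr_ae (ae_of_all _ fun ω => ?_)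
            simp [hg, hl, pow_two]
          rw [h1]
          by_cases hlk : ℓ < k
          · simp [hlk, show ℓ < min (i+1) k by omega]
          · simp [hlk, show ¬ ℓ < min (i+1) k by omega]
        · have h1 : ∫ ω, g ℓ (V ℓ ω) ∂P = qb := by
            rw [← hq ℓ]
            exact integral_congr_ae (ae_of_all _ fun ω => by simp [hg, hl])
          rw [h1, if_neg (by omega)]
    _ = s ^ (min (i+1) k) * qb ^ (j+1 - min (i+1) k) := by
        have hm : min (i+1) k ≤ j+1 := by omega
        rw [← Finset.prod_range_mul_prod_Ico
          (fun ℓ => (if ℓ < min (i+1) k then s else qb)) hm]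
        have e1 : (∏ ℓ ∈ Finset.range (min (i+1) k), (if ℓ < min (i+1) k then s else qb))
            = s ^ (min (i+1) k) := by
          rw [Finset.prod_congr rfl fun ℓ hl => if_pos (Finset.mem_range.mp hl)]
          simp
        have e2 : (∏ ℓ ∈ Finset.Ico (min (i+1) k) (j+1), (if ℓ < min (i+1) k then s else qb))
            = qb ^ (j+1 - min (i+1) k) := by
          rw [Finset.prod_congr rfl fun ℓ hl => if_neg (by have := (Finset.mem_Ico.mp hl).1; omega)]
          simp [Nat.card_Ico]
        rw [e1, e2]


/-- second-moment coefficient `E[T_i T_j]` -/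
noncomputable def auxT (qb s : ℝ) (k : ℕ) (i j : ℕ) : ℝ :=
  s ^ (min (min i j + 1) k) * qb ^ (max i j + 1 - min (min i j + 1) k)

section
variable {qb s : ℝ} {k : ℕ}

lemma auxT_nonneg (hqb0 : 0 ≤ qb) (hs0 : 0 ≤ s) (i j : ℕ) : 0 ≤ auxT qb s k i j :=
  mul_nonneg (pow_nonneg hs0 _) (pow_nonneg hqb0 _)

lemma auxT_symm (i j : ℕ) : auxT qb s k i j = auxT qb s k j i := by
  unfold auxT; rw [min_comm i j, max_comm i j]

lemma auxT_le_pow (hqb0 : 0 ≤ qb) (hs0 : 0 ≤ s) (hsq : s ≤ qb) (i j : ℕ) :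
    auxT qb s k i j ≤ qb ^ (max i j + 1) := by
  unfold auxT
  calc s ^ (min (min i j + 1) k) * qb ^ (max i j + 1 - min (min i j + 1) k)
      ≤ qb ^ (min (min i j + 1) k) * qb ^ (max i j + 1 - min (min i j + 1) k) :=
        mul_le_mul_of_nonneg_right (pow_le_pow_left₀ hs0 hsq _) (pow_nonneg hqb0 _)
    _ = qb ^ (max i j + 1) := by rw [← pow_add]; congr 1; omega

lemma auxT_le_w (hqb0 : 0 ≤ qb) (hqb1 : qb < 1) (hs0 : 0 ≤ s) (hsq : s ≤ qb) (i j : ℕ) :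
    auxT qb s k i j ≤ Real.sqrt qb ^ i * Real.sqrt qb ^ j := by
  have hw0 : 0 ≤ Real.sqrt qb := Real.sqrt_nonneg _
  have hw1 : Real.sqrt qb ≤ 1 := by
    rw [show (1:ℝ) = Real.sqrt 1 by simp]
    exact Real.sqrt_le_sqrt hqb1.le
  have h2 : qb = Real.sqrt qb ^ 2 := (Real.sq_sqrt hqb0).symm
  calc auxT qb s k i j ≤ qb ^ (max i j + 1) := auxT_le_pow hqb0 hs0 hsq i j
    _ = Real.sqrt qb ^ (2 * (max i j + 1)) := by
        conv_lhs => rw [h2]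
        rw [← pow_mul]
    _ ≤ Real.sqrt qb ^ (i + j) := pow_le_pow_of_le_one hw0 hw1 (by omega)
    _ = Real.sqrt qb ^ i * Real.sqrt qb ^ j := pow_add _ _ _

lemma aux_sqrt_lt_one (hqb0 : 0 ≤ qb) (hqb1 : qb < 1) : Real.sqrt qb < 1 := by
  nlinarith [Real.sq_sqrt hqb0, Real.sqrt_nonneg qb]

lemma auxT_summable (hqb0 : 0 ≤ qb) (hqb1 : qb < 1) (hs0 : 0 ≤ s) (hsq : s ≤ qb) :
    Summable (fun pr : ℕ × ℕ => auxT qb s k pr.1 pr.2) := by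
  have hw0 : 0 ≤ Real.sqrt qb := Real.sqrt_nonneg _
  have hw1 := aux_sqrt_lt_one hqb0 hqb1
  have hgeo : Summable (fun n : ℕ => Real.sqrt qb ^ n) := summable_geometric_of_lt_one hw0 hw1
  exact Summable.of_nonneg_of_le (fun p => auxT_nonneg hqb0 hs0 _ _)
    (fun p => auxT_le_w hqb0 hqb1 hs0 hsq p.1 p.2)
    (hgeo.mul_of_nonneg hgeo (fun i => pow_nonneg hw0 _) (fun j => pow_nonneg hw0 _))

lemma auxT_summable_row (hqb0 : 0 ≤ qb) (hqb1 : qb < 1) (hs0 : 0 ≤ s) (hsq : s ≤ qb) (i : ℕ) :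
    Summable (fun j => auxT qb s k i j) := by
  have hw0 : 0 ≤ Real.sqrt qb := Real.sqrt_nonneg _
  have hw1 := aux_sqrt_lt_one hqb0 hqb1
  exact Summable.of_nonneg_of_le (fun j => auxT_nonneg hqb0 hs0 _ _)
    (fun j => auxT_le_w hqb0 hqb1 hs0 hsq i j)
    ((summable_geometric_of_lt_one hw0 hw1).mul_left _)

lemma auxT_tsum (hqb0 : 0 ≤ qb) (hqb1 : qb < 1) (hs0 : 0 ≤ s) (hsq : s ≤ qb) :
    ∑' pr : ℕ × ℕ, auxT qb s k pr.1 pr.2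
      = ((∑ i ∈ Finset.range k, s ^ (i+1)) + s ^ k * qb * (1 - qb)⁻¹) * (1 + qb) * (1 - qb)⁻¹ := by
  have hgeo : Summable (fun n : ℕ => qb ^ n) := summable_geometric_of_lt_one hqb0 hqb1
  have htsum_geo : ∑' n : ℕ, qb ^ n = (1 - qb)⁻¹ := tsum_geometric_of_lt_one hqb0 hqb1
  -- diagonal sequence d m = auxT m m and its sum D
  have hd_le : ∀ m : ℕ, auxT qb s k m m ≤ qb ^ m := by
    intro m
    calc auxT qb s k m m ≤ qb ^ (max m m + 1) := auxT_le_pow hqb0 hs0 hsq m m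
      _ ≤ qb ^ m := by
          simp only [max_self]
          exact pow_le_pow_of_le_one hqb0 hqb1.le (by omega)
  have hsumd : Summable (fun m => auxT qb s k m m) :=
    Summable.of_nonneg_of_le (fun m => auxT_nonneg hqb0 hs0 _ _) hd_le hgeo
  have htsum_d : ∑' m, auxT qb s k m m
      = (∑ i ∈ Finset.range k, s ^ (i+1)) + s ^ k * qb * (1 - qb)⁻¹ := by
    rw [← hsumd.sum_add_tsum_nat_add k]
    congr 1
    · refine Finset.sum_congr rfl fun i hi => ?_
      have hik : i + 1 ≤ k := Finset.mem_range.mp hi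
      unfold auxT
      rw [min_self, min_eq_left hik]
      simp
    · have heq : ∀ m : ℕ, auxT qb s k (m + k) (m + k) = (s ^ k * qb) * qb ^ m := by
        intro m
        unfold auxT
        have h1 : min (m + k) (m + k) = m + k := min_self _
        have h2 : max (m + k) (m + k) = m + k := max_self _
        have h3 : min (m + k + 1) k = k := min_eq_right (by omega)
        have he : m + k + 1 - k = m + 1 := by omega
        rw [h1, h2, h3, he, mul_assoc, ← pow_succ']
      rw [tsum_congr heq, tsum_mul_left, htsum_geo]
  -- row sums
  have hrow : ∀ i, ∑' j, auxT qb s k i j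
      = (∑ j ∈ Finset.range (i+1), auxT qb s k j j * qb ^ (i - j))
        + auxT qb s k i i * qb * (1 - qb)⁻¹ := by
    intro i
    rw [← (auxT_summable_row hqb0 hqb1 hs0 hsq i).sum_add_tsum_nat_add (i+1)]
    congr 1
    · refine Finset.sum_congr rfl fun j hj => ?_
      have hji : j ≤ i := by
        have := Finset.mem_range.mp hj; omega
      unfold auxT
      have h1 : min i j = j := min_eq_right hji
      have h2 : max i j = i := max_eq_left hji
      have h3 : min j j = j := min_self _
      have h4 : max j j = j := max_self _
      rw [h1, h2, h3, h4, mul_assoc, ← pow_add]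
      have hc : min (j + 1) k ≤ j + 1 := min_le_left _ _
      have he : j + 1 - min (j + 1) k + (i - j) = i + 1 - min (j + 1) k := by omega
      rw [he]
    · have heq : ∀ m : ℕ, auxT qb s k i (m + (i+1)) = (auxT qb s k i i * qb) * qb ^ m := by
        intro m
        unfold auxT
        have h1 : min i (m + (i + 1)) = i := min_eq_left (by omega)
        have h2 : max i (m + (i + 1)) = m + (i + 1) := max_eq_right (by omega)
        have h3 : min i i = i := min_self _
        have h4 : max i i = i := max_self _
        rw [h1, h2, h3, h4, mul_assoc, mul_assoc, ← pow_succ', ← pow_add]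
        have hc : min (i + 1) k ≤ i + 1 := min_le_left _ _
        have he : m + (i + 1) + 1 - min (i + 1) k = i + 1 - min (i + 1) k + (m + 1) := by omega
        rw [he]
      rw [tsum_congr heq, tsum_mul_left, htsum_geo]
  -- assemble
  have hnorm_d : Summable (fun m => ‖auxT qb s k m m‖) := by
    refine hsumd.congr fun m => ?_
    rw [Real.norm_eq_abs, abs_of_nonneg (auxT_nonneg hqb0 hs0 _ _)]
  have hnorm_g : Summable (fun n : ℕ => ‖qb ^ n‖) := by
    refine hgeo.congr fun n => ?_
    rw [Real.norm_eq_abs, abs_of_nonneg (pow_nonneg hqb0 _)]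
  have hcauchy := hasSum_sum_range_mul_of_summable_norm hnorm_d hnorm_g
  rw [Summable.tsum_prod' (auxT_summable hqb0 hqb1 hs0 hsq) (auxT_summable_row hqb0 hqb1 hs0 hsq)]
  rw [tsum_congr hrow]
  rw [Summable.tsum_add hcauchy.summable ((hsumd.mul_right qb).mul_right ((1-qb)⁻¹))]
  rw [hcauchy.tsum_eq, htsum_geo]
  rw [tsum_mul_right, tsum_mul_right, htsum_d]
  ring
end

lemma aux_sq_iSup (u : ℕ → ℝ≥0∞) (hu : Monotone u) : (⨆ n, u n)^2 = ⨆ n, (u n)^2 := by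
  apply le_antisymm
  · rw [pow_two, ENNReal.iSup_mul]
    refine iSup_le fun n => ?_
    rw [ENNReal.mul_iSup]
    refine iSup_le fun m => ?_
    calc u n * u m ≤ u (max n m) * u (max n m) :=
        mul_le_mul' (hu (le_max_left _ _)) (hu (le_max_right _ _))
      _ = (u (max n m))^2 := (pow_two _).symm
      _ ≤ ⨆ n, (u n)^2 := le_iSup (fun n => (u n)^2) _
  · refine iSup_le fun n => ?_
    rw [pow_two, pow_two]
    exact mul_le_mul' (le_iSup u n) (le_iSup u n)

theorem aux_main {E Ω : Type*} [MeasurableSpace E] [MeasurableSpace Ω]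
    (P : Measure Ω) [IsProbabilityMeasure P]
    (V : ℕ → Ω → E) (hVmeas : ∀ ℓ, Measurable (V ℓ))
    (hindep : iIndepFun V P)
    (h : ℕ → E → ℝ) (hhm : ∀ ℓ, Measurable (h ℓ))
    (hh0 : ∀ ℓ x, 0 ≤ h ℓ x) (hh1 : ∀ ℓ x, h ℓ x ≤ 1)
    (qb s : ℝ) (k : ℕ)
    (hqb0 : 0 ≤ qb) (hqb1 : qb < 1) (hs0 : 0 ≤ s) (hsq : s ≤ qb)
    (hq : ∀ ℓ, ∫ ω, h ℓ (V ℓ ω) ∂P = qb)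
    (he2 : ∀ ℓ, ∫ ω, (h ℓ (V ℓ ω))^2 ∂P = if ℓ < k then s else qb) :
    variance (fun ω => 1 + ∑' j : ℕ, ∏ ℓ ∈ Finset.range (j+1), h ℓ (V ℓ ω)) P
      = ((∑ i ∈ Finset.range k, s^(i+1)) + s^k * qb * (1-qb)⁻¹) * (1+qb) * (1-qb)⁻¹
        - (qb * (1-qb)⁻¹)^2 := by
  have hqbinv : (0:ℝ) ≤ qb * (1-qb)⁻¹ := by
    have : (0:ℝ) < 1 - qb := by linarith
    positivity
  set T : ℕ → Ω → ℝ := fun j ω => ∏ ℓ ∈ Finset.range (j+1), h ℓ (V ℓ ω) with hTdef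
  have hT0 : ∀ j ω, 0 ≤ T j ω := fun j ω => Finset.prod_nonneg fun ℓ _ => hh0 ℓ _
  have hT1 : ∀ j ω, T j ω ≤ 1 := fun j ω =>
    Finset.prod_le_one (fun ℓ _ => hh0 ℓ _) (fun ℓ _ => hh1 ℓ _)
  have hTmeas : ∀ j, Measurable (T j) := fun j =>
    Finset.measurable_prod _ fun ℓ _ => (hhm ℓ).comp (hVmeas ℓ)
  have hTint : ∀ j, Integrable (T j) P := by
    intro j
    refine (integrable_const (1:ℝ)).mono' (hTmeas j).aestronglyMeasurable
      (ae_of_all _ fun ω => ?_)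
    rw [Real.norm_eq_abs, abs_of_nonneg (hT0 j ω)]
    exact hT1 j ω
  have hTTint : ∀ i j, Integrable (fun ω => T i ω * T j ω) P := by
    intro i j
    refine (integrable_const (1:ℝ)).mono' ((hTmeas i).mul (hTmeas j)).aestronglyMeasurable
      (ae_of_all _ fun ω => ?_)
    rw [Real.norm_eq_abs, abs_of_nonneg (mul_nonneg (hT0 i ω) (hT0 j ω))]
    calc T i ω * T j ω ≤ 1 * 1 := mul_le_mul (hT1 i ω) (hT1 j ω) (hT0 j ω) zero_le_one
      _ = 1 := mul_one 1
  have hET : ∀ j, ∫ ω, T j ω ∂P = qb^(j+1) := fun j =>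
    aux_ET P V hVmeas hindep h hhm qb hq j
  have hETT : ∀ i j, ∫ ω, T i ω * T j ω ∂P = auxT qb s k i j := by
    intro i j
    rcases le_total i j with hij | hij
    · rw [show (∫ ω, T i ω * T j ω ∂P) = ∫ ω, (∏ ℓ ∈ Finset.range (i+1), h ℓ (V ℓ ω)) *
          (∏ ℓ ∈ Finset.range (j+1), h ℓ (V ℓ ω)) ∂P from rfl,
        aux_ETT P V hVmeas hindep h hhm qb s k hq he2 hij]
      unfold auxT
      rw [min_eq_left hij, max_eq_right hij]
    · have hcomm : ∫ ω, T i ω * T j ω ∂P = ∫ ω, T j ω * T i ω ∂P :=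
        integral_congr_ae (ae_of_all _ fun ω => mul_comm _ _)
      rw [hcomm, show (∫ ω, T j ω * T i ω ∂P) = ∫ ω, (∏ ℓ ∈ Finset.range (j+1), h ℓ (V ℓ ω)) *
          (∏ ℓ ∈ Finset.range (i+1), h ℓ (V ℓ ω)) ∂P from rfl,
        aux_ETT P V hVmeas hindep h hhm qb s k hq he2 hij, auxT_symm]
      unfold auxT
      rw [min_eq_left hij, max_eq_right hij]
  -- geometric first moment
  have hgeo : Summable (fun n : ℕ => qb ^ n) := summable_geometric_of_lt_one hqb0 hqb1
  have hgeo1 : Summable (fun j : ℕ => qb ^ (j+1)) := by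
    simpa [pow_succ] using hgeo.mul_right qb
  have htsum1 : ∑' j : ℕ, qb ^ (j+1) = qb * (1-qb)⁻¹ := by
    simp_rw [pow_succ]
    rw [tsum_mul_right, tsum_geometric_of_lt_one hqb0 hqb1]
    ring
  -- the ENNReal-valued total sum
  set G : Ω → ℝ≥0∞ := fun ω => ∑' j, ENNReal.ofReal (T j ω) with hGdef
  have hGmeas : Measurable G := Measurable.ennreal_tsum fun j => (hTmeas j).ennreal_ofReal
  have hlintG : ∫⁻ ω, G ω ∂P = ENNReal.ofReal (qb * (1-qb)⁻¹) := by
    rw [hGdef]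
    rw [lintegral_tsum fun j => ((hTmeas j).ennreal_ofReal).aemeasurable]
    have e : ∀ j : ℕ, ∫⁻ ω, ENNReal.ofReal (T j ω) ∂P = ENNReal.ofReal (qb^(j+1)) := fun j => by
      rw [← ofReal_integral_eq_lintegral_ofReal (hTint j) (ae_of_all _ (hT0 j)), hET j]
    rw [tsum_congr e, ← ENNReal.ofReal_tsum_of_nonneg (fun j => pow_nonneg hqb0 _) hgeo1, htsum1]
  have hGlt : ∀ᵐ ω ∂P, G ω < ⊤ :=
    ae_lt_top hGmeas (by rw [hlintG]; exact ENNReal.ofReal_ne_top)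
  have hWae : ∀ᵐ ω ∂P, Summable (fun j => T j ω) ∧ ENNReal.ofReal (∑' j, T j ω) = G ω := by
    filter_upwards [hGlt] with ω hω
    have hsm : Summable fun j => T j ω := by
      have h1 := ENNReal.summable_toReal hω.ne
      refine h1.congr fun j => ?_
      rw [ENNReal.toReal_ofReal (hT0 j ω)]
    exact ⟨hsm, (ENNReal.ofReal_tsum_of_nonneg (fun j => hT0 j ω) hsm)⟩
  set W : Ω → ℝ := fun ω => ∑' j, T j ω with hWdef
  have hW0 : ∀ ω, 0 ≤ W ω := fun ω => tsum_nonneg (fun j => hT0 j ω)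
  have hWrep : W =ᵐ[P] fun ω => (G ω).toReal := by
    filter_upwards [hWae] with ω hω
    rw [hWdef, ← hω.2, ENNReal.toReal_ofReal (tsum_nonneg (fun j => hT0 j ω))]
  have hWaesm : AEStronglyMeasurable W P :=
    hGmeas.ennreal_toReal.aestronglyMeasurable.congr hWrep.symm
  have hofW : (fun ω => ENNReal.ofReal (W ω)) =ᵐ[P] G := by
    filter_upwards [hWae] with ω hω
    exact hω.2
  have hWint : Integrable W P := by
    refine ⟨hWaesm, ?_⟩
    rw [hasFiniteIntegral_iff_ofReal (ae_of_all _ hW0), lintegral_congr_ae hofW, hlintG]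
    exact ENNReal.ofReal_lt_top
  have hEW : ∫ ω, W ω ∂P = qb * (1-qb)⁻¹ := by
    rw [integral_eq_lintegral_of_nonneg_ae (ae_of_all _ hW0) hWaesm, lintegral_congr_ae hofW,
      hlintG, ENNReal.toReal_ofReal hqbinv]
  -- second moment
  set M2 : ℝ := ((∑ i ∈ Finset.range k, s^(i+1)) + s^k * qb * (1-qb)⁻¹) * (1+qb) * (1-qb)⁻¹
    with hM2def
  have hM2 : ∑' pr : ℕ × ℕ, auxT qb s k pr.1 pr.2 = M2 := auxT_tsum hqb0 hqb1 hs0 hsq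
  have hM2nonneg : 0 ≤ M2 := by
    rw [← hM2]
    exact tsum_nonneg fun p => auxT_nonneg hqb0 hs0 _ _
  set Wn : ℕ → Ω → ℝ := fun n ω => ∑ j ∈ Finset.range n, T j ω with hWndef
  have hWn0 : ∀ n ω, 0 ≤ Wn n ω := fun n ω => Finset.sum_nonneg fun j _ => hT0 j ω
  have hWnmeas : ∀ n, Measurable (Wn n) := fun n =>
    Finset.measurable_sum _ fun j _ => hTmeas j
  have hWnle : ∀ n ω, Wn n ω ≤ n := by
    intro n ω
    calc Wn n ω ≤ ∑ j ∈ Finset.range n, 1 := Finset.sum_le_sum fun j _ => hT1 j ω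
      _ = n := by simp
  have hWn_mono : ∀ ω, Monotone fun n => ENNReal.ofReal (Wn n ω) := by
    intro ω a b hab
    apply ENNReal.ofReal_le_ofReal
    exact Finset.sum_le_sum_of_subset_of_nonneg (Finset.range_subset_range.2 hab)
      (fun j _ _ => hT0 j ω)
  have hWnofReal : ∀ n ω, ENNReal.ofReal (Wn n ω)
      = ∑ j ∈ Finset.range n, ENNReal.ofReal (T j ω) := fun n ω =>
    ENNReal.ofReal_sum_of_nonneg fun j _ => hT0 j ω
  have hsupG : ∀ ω, (⨆ n, ENNReal.ofReal (Wn n ω)) = G ω := by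
    intro ω
    simp_rw [hWnofReal]
    exact (ENNReal.tsum_eq_iSup_nat).symm
  have hG2 : ∀ ω, (G ω)^2 = ⨆ n, (ENNReal.ofReal (Wn n ω))^2 := by
    intro ω
    rw [← hsupG ω, aux_sq_iSup _ (hWn_mono ω)]
  have hWn2int : ∀ n, Integrable (fun ω => (Wn n ω)^2) P := by
    intro n
    refine (integrable_const ((n:ℝ)^2)).mono'
      (((hWnmeas n).mul (hWnmeas n)).aestronglyMeasurable.congr ?_)
      (ae_of_all _ fun ω => ?_)
    · exact ae_of_all _ fun ω => (pow_two (Wn n ω)).symm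
    · rw [Real.norm_eq_abs, abs_of_nonneg (pow_nonneg (hWn0 n ω) 2)]
      exact pow_le_pow_left₀ (hWn0 n ω) (hWnle n ω) 2
  set c : ℕ → ℝ := fun n => ∑ p ∈ Finset.range n ×ˢ Finset.range n, auxT qb s k p.1 p.2 with hcdef
  have hEWn2 : ∀ n, ∫ ω, (Wn n ω)^2 ∂P = c n := by
    intro n
    have hexp : ∀ ω, (Wn n ω)^2
        = ∑ i ∈ Finset.range n, ∑ j ∈ Finset.range n, T i ω * T j ω := by
      intro ω
      rw [pow_two, hWndef, Finset.sum_mul_sum]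
    have hcn : c n = ∑ i ∈ Finset.range n, ∑ j ∈ Finset.range n, auxT qb s k i j :=
      Finset.sum_product _ _ _
    rw [integral_congr_ae (ae_of_all _ hexp),
      integral_finset_sum _ (fun i _ => integrable_finset_sum _ (fun j _ => hTTint i j)), hcn]
    refine Finset.sum_congr rfl fun i _ => ?_
    rw [integral_finset_sum _ (fun j _ => hTTint i j)]
    exact Finset.sum_congr rfl fun j _ => hETT i j
  have hc_mono : Monotone c := by
    intro a b hab
    exact Finset.sum_le_sum_of_subset_of_nonneg
      (Finset.product_subset_product (Finset.range_subset_range.2 hab) (Finset.range_subset_range.2 hab))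
      (fun p _ _ => auxT_nonneg hqb0 hs0 _ _)
  have hc_tendsto : Tendsto c atTop (𝓝 M2) := by
    have hsqr : Tendsto (fun n => Finset.range n ×ˢ Finset.range n) atTop atTop := by
      apply tendsto_atTop_finset_of_monotone
      · intro a b hab
        exact Finset.product_subset_product (Finset.range_subset_range.2 hab)
          (Finset.range_subset_range.2 hab)
      · intro p
        exact ⟨max p.1 p.2 + 1, Finset.mem_product.2
          ⟨Finset.mem_range.2 (by omega), Finset.mem_range.2 (by omega)⟩⟩
    have h1 := ((auxT_summable (k := k) hqb0 hqb1 hs0 hsq).hasSum.comp hsqr)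
    rw [hM2] at h1
    exact h1
  have hlintG2 : ∫⁻ ω, (G ω)^2 ∂P = ENNReal.ofReal M2 := by
    calc ∫⁻ ω, (G ω)^2 ∂P = ∫⁻ ω, ⨆ n, (ENNReal.ofReal (Wn n ω))^2 ∂P :=
        lintegral_congr fun ω => hG2 ω
      _ = ⨆ n, ∫⁻ ω, (ENNReal.ofReal (Wn n ω))^2 ∂P := by
          refine lintegral_iSup (fun n => ((hWnmeas n).ennreal_ofReal).pow_const 2) ?_
          intro a b hab ω
          simp only []
          rw [pow_two, pow_two]
          exact mul_le_mul' (hWn_mono ω hab) (hWn_mono ω hab)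
      _ = ⨆ n, ENNReal.ofReal (c n) := by
          congr 1
          funext n
          have e1 : ∀ ω, (ENNReal.ofReal (Wn n ω))^2 = ENNReal.ofReal ((Wn n ω)^2) := fun ω =>
            (ENNReal.ofReal_pow (hWn0 n ω) 2).symm
          rw [lintegral_congr e1,
            ← ofReal_integral_eq_lintegral_ofReal (hWn2int n)
              (ae_of_all _ fun ω => pow_nonneg (hWn0 n ω) 2), hEWn2 n]
      _ = ENNReal.ofReal M2 := by
          have h2 : Tendsto (fun n => ENNReal.ofReal (c n)) atTop (𝓝 (ENNReal.ofReal M2)) :=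
            (ENNReal.continuous_ofReal.tendsto M2).comp hc_tendsto
          have h3 : Tendsto (fun n => ENNReal.ofReal (c n)) atTop
              (𝓝 (⨆ n, ENNReal.ofReal (c n))) :=
            tendsto_atTop_iSup (fun a b hab => ENNReal.ofReal_le_ofReal (hc_mono hab))
          exact tendsto_nhds_unique h3 h2
  have hW2rep : (fun ω => ENNReal.ofReal ((W ω)^2)) =ᵐ[P] fun ω => (G ω)^2 := by
    filter_upwards [hWae] with ω hω
    rw [ENNReal.ofReal_pow (hW0 ω), hWdef, hω.2]
  have hW2aesm : AEStronglyMeasurable (fun ω => (W ω)^2) P := by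
    have := hWaesm.mul hWaesm
    refine this.congr (ae_of_all _ fun ω => (pow_two (W ω)).symm)
  have hW2int : Integrable (fun ω => (W ω)^2) P := by
    refine ⟨hW2aesm, ?_⟩
    rw [hasFiniteIntegral_iff_ofReal (ae_of_all _ fun ω => pow_nonneg (hW0 ω) 2),
      lintegral_congr_ae hW2rep, hlintG2]
    exact ENNReal.ofReal_lt_top
  have hEW2 : ∫ ω, (W ω)^2 ∂P = M2 := by
    rw [integral_eq_lintegral_of_nonneg_ae (ae_of_all _ fun ω => pow_nonneg (hW0 ω) 2) hW2aesm,
      lintegral_congr_ae hW2rep, hlintG2, ENNReal.toReal_ofReal hM2nonneg]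
  -- variance
  have hWmem : MemLp W 2 P := (memLp_two_iff_integrable_sq hWaesm).2 hW2int
  have hXmem : MemLp (fun ω => 1 + W ω) 2 P := (memLp_const (1:ℝ)).add hWmem
  have hvar := variance_eq_sub hXmem
  have hX2eq : ((fun ω => 1 + W ω)^2) = fun ω => 1 + (2 * W ω + (W ω)^2) := by
    funext ω
    simp only [Pi.pow_apply]
    ring
  have hX2 : ∫ ω, ((fun ω => 1 + W ω)^2) ω ∂P = 1 + (2 * (qb * (1-qb)⁻¹) + M2) := by
    have hint2 : Integrable (fun ω => 2 * W ω + W ω ^ 2) P := by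
      exact (hWint.const_mul 2).add hW2int
    rw [hX2eq]
    simp only []
    rw [integral_add (integrable_const 1) hint2, integral_add (hWint.const_mul 2) hW2int,
      integral_const_mul, hEW, hEW2]
    simp
  have hX1 : ∫ ω, (1 + W ω) ∂P = 1 + qb * (1-qb)⁻¹ := by
    rw [integral_add (integrable_const 1) hWint, hEW]
    simp
  calc variance (fun ω => 1 + W ω) P
      = (∫ ω, ((fun ω => 1 + W ω)^2) ω ∂P) - (∫ ω, (1 + W ω) ∂P)^2 := hvar
    _ = (1 + (2 * (qb * (1-qb)⁻¹) + M2)) - (1 + qb * (1-qb)⁻¹)^2 := by rw [hX2, hX1]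
    _ = M2 - (qb * (1-qb)⁻¹)^2 := by ring

end VanillaRBAux

/-- Fix `z` with `p(z) > 0`, and let `(y_ℓ, u_ℓ)_{ℓ ≥ 1}` be i.i.d. with
`y_ℓ` of density `q(·|z)` and `u_ℓ` uniform on `(0,1)`, independent.  For every `k ≥ 1`,
writing `p = p(z)` and `r = r(z) = ∫ α(z,y)² q(y|z) dy`, the variance of the truncated
estimator `ξ̂ᵏ` equals
`(1-p)/p² − [(1 − (1 − 2p + r)ᵏ)/(2p − r)]·[(2−p)/p²]·(p − r)`. -/
theorem vanillaRB_truncated_xi_variance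
    {X : Type*} [MeasurableSpace X] (ν : Measure X) [SigmaFinite ν]
    (pi : X → ℝ) (qq : X → X → ℝ)
    (hpi : Measurable pi) (hqq : Measurable (Function.uncurry qq))
    (hpi0 : ∀ x, 0 ≤ pi x) (hqq0 : ∀ x y, 0 ≤ qq x y)
    (z : X)
    [IsProbabilityMeasure (ν.withDensity fun y => ENNReal.ofReal (qq z y))]
    (p : ℝ) (hp : p = ∫ y, mhAlpha pi qq z y * qq z y ∂ν) (hppos : 0 < p)
    (r : ℝ) (hr : r = ∫ y, (mhAlpha pi qq z y) ^ 2 * qq z y ∂ν)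
    {Ω : Type*} [MeasurableSpace Ω] (P : Measure Ω) [IsProbabilityMeasure P]
    (Y : ℕ → Ω → X) (U : ℕ → Ω → ℝ)
    (hmeas : ∀ ℓ, Measurable fun ω => (Y ℓ ω, U ℓ ω))
    (hindep : iIndepFun (fun ℓ ω => (Y ℓ ω, U ℓ ω)) P)
    (hlaw : ∀ ℓ, P.map (fun ω => (Y ℓ ω, U ℓ ω)) =
      (ν.withDensity fun y => ENNReal.ofReal (qq z y)).prod
        (volume.restrict (Set.Ioo (0:ℝ) 1)))
    (k : ℕ) (hk : 1 ≤ k) :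
    variance
        (fun ω => 1 + ∑' j : ℕ,
          rbTerm (mhAlpha pi qq z) (fun ℓ => Y ℓ ω) (fun ℓ => U ℓ ω) k j) P =
      (1 - p) / p ^ 2 -
        (1 - (1 - 2 * p + r) ^ k) / (2 * p - r) * ((2 - p) / p ^ 2) * (p - r) := by
  set a : X → ℝ := mhAlpha pi qq z with hadef
  have ha0 : ∀ y, 0 ≤ a y := by
    intro y
    refine le_min zero_le_one ?_
    exact div_nonneg (mul_nonneg (hpi0 y) (hqq0 y z)) (mul_nonneg (hpi0 z) (hqq0 z y))
  have ha1 : ∀ y, a y ≤ 1 := fun y => min_le_left _ _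
  have hqqz : Measurable (qq z) := hqq.comp (measurable_const.prodMk measurable_id)
  have ha_meas : Measurable a := by
    apply Measurable.min measurable_const
    exact (hpi.mul (hqq.comp (measurable_id.prodMk measurable_const))).div
      (measurable_const.mul hqqz)
  set μ : Measure X := ν.withDensity fun y => ENNReal.ofReal (qq z y) with hμdef
  have htrans : ∀ g : X → ℝ, Measurable g → ∫ y, g y ∂μ = ∫ y, qq z y * g y ∂ν := by
    intro g hg
    have h1 : μ = ν.withDensity fun y => ((qq z y).toNNReal : ℝ≥0∞) := rfl
    rw [h1, integral_withDensity_eq_integral_smul hqqz.real_toNNReal g]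
    refine integral_congr_ae (ae_of_all _ fun y => ?_)
    show (qq z y).toNNReal • g y = qq z y * g y
    rw [NNReal.smul_def, Real.coe_toNNReal _ (hqq0 z y), smul_eq_mul]
  have hμa : ∫ y, a y ∂μ = p := by
    rw [htrans a ha_meas, hp]
    exact integral_congr_ae (ae_of_all _ fun y => mul_comm _ _)
  have hμa2 : ∫ y, (a y)^2 ∂μ = r := by
    rw [htrans _ (ha_meas.pow_const 2), hr]
    exact integral_congr_ae (ae_of_all _ fun y => mul_comm _ _)
  have hint_a : Integrable a μ :=
    (integrable_const (1:ℝ)).mono' ha_meas.aestronglyMeasurable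
      (ae_of_all _ fun y => by rw [Real.norm_eq_abs, abs_of_nonneg (ha0 y)]; exact ha1 y)
  have hint_a2 : Integrable (fun y => (a y)^2) μ :=
    (integrable_const (1:ℝ)).mono' (ha_meas.pow_const 2).aestronglyMeasurable
      (ae_of_all _ fun y => by
        rw [Real.norm_eq_abs, abs_of_nonneg (pow_nonneg (ha0 y) 2)]
        nlinarith [ha0 y, ha1 y])
  have hp1 : p ≤ 1 := by
    rw [← hμa]
    calc ∫ y, a y ∂μ ≤ ∫ _, (1:ℝ) ∂μ := integral_mono hint_a (integrable_const 1) ha1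
      _ = 1 := by simp
  have hq_eq : ∫ y, (1 - a y) ∂μ = 1 - p := by
    rw [integral_sub (integrable_const 1) hint_a, hμa]
    simp
  have hs_eq : ∫ y, (1 - a y)^2 ∂μ = 1 - 2*p + r := by
    have e : ∀ y, (1 - a y)^2 = 1 - 2 * a y + (a y)^2 := fun y => by ring
    have i1 : Integrable (fun y => 1 - 2 * a y) μ := by
      exact (integrable_const 1).sub (hint_a.const_mul 2)
    rw [integral_congr_ae (ae_of_all _ e), integral_add i1 hint_a2,
      integral_sub (integrable_const 1) (hint_a.const_mul 2), integral_const_mul, hμa, hμa2]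
    simp
  haveI hunif : IsProbabilityMeasure (volume.restrict (Set.Ioo (0:ℝ) 1)) := by
    constructor
    rw [Measure.restrict_apply_univ]
    simp [Real.volume_Ioo]
  set π : Measure (X × ℝ) := μ.prod (volume.restrict (Set.Ioo (0:ℝ) 1)) with hπdef
  haveI : IsProbabilityMeasure π := by rw [hπdef]; infer_instance
  have hfst : ∀ g : X → ℝ, Measurable g → ∫ w : X × ℝ, g w.1 ∂π = ∫ y, g y ∂μ := by
    intro g hg
    have h1 : ∫ y, g y ∂(π.map Prod.fst) = ∫ w : X × ℝ, g w.1 ∂π :=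
      integral_map measurable_fst.aemeasurable hg.aestronglyMeasurable
    rw [← h1, hπdef, Measure.map_fst_prod]
    simp
  have hIci : ∀ c : ℝ, 0 ≤ c → c ≤ 1 →
      (volume.restrict (Set.Ioo (0:ℝ) 1)) (Set.Ici c) = ENNReal.ofReal (1 - c) := by
    intro c hc0 hc1
    rw [Measure.restrict_apply measurableSet_Ici]
    rcases hc0.lt_or_eq with hlt | heq
    · have e : Set.Ici c ∩ Set.Ioo 0 1 = Set.Ico c 1 := by
        ext u
        simp only [Set.mem_inter_iff, Set.mem_Ici, Set.mem_Ioo, Set.mem_Ico]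
        constructor
        · rintro ⟨h1, _, h3⟩; exact ⟨h1, h3⟩
        · rintro ⟨h1, h2⟩; exact ⟨h1, lt_of_lt_of_le hlt h1, h2⟩
      rw [e, Real.volume_Ico]
    · have e : Set.Ici c ∩ Set.Ioo 0 1 = Set.Ioo 0 1 := by
        apply Set.inter_eq_self_of_subset_right
        intro u hu
        rw [← heq]
        exact le_of_lt hu.1
      rw [e, Real.volume_Ioo, ← heq]
  have hinner : ∀ x : X,
      ∫ u, (if a x ≤ u then (1:ℝ) else 0) ∂(volume.restrict (Set.Ioo (0:ℝ) 1)) = 1 - a x := by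
    intro x
    have e : (fun u : ℝ => if a x ≤ u then (1:ℝ) else 0)
        = (Set.Ici (a x)).indicator (fun _ => (1:ℝ)) := by
      funext u
      simp [Set.indicator_apply, Set.mem_Ici]
    rw [e, integral_indicator_const (1:ℝ) measurableSet_Ici, measureReal_def, hIci (a x) (ha0 x) (ha1 x),
      ENNReal.toReal_ofReal (by linarith [ha1 x])]
    simp
  have hSmeas : MeasurableSet {w : X × ℝ | a w.1 ≤ w.2} :=
    measurableSet_le (ha_meas.comp measurable_fst) measurable_snd
  have hib_meas : Measurable (fun w : X × ℝ => if a w.1 ≤ w.2 then (1:ℝ) else 0) :=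
    Measurable.ite hSmeas measurable_const measurable_const
  have hib_int : Integrable (fun w : X × ℝ => if a w.1 ≤ w.2 then (1:ℝ) else 0) π := by
    refine (integrable_const (1:ℝ)).mono' hib_meas.aestronglyMeasurable (ae_of_all _ fun w => ?_)
    by_cases hw : a w.1 ≤ w.2 <;> simp [hw]
  have hib : ∫ w : X × ℝ, (if a w.1 ≤ w.2 then (1:ℝ) else 0) ∂π = 1 - p := by
    rw [hπdef] at hib_int ⊢
    rw [integral_prod _ hib_int]
    have e : ∀ x : X, (∫ u, (if a x ≤ u then (1:ℝ) else 0)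
        ∂(volume.restrict (Set.Ioo (0:ℝ) 1))) = 1 - a x := hinner
    rw [integral_congr_ae (ae_of_all _ e), hq_eq]
  -- the coordinate functions
  set V : ℕ → Ω → X × ℝ := fun ℓ => fun ω => (Y ℓ ω, U ℓ ω) with hVdef
  have hVmeas : ∀ ℓ, Measurable (V ℓ) := fun ℓ => hmeas ℓ
  have hindep' : iIndepFun V P := hindep
  have hlaw' : ∀ ℓ, P.map (V ℓ) = π := fun ℓ => hlaw ℓ
  set hfun : ℕ → X × ℝ → ℝ := fun ℓ =>
    if ℓ < k then (fun w => 1 - a w.1) else (fun w => if a w.1 ≤ w.2 then 1 else 0) with hhdef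
  have hhm : ∀ ℓ, Measurable (hfun ℓ) := by
    intro ℓ
    by_cases hl : ℓ < k <;> simp only [hhdef, hl, if_true, if_false]
    · exact measurable_const.sub (ha_meas.comp measurable_fst)
    · exact hib_meas
  have hh0 : ∀ ℓ w, 0 ≤ hfun ℓ w := by
    intro ℓ w
    by_cases hl : ℓ < k <;> simp only [hhdef, hl, if_true, if_false]
    · linarith [ha1 w.1]
    · by_cases hw : a w.1 ≤ w.2 <;> simp [hw]
  have hh1 : ∀ ℓ w, hfun ℓ w ≤ 1 := by
    intro ℓ w
    by_cases hl : ℓ < k <;> simp only [hhdef, hl, if_true, if_false]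
    · linarith [ha0 w.1]
    · by_cases hw : a w.1 ≤ w.2 <;> simp [hw]
  have hpull : ∀ (ℓ : ℕ) (f : X × ℝ → ℝ), Measurable f →
      ∫ ω, f (V ℓ ω) ∂P = ∫ w, f w ∂π := by
    intro ℓ f hf
    rw [← integral_map (hVmeas ℓ).aemeasurable hf.aestronglyMeasurable, hlaw' ℓ]
  have hq' : ∀ ℓ, ∫ ω, hfun ℓ (V ℓ ω) ∂P = 1 - p := by
    intro ℓ
    rw [hpull ℓ _ (hhm ℓ)]
    by_cases hl : ℓ < k
    · simp only [hhdef, hl, if_true]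
      rw [hfst (fun y => 1 - a y) (measurable_const.sub ha_meas), hq_eq]
    · simp only [hhdef, hl, if_false]
      exact hib
  have he2' : ∀ ℓ, ∫ ω, (hfun ℓ (V ℓ ω))^2 ∂P = if ℓ < k then (1-2*p+r) else (1-p) := by
    intro ℓ
    have h0 : (fun ω => (hfun ℓ (V ℓ ω))^2) = fun ω => (fun w => (hfun ℓ w)^2) (V ℓ ω) := rfl
    rw [h0, hpull ℓ _ ((hhm ℓ).pow_const 2)]
    by_cases hl : ℓ < k
    · simp only [hhdef, hl, if_true]
      rw [hfst (fun y => (1 - a y)^2) ((measurable_const.sub ha_meas).pow_const 2), hs_eq]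
    · simp only [hhdef, hl, if_false]
      have e : ∀ w : X × ℝ, ((if a w.1 ≤ w.2 then (1:ℝ) else 0))^2
          = (if a w.1 ≤ w.2 then (1:ℝ) else 0) := by
        intro w; by_cases hw : a w.1 ≤ w.2 <;> simp [hw]
      rw [integral_congr_ae (ae_of_all _ e), hib]
  -- rbTerm identity
  have hrb : ∀ (ω : Ω) (j : ℕ), rbTerm a (fun ℓ => Y ℓ ω) (fun ℓ => U ℓ ω) k j
      = ∏ ℓ ∈ Finset.range (j+1), hfun ℓ (V ℓ ω) := by
    intro ω j
    show (∏ ℓ ∈ Finset.range (min k (j + 1)), (1 - a (Y ℓ ω))) *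
        (∏ ℓ ∈ Finset.Ico k (j + 1), (if a (Y ℓ ω) ≤ U ℓ ω then (1:ℝ) else 0))
      = ∏ ℓ ∈ Finset.range (j+1), hfun ℓ (V ℓ ω)
    rw [← Finset.prod_range_mul_prod_Ico (fun ℓ => hfun ℓ (V ℓ ω)) (min_le_right k (j+1))]
    congr 1
    · refine Finset.prod_congr rfl fun ℓ hl => ?_
      have hlk : ℓ < k := lt_of_lt_of_le (Finset.mem_range.mp hl) (min_le_left _ _)
      simp [hhdef, hlk, hVdef]
    · rcases le_or_gt k (j+1) with hkj | hkj
      · rw [min_eq_left hkj]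
        refine Finset.prod_congr rfl fun ℓ hl => ?_
        have hnl : ¬ ℓ < k := by have := (Finset.mem_Ico.mp hl).1; omega
        simp [hhdef, hnl, hVdef]
      · rw [min_eq_right hkj.le, Finset.Ico_self, Finset.Ico_eq_empty (by omega)]
        simp
  have hfuneq : (fun ω => 1 + ∑' j : ℕ, rbTerm a (fun ℓ => Y ℓ ω) (fun ℓ => U ℓ ω) k j)
      = fun ω => 1 + ∑' j : ℕ, ∏ ℓ ∈ Finset.range (j+1), hfun ℓ (V ℓ ω) := by
    funext ω
    rw [tsum_congr (fun j => hrb ω j)]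
  rw [hfuneq]
  -- bounds
  have hs0' : 0 ≤ 1 - 2*p + r := by
    rw [← hs_eq]
    exact integral_nonneg fun y => sq_nonneg _
  have hsq' : 1 - 2*p + r ≤ 1 - p := by
    rw [← hs_eq, ← hq_eq]
    refine integral_mono ?_ ?_ fun y => ?_
    · exact (integrable_const (1:ℝ)).mono'
        ((measurable_const.sub ha_meas).pow_const 2).aestronglyMeasurable
        (ae_of_all _ fun y => by
          rw [Real.norm_eq_abs, abs_of_nonneg (sq_nonneg _)]
          nlinarith [ha0 y, ha1 y])
    · exact (integrable_const 1).sub hint_a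
    · nlinarith [ha0 y, ha1 y]
  have hvar := aux_main P V hVmeas hindep' hfun hhm hh0 hh1 (1-p) (1-2*p+r) k
    (by linarith) (by linarith) hs0' hsq' hq' he2'
  rw [hvar]
  -- algebra
  have hp0 : p ≠ 0 := ne_of_gt hppos
  have hslt1 : 1 - 2*p + r < 1 := by linarith
  have hne1 : (1 - 2*p + r) - 1 ≠ 0 := by intro hh; nlinarith
  have h2pr : 2*p - r ≠ 0 := by intro hh; nlinarith
  have hSsum : (∑ i ∈ Finset.range k, (1-2*p+r)^(i+1))
      = (1-2*p+r) * (((1-2*p+r)^k - 1)/((1-2*p+r) - 1)) := by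
    rw [← geom_sum_eq (by intro hh; exact hne1 (by rw [hh]; ring)) k, Finset.mul_sum]
    exact Finset.sum_congr rfl fun i _ => (pow_succ' _ _)
  rw [hSsum]
  have hpp : (1:ℝ) - (1 - p) = p := by ring
  rw [hpp]
  field_simp
  ring
end

section
/- Fix z ∈ 𝒳 with p(z) > 0, let (y_ℓ)_{ℓ≥1} be i.i.d. random variables with density q(·|z) and (u_ℓ)_{ℓ≥1} be i.i.d. uniform random variables on (0,1), independent of (y_ℓ). For k ≥ 0 define ξ̂^k = 1 + Σ_{j=1}^∞ [Π_{1≤ℓ≤min(k,j)} (1 − α(z,y_ℓ))]·[Π_{k+1≤ℓ≤j} 1{u_ℓ ≥ α(z,y_ℓ)}], and define ξ̂ = 1 + Σ_{j=1}^∞ Π_{ℓ=1}^{j} (1 − α(z,y_ℓ)). Then ξ̂^0 equals the geometric variable n = 1 + Σ_{j=1}^∞ Π_{ℓ=1}^{j} 1{u_ℓ ≥ α(z,y_ℓ)}, and for every k ≥ 1 the variances satisfy Var(ξ̂) ≤ Var(ξ̂^k) ≤ Var(ξ̂^0) = (1 − p(z))/p(z)². -/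
open MeasureTheory ProbabilityTheory Filter Set

lemma geo_succ_sum {c : ℝ} (hc0 : 0 ≤ c) (hc1 : c < 1) :
    ∑' i : ℕ, c^(i+1) = c / (1-c) := by
  calc ∑' i : ℕ, c^(i+1) = ∑' i : ℕ, c * c^i := by
        refine tsum_congr fun i => ?_; rw [← pow_succ']
    _ = c * (1-c)⁻¹ := by rw [tsum_mul_left, tsum_geometric_of_lt_one hc0 hc1]
    _ = c / (1-c) := (div_eq_mul_inv _ _).symm

lemma geo_succ_summable {c : ℝ} (hc0 : 0 ≤ c) (hc1 : c < 1) :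
    Summable (fun i : ℕ => c^(i+1)) := by
  refine ((summable_geometric_of_lt_one hc0 hc1).mul_left c).congr fun i => ?_
  rw [← pow_succ']

lemma double_series_eval {c : ℝ} (hc0 : 0 ≤ c) (hc1 : c < 1)
    (g : ℕ → ℝ) (hgnn : ∀ i, 0 ≤ g i) (hgle : ∀ i, g i ≤ c^(i+1)) :
    ∑' q : ℕ × ℕ, ENNReal.ofReal (g (min q.1 q.2) * c^(max q.1 q.2 - min q.1 q.2))
      = ENNReal.ofReal ((1+c)/(1-c) * ∑' i, g i) := by
  have h1c : (0:ℝ) < 1 - c := by linarith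
  have hgsum : Summable g := Summable.of_nonneg_of_le hgnn hgle (geo_succ_summable hc0 hc1)
  have hFnn : 0 ≤ ∑' i, g i := tsum_nonneg hgnn
  set E : ℕ → ℕ → ℝ := fun i j => g (min i j) * c^(max i j - min i j) with hEdef
  have hEnn : ∀ i j, 0 ≤ E i j := fun i j => mul_nonneg (hgnn _) (pow_nonneg hc0 _)
  -- rewrite as iterated sum
  have hprod : ∑' q : ℕ × ℕ, ENNReal.ofReal (g (min q.1 q.2) * c^(max q.1 q.2 - min q.1 q.2))
      = ∑' (i : ℕ) (j : ℕ), ENNReal.ofReal (E i j) :=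
    ENNReal.tsum_prod (f := fun i j => ENNReal.ofReal (E i j))
  rw [hprod]
  -- inner sums
  have inner : ∀ i : ℕ, (∑' j : ℕ, ENNReal.ofReal (E i j))
      = (∑ j ∈ Finset.range i, ENNReal.ofReal (g j * c^(i-j)))
        + ENNReal.ofReal (g i * (1-c)⁻¹) := by
    intro i
    have split : ∀ j : ℕ, ENNReal.ofReal (E i j)
        = (if j < i then ENNReal.ofReal (E i j) else 0)
          + (if i ≤ j then ENNReal.ofReal (E i j) else 0) := by
      intro j
      by_cases hj : j < i
      · simp [hj, Nat.not_le.mpr hj]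
      · simp [hj, Nat.le_of_not_lt hj]
    rw [tsum_congr split, ENNReal.summable.tsum_add ENNReal.summable]
    congr 1
    · rw [tsum_eq_sum (s := Finset.range i) (fun j hj => by
        simp [Finset.mem_range] at hj; simp [hj, Nat.not_lt.mpr hj])]
      refine Finset.sum_congr rfl fun j hj => ?_
      have hj' : j < i := Finset.mem_range.mp hj
      simp only [if_pos hj', hEdef, min_eq_right hj'.le, max_eq_left hj'.le]
    · have hinj : Function.Injective (fun d : ℕ => i + d) := fun a b hab => by simp only at hab; omega
      rw [← Function.Injective.tsum_eq hinj (f := fun j => if i ≤ j then ENNReal.ofReal (E i j) else 0)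
        (by intro j hj; simp only [Function.mem_support] at hj
            rcases le_or_gt i j with hle | hlt
            · exact ⟨j - i, by simp only; omega⟩
            · simp [Nat.not_le.mpr hlt] at hj)]
      have : ∀ d : ℕ, (if i ≤ i + d then ENNReal.ofReal (E i (i+d)) else 0)
          = ENNReal.ofReal (g i * c^d) := by
        intro d
        rw [if_pos (Nat.le_add_right i d)]
        congr 1
        simp only [hEdef, min_eq_left (Nat.le_add_right i d), max_eq_right (Nat.le_add_right i d)]
        congr 2
        omega
      rw [tsum_congr this, ← ENNReal.ofReal_tsum_of_nonneg
            (fun d => mul_nonneg (hgnn i) (pow_nonneg hc0 d))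
            ((summable_geometric_of_lt_one hc0 hc1).mul_left (g i)),
          tsum_mul_left, tsum_geometric_of_lt_one hc0 hc1]
  rw [tsum_congr inner]
  rw [ENNReal.tsum_add]
  have part2 : (∑' i : ℕ, ENNReal.ofReal (g i * (1-c)⁻¹))
      = ENNReal.ofReal ((∑' i, g i) * (1-c)⁻¹) := by
    rw [← ENNReal.ofReal_tsum_of_nonneg (fun i => mul_nonneg (hgnn i) (by positivity))
        (hgsum.mul_right _), tsum_mul_right]
  have part1 : (∑' i : ℕ, ∑ j ∈ Finset.range i, ENNReal.ofReal (g j * c^(i-j)))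
      = ENNReal.ofReal ((∑' i, g i) * (c * (1-c)⁻¹)) := by
    have step1 : ∀ i : ℕ, (∑ j ∈ Finset.range i, ENNReal.ofReal (g j * c^(i-j)))
        = ∑' j : ℕ, (if j < i then ENNReal.ofReal (g j * c^(i-j)) else 0) := by
      intro i
      rw [tsum_eq_sum (s := Finset.range i) (fun j hj => by
        simp [Finset.mem_range] at hj; simp [hj, Nat.not_lt.mpr hj])]
      exact Finset.sum_congr rfl fun j hj => by simp [Finset.mem_range.mp hj]
    rw [tsum_congr step1, ENNReal.tsum_comm]
    have step2 : ∀ j : ℕ, (∑' i : ℕ, if j < i then ENNReal.ofReal (g j * c^(i-j)) else 0)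
        = ENNReal.ofReal (g j * (c * (1-c)⁻¹)) := by
      intro j
      have hinj : Function.Injective (fun d : ℕ => (j+1) + d) := fun a b hab => by simp only at hab; omega
      rw [← Function.Injective.tsum_eq hinj
        (f := fun i => if j < i then ENNReal.ofReal (g j * c^(i-j)) else 0)
        (by intro i hi; simp only [Function.mem_support] at hi
            rcases Nat.lt_or_ge j i with hlt | hge
            · exact ⟨i - (j+1), by simp only; omega⟩
            · simp [Nat.not_lt.mpr hge] at hi)]
      have : ∀ d : ℕ, (if j < (j+1)+d then ENNReal.ofReal (g j * c^((j+1)+d-j)) else 0)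
          = ENNReal.ofReal (g j * c^(d+1)) := by
        intro d
        rw [if_pos (by omega), show (j+1)+d-j = d+1 by omega]
      rw [tsum_congr this, ← ENNReal.ofReal_tsum_of_nonneg
            (fun d => mul_nonneg (hgnn j) (pow_nonneg hc0 _))
            ((geo_succ_summable hc0 hc1).mul_left (g j)),
          tsum_mul_left, geo_succ_sum hc0 hc1, div_eq_mul_inv]
    rw [tsum_congr step2, ← ENNReal.ofReal_tsum_of_nonneg
        (fun j => mul_nonneg (hgnn j) (by positivity)) (hgsum.mul_right _), tsum_mul_right]
  rw [part1, part2, ← ENNReal.ofReal_add (by positivity) (by positivity)]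
  congr 1
  field_simp
  ring

lemma integral_prod_range_of_iIndepFun {Ω : Type*} [MeasurableSpace Ω] (P : Measure Ω)
    [IsProbabilityMeasure P] (g : ℕ → Ω → ℝ)
    (hindep : iIndepFun g P)
    (hmeas : ∀ ℓ, Measurable (g ℓ)) (hnn : ∀ ℓ ω, 0 ≤ g ℓ ω) (n : ℕ) :
    ∫ ω, ∏ ℓ ∈ Finset.range n, g ℓ ω ∂P = ∏ ℓ ∈ Finset.range n, ∫ ω, g ℓ ω ∂P := by
  induction n with
  | zero => simp
  | succ n ih =>
    have hip : IndepFun (∏ ℓ ∈ Finset.range n, g ℓ) (g n) P :=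
      hindep.indepFun_prod_range_succ hmeas n
    have h1 : (0:Ω → ℝ) ≤ ∏ ℓ ∈ Finset.range n, g ℓ := fun ω => by
      simpa using Finset.prod_nonneg (s := Finset.range n) fun ℓ _ => hnn ℓ ω
    have hm1 : Measurable (∏ ℓ ∈ Finset.range n, g ℓ) := by
      have := Finset.measurable_prod (Finset.range n) (fun ℓ _ => hmeas ℓ)
      convert this using 1; funext ω; simp
    have := hip.integral_mul_eq_mul_integral hm1.aestronglyMeasurable (hmeas n).aestronglyMeasurable
    simp only [Finset.prod_range_succ, ← ih]
    have heq : ((∏ ℓ ∈ Finset.range n, g ℓ) * g n) = fun ω => (∏ ℓ ∈ Finset.range n, g ℓ ω) * g n ω := by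
      funext ω; simp
    have heq2 : (∏ ℓ ∈ Finset.range n, g ℓ) = fun ω => ∏ ℓ ∈ Finset.range n, g ℓ ω := by
      funext ω; simp
    rw [heq, heq2] at this
    exact this

/-- Mixed second moment of partial products of independent `[0,1]`-valued variables. -/
lemma integral_mul_prod_range_of_iIndepFun {Ω : Type*} [MeasurableSpace Ω] (P : Measure Ω)
    [IsProbabilityMeasure P] (h : ℕ → Ω → ℝ)
    (hindep : iIndepFun h P)
    (hmeas : ∀ ℓ, Measurable (h ℓ)) (hnn : ∀ ℓ ω, 0 ≤ h ℓ ω)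
    (i j : ℕ) (hij : i ≤ j) :
    ∫ ω, (∏ ℓ ∈ Finset.range (i+1), h ℓ ω) * ∏ ℓ ∈ Finset.range (j+1), h ℓ ω ∂P
      = (∏ ℓ ∈ Finset.range (i+1), ∫ ω, (h ℓ ω)^2 ∂P) *
        ∏ ℓ ∈ Finset.Ico (i+1) (j+1), ∫ ω, h ℓ ω ∂P := by
  set h' : ℕ → Ω → ℝ := fun ℓ ω => if ℓ ≤ i then (h ℓ ω)^2 else h ℓ ω with hh'
  have h'indep : iIndepFun h' P := by
    have := hindep.comp (fun ℓ (x : ℝ) => if ℓ ≤ i then x^2 else x)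
      (fun ℓ => by split_ifs <;> measurability)
    exact this
  have h'meas : ∀ ℓ, Measurable (h' ℓ) := fun ℓ => by
    simp only [h']; split_ifs <;> [exact (hmeas ℓ).pow_const 2; exact hmeas ℓ]
  have h'nn : ∀ ℓ ω, 0 ≤ h' ℓ ω := fun ℓ ω => by
    simp only [h']; split_ifs; exacts [sq_nonneg _, hnn ℓ ω]
  have key : ∀ ω, (∏ ℓ ∈ Finset.range (i+1), h ℓ ω) * ∏ ℓ ∈ Finset.range (j+1), h ℓ ω
      = ∏ ℓ ∈ Finset.range (j+1), h' ℓ ω := by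
    intro ω
    rw [← Finset.prod_range_mul_prod_Ico (fun ℓ => h ℓ ω) (Nat.succ_le_succ hij),
        ← Finset.prod_range_mul_prod_Ico (fun ℓ => h' ℓ ω) (Nat.succ_le_succ hij)]
    have e1 : ∏ ℓ ∈ Finset.range (i+1), h' ℓ ω = ∏ ℓ ∈ Finset.range (i+1), (h ℓ ω)^2 := by
      refine Finset.prod_congr rfl fun ℓ hℓ => ?_
      simp only [h', if_pos (Nat.lt_succ_iff.mp (Finset.mem_range.mp hℓ))]
    have e2 : ∏ ℓ ∈ Finset.Ico (i+1) (j+1), h' ℓ ω = ∏ ℓ ∈ Finset.Ico (i+1) (j+1), h ℓ ω := by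
      refine Finset.prod_congr rfl fun ℓ hℓ => ?_
      have : ¬ ℓ ≤ i := by have := (Finset.mem_Ico.mp hℓ).1; omega
      simp only [h', if_neg this]
    rw [e1, e2, ← mul_assoc]
    congr 1
    rw [← Finset.prod_mul_distrib]
    exact Finset.prod_congr rfl fun ℓ _ => (sq (h ℓ ω)).symm
  calc ∫ ω, (∏ ℓ ∈ Finset.range (i+1), h ℓ ω) * ∏ ℓ ∈ Finset.range (j+1), h ℓ ω ∂P
      = ∫ ω, ∏ ℓ ∈ Finset.range (j+1), h' ℓ ω ∂P := by
        congr 1; funext ω; exact key ω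
    _ = ∏ ℓ ∈ Finset.range (j+1), ∫ ω, h' ℓ ω ∂P :=
        integral_prod_range_of_iIndepFun P h' h'indep h'meas h'nn (j+1)
    _ = (∏ ℓ ∈ Finset.range (i+1), ∫ ω, (h ℓ ω)^2 ∂P) *
        ∏ ℓ ∈ Finset.Ico (i+1) (j+1), ∫ ω, h ℓ ω ∂P := by
        rw [← Finset.prod_range_mul_prod_Ico (fun ℓ => ∫ ω, h' ℓ ω ∂P) (Nat.succ_le_succ hij)]
        congr 1
        · refine Finset.prod_congr rfl fun ℓ hℓ => ?_
          simp only [h', if_pos (Nat.lt_succ_iff.mp (Finset.mem_range.mp hℓ))]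
        · refine Finset.prod_congr rfl fun ℓ hℓ => ?_
          have : ¬ ℓ ≤ i := by have := (Finset.mem_Ico.mp hℓ).1; omega
          simp only [h', if_neg this]

/-- Abstract variance computation for `1 + ∑' j, W j` with geometric-type moments. -/
lemma variance_one_add_tsum {Ω : Type*} [MeasurableSpace Ω] {P : Measure Ω}
    [IsProbabilityMeasure P] (W : ℕ → Ω → ℝ) (hWmeas : ∀ j, Measurable (W j))
    (hWnn : ∀ j ω, 0 ≤ W j ω) (hWle1 : ∀ j ω, W j ω ≤ 1)
    {c : ℝ} (hc0 : 0 ≤ c) (hc1 : c < 1)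
    (g : ℕ → ℝ) (hgnn : ∀ i, 0 ≤ g i) (hgle : ∀ i, g i ≤ c^(i+1))
    (hEW : ∀ j, ∫ ω, W j ω ∂P = c^(j+1))
    (hEWW : ∀ i j, ∫ ω, W i ω * W j ω ∂P = g (min i j) * c^(max i j - min i j)) :
    variance (fun ω => 1 + ∑' j : ℕ, W j ω) P
      = (1+c)/(1-c) * (∑' i, g i) - (c/(1-c))^2 := by
  have h1c : (0:ℝ) < 1 - c := by linarith
  have hWint : ∀ j, Integrable (W j) P := by
    intro j
    refine (integrable_const (1:ℝ)).mono' (hWmeas j).aestronglyMeasurable ?_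
    exact ae_of_all _ fun ω => by
      rw [Real.norm_eq_abs, abs_of_nonneg (hWnn j ω)]; exact hWle1 j ω
  have hWWint : ∀ i j, Integrable (fun ω => W i ω * W j ω) P := by
    intro i j
    refine (integrable_const (1:ℝ)).mono'
      ((hWmeas i).mul (hWmeas j)).aestronglyMeasurable ?_
    exact ae_of_all _ fun ω => by
      rw [Real.norm_eq_abs, abs_of_nonneg (mul_nonneg (hWnn i ω) (hWnn j ω))]
      exact mul_le_one₀ (hWle1 i ω) (hWnn j ω) (hWle1 j ω)
  have hFnn : 0 ≤ ∑' i, g i := tsum_nonneg hgnn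
  have hgsum : Summable g := Summable.of_nonneg_of_le hgnn hgle (geo_succ_summable hc0 hc1)
  -- ENNReal series
  have hSemeas : Measurable (fun ω => ∑' j : ℕ, ENNReal.ofReal (W j ω)) :=
    Measurable.ennreal_tsum fun j => (hWmeas j).ennreal_ofReal
  have hDemeas : Measurable (fun ω => ∑' q : ℕ × ℕ, ENNReal.ofReal (W q.1 ω * W q.2 ω)) :=
    Measurable.ennreal_tsum fun q => ((hWmeas q.1).mul (hWmeas q.2)).ennreal_ofReal
  have hL1 : ∫⁻ ω, (∑' j : ℕ, ENNReal.ofReal (W j ω)) ∂P = ENNReal.ofReal (c/(1-c)) := by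
    rw [lintegral_tsum fun j => ((hWmeas j).ennreal_ofReal).aemeasurable]
    have e : ∀ j : ℕ, ∫⁻ ω, ENNReal.ofReal (W j ω) ∂P = ENNReal.ofReal (c^(j+1)) := fun j => by
      rw [← ofReal_integral_eq_lintegral_ofReal (hWint j) (ae_of_all _ fun ω => hWnn j ω), hEW j]
    rw [tsum_congr e, ← ENNReal.ofReal_tsum_of_nonneg (fun j => pow_nonneg hc0 _)
      (geo_succ_summable hc0 hc1), geo_succ_sum hc0 hc1]
  have hL2 : ∫⁻ ω, (∑' q : ℕ × ℕ, ENNReal.ofReal (W q.1 ω * W q.2 ω)) ∂P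
      = ENNReal.ofReal ((1+c)/(1-c) * ∑' i, g i) := by
    rw [lintegral_tsum (f := fun (q : ℕ × ℕ) (ω : Ω) => ENNReal.ofReal (W q.1 ω * W q.2 ω))
      fun q => (((hWmeas q.1).mul (hWmeas q.2)).ennreal_ofReal).aemeasurable]
    have e : ∀ q : ℕ × ℕ, ∫⁻ ω, ENNReal.ofReal (W q.1 ω * W q.2 ω) ∂P
        = ENNReal.ofReal (g (min q.1 q.2) * c^(max q.1 q.2 - min q.1 q.2)) := fun q => by
      rw [← ofReal_integral_eq_lintegral_ofReal (hWWint q.1 q.2)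
        (ae_of_all _ fun ω => mul_nonneg (hWnn q.1 ω) (hWnn q.2 ω)), hEWW q.1 q.2]
    rw [tsum_congr e, double_series_eval hc0 hc1 g hgnn hgle]
  -- a.e. summability
  have hae : ∀ᵐ ω ∂P, Summable (fun j => W j ω) := by
    have hfin : ∀ᵐ ω ∂P, (∑' j : ℕ, ENNReal.ofReal (W j ω)) < ⊤ :=
      ae_lt_top hSemeas (by rw [hL1]; exact ENNReal.ofReal_ne_top)
    filter_upwards [hfin] with ω hω
    exact (ENNReal.summable_toReal hω.ne).congr fun j => ENNReal.toReal_ofReal (hWnn j ω)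
  have hSnn : ∀ ω, 0 ≤ ∑' j : ℕ, W j ω := fun ω => tsum_nonneg fun j => hWnn j ω
  have haeS : ∀ᵐ ω ∂P, ENNReal.ofReal (∑' j : ℕ, W j ω) = ∑' j : ℕ, ENNReal.ofReal (W j ω) := by
    filter_upwards [hae] with ω hω
    exact ENNReal.ofReal_tsum_of_nonneg (fun j => hWnn j ω) hω
  have hXnn : ∀ ω, 0 ≤ 1 + ∑' j : ℕ, W j ω := fun ω => by
    have := hSnn ω; linarith
  have hXae : (fun ω => 1 + ∑' j : ℕ, W j ω)
      =ᵐ[P] fun ω => 1 + (∑' j : ℕ, ENNReal.ofReal (W j ω)).toReal := by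
    filter_upwards [haeS] with ω hω
    rw [← hω, ENNReal.toReal_ofReal (hSnn ω)]
  have hXaesm : AEStronglyMeasurable (fun ω => 1 + ∑' j : ℕ, W j ω) P :=
    ((measurable_const.add hSemeas.ennreal_toReal).aestronglyMeasurable).congr hXae.symm
  -- the square identity
  have hsq : ∀ᵐ ω ∂P, ENNReal.ofReal ((1 + ∑' j : ℕ, W j ω) ^ 2)
      = 1 + 2 * (∑' j : ℕ, ENNReal.ofReal (W j ω))
          + ∑' q : ℕ × ℕ, ENNReal.ofReal (W q.1 ω * W q.2 ω) := by
    filter_upwards [hae, haeS] with ω hω hωS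
    have hnorm : Summable fun j => ‖W j ω‖ :=
      hω.congr fun j => (Real.norm_of_nonneg (hWnn j ω)).symm
    have hprod : Summable fun q : ℕ × ℕ => W q.1 ω * W q.2 ω :=
      summable_mul_of_summable_norm (f := fun j => W j ω) (g := fun j => W j ω) hnorm hnorm
    have hS2 : (∑' j : ℕ, W j ω) ^ 2 = ∑' q : ℕ × ℕ, W q.1 ω * W q.2 ω := by
      rw [sq]; exact Summable.tsum_mul_tsum hω hω hprod
    have e1 : (1 + ∑' j : ℕ, W j ω) ^ 2
        = 1 + (2 * (∑' j : ℕ, W j ω) + (∑' j : ℕ, W j ω) ^ 2) := by ring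
    rw [e1, ENNReal.ofReal_add (by norm_num)
          (add_nonneg (mul_nonneg (by norm_num) (hSnn ω)) (sq_nonneg _)),
        ENNReal.ofReal_add (mul_nonneg (by norm_num) (hSnn ω)) (sq_nonneg _),
        ENNReal.ofReal_mul (by norm_num : (0:ℝ) ≤ 2), hS2,
        ENNReal.ofReal_tsum_of_nonneg (fun q => mul_nonneg (hWnn _ ω) (hWnn _ ω)) hprod,
        hωS]
    simp only [ENNReal.ofReal_one, ENNReal.ofReal_ofNat]
    ring
  -- lintegral of the square
  have hlintsq : ∫⁻ ω, ENNReal.ofReal ((1 + ∑' j : ℕ, W j ω) ^ 2) ∂P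
      = 1 + 2 * ENNReal.ofReal (c/(1-c)) + ENNReal.ofReal ((1+c)/(1-c) * ∑' i, g i) := by
    rw [lintegral_congr_ae hsq]
    rw [lintegral_add_right _ hDemeas, lintegral_add_right _ (hSemeas.const_mul 2),
        lintegral_const, lintegral_const_mul 2 hSemeas, hL1, hL2]
    simp [measure_univ]
  -- L² membership
  have hIntSq : Integrable (fun ω => (1 + ∑' j : ℕ, W j ω) ^ 2) P := by
    constructor
    · exact (hXaesm.mul hXaesm).congr (ae_of_all _ fun ω => (sq _).symm)
    · rw [hasFiniteIntegral_iff_ofReal (ae_of_all _ fun ω => sq_nonneg _), hlintsq]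
      refine ENNReal.add_lt_top.mpr ⟨ENNReal.add_lt_top.mpr ⟨ENNReal.one_lt_top, ?_⟩, ?_⟩
      · exact ENNReal.mul_lt_top ENNReal.ofNat_lt_top ENNReal.ofReal_lt_top
      · exact ENNReal.ofReal_lt_top
  have hmem : MemLp (fun ω => 1 + ∑' j : ℕ, W j ω) 2 P :=
    (memLp_two_iff_integrable_sq hXaesm).mpr hIntSq
  -- first moment
  have hSint : Integrable (fun ω => ∑' j : ℕ, W j ω) P := by
    constructor
    · exact (hSemeas.ennreal_toReal.aestronglyMeasurable).congr
        (by filter_upwards [haeS] with ω hω; rw [← hω, ENNReal.toReal_ofReal (hSnn ω)])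
    · rw [hasFiniteIntegral_iff_ofReal (ae_of_all _ hSnn), lintegral_congr_ae haeS, hL1]
      exact ENNReal.ofReal_lt_top
  have hES : ∫ ω, (∑' j : ℕ, W j ω) ∂P = c/(1-c) := by
    rw [integral_eq_lintegral_of_nonneg_ae (ae_of_all _ hSnn) hSint.1,
        lintegral_congr_ae haeS, hL1, ENNReal.toReal_ofReal (div_nonneg hc0 h1c.le)]
  have hEX : ∫ ω, (1 + ∑' j : ℕ, W j ω) ∂P = 1 + c/(1-c) := by
    rw [integral_add (integrable_const 1) hSint, integral_const]
    simp [measure_univ, hES]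
  have hEX2 : ∫ ω, (1 + ∑' j : ℕ, W j ω) ^ 2 ∂P
      = 1 + 2*(c/(1-c)) + (1+c)/(1-c) * ∑' i, g i := by
    rw [integral_eq_lintegral_of_nonneg_ae (ae_of_all _ fun ω => sq_nonneg _) hIntSq.1,
        hlintsq]
    have hd : (0:ℝ) ≤ c/(1-c) := div_nonneg hc0 h1c.le
    have hm : (0:ℝ) ≤ (1+c)/(1-c) * ∑' i, g i :=
      mul_nonneg (div_nonneg (by linarith) h1c.le) hFnn
    rw [ENNReal.toReal_add, ENNReal.toReal_add]
    · rw [ENNReal.toReal_ofReal hm, ENNReal.toReal_mul, ENNReal.toReal_ofReal hd]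
      simp
      try ring
    · exact ENNReal.one_ne_top
    · exact ENNReal.mul_ne_top (by simp) ENNReal.ofReal_ne_top
    · exact (ENNReal.add_lt_top.mpr ⟨ENNReal.one_lt_top,
        ENNReal.mul_lt_top ENNReal.ofNat_lt_top ENNReal.ofReal_lt_top⟩).ne
    · exact ENNReal.ofReal_ne_top
  -- conclude
  rw [variance_eq_sub hmem]
  have e2 : P[(fun ω => 1 + ∑' j : ℕ, W j ω) ^ 2] = ∫ ω, (1 + ∑' j : ℕ, W j ω) ^ 2 ∂P := rfl
  have e3 : P[fun ω => 1 + ∑' j : ℕ, W j ω] = ∫ ω, (1 + ∑' j : ℕ, W j ω) ∂P := rfl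
  rw [e2, e3, hEX2, hEX]
  ring

/-- Variance of the Rao–Blackwell-type estimator built from an independent `[0,1]`-valued
sequence with first moments `c` and second moments `m2 ℓ`. -/
lemma rb_core {Ω : Type*} [MeasurableSpace Ω] {P : Measure Ω} [IsProbabilityMeasure P]
    (h : ℕ → Ω → ℝ) (hindep : iIndepFun h P)
    (hmeas : ∀ ℓ, Measurable (h ℓ))
    (h0 : ∀ ℓ ω, 0 ≤ h ℓ ω) (h1 : ∀ ℓ ω, h ℓ ω ≤ 1)
    {c : ℝ} (hc0 : 0 ≤ c) (hc1 : c < 1) (hE : ∀ ℓ, ∫ ω, h ℓ ω ∂P = c)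
    (m2 : ℕ → ℝ) (hE2 : ∀ ℓ, ∫ ω, (h ℓ ω)^2 ∂P = m2 ℓ) :
    variance (fun ω => 1 + ∑' j : ℕ, ∏ ℓ ∈ Finset.range (j+1), h ℓ ω) P
      = (1+c)/(1-c) * (∑' i : ℕ, ∏ ℓ ∈ Finset.range (i+1), m2 ℓ) - (c/(1-c))^2 := by
  have hintsq : ∀ ℓ, Integrable (fun ω => (h ℓ ω)^2) P := by
    intro ℓ
    refine (integrable_const (1:ℝ)).mono' ((hmeas ℓ).pow_const 2).aestronglyMeasurable ?_
    refine ae_of_all _ fun ω => ?_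
    rw [Real.norm_eq_abs, abs_of_nonneg (sq_nonneg _)]
    calc (h ℓ ω)^2 ≤ 1^2 := by gcongr; exacts [h0 ℓ ω, h1 ℓ ω]
      _ = 1 := one_pow 2
  have hinth : ∀ ℓ, Integrable (h ℓ) P := by
    intro ℓ
    refine (integrable_const (1:ℝ)).mono' (hmeas ℓ).aestronglyMeasurable ?_
    exact ae_of_all _ fun ω => by
      rw [Real.norm_eq_abs, abs_of_nonneg (h0 ℓ ω)]; exact h1 ℓ ω
  have hm2nn : ∀ ℓ, 0 ≤ m2 ℓ := by
    intro ℓ; rw [← hE2 ℓ]; exact integral_nonneg fun ω => sq_nonneg _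
  have hm2le : ∀ ℓ, m2 ℓ ≤ c := by
    intro ℓ; rw [← hE2 ℓ, ← hE ℓ]
    refine integral_mono (hintsq ℓ) (hinth ℓ) fun ω => ?_
    calc (h ℓ ω)^2 = h ℓ ω * h ℓ ω := sq (h ℓ ω)
      _ ≤ 1 * h ℓ ω := by gcongr; exacts [h0 ℓ ω, h1 ℓ ω]
      _ = h ℓ ω := one_mul _
  refine variance_one_add_tsum _ ?_ ?_ ?_ hc0 hc1 _ ?_ ?_ ?_ ?_
  · exact fun j => Finset.measurable_prod _ (fun ℓ _ => hmeas ℓ)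
  · exact fun j ω => Finset.prod_nonneg fun ℓ _ => h0 ℓ ω
  · exact fun j ω => Finset.prod_le_one (fun ℓ _ => h0 ℓ ω) (fun ℓ _ => h1 ℓ ω)
  · exact fun i => Finset.prod_nonneg fun ℓ _ => hm2nn ℓ
  · intro i
    calc (∏ ℓ ∈ Finset.range (i+1), m2 ℓ) ≤ ∏ ℓ ∈ Finset.range (i+1), c :=
          Finset.prod_le_prod (fun ℓ _ => hm2nn ℓ) (fun ℓ _ => hm2le ℓ)
      _ = c^(i+1) := by rw [Finset.prod_const, Finset.card_range]
  · intro j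
    rw [integral_prod_range_of_iIndepFun P h hindep hmeas h0 (j+1),
        Finset.prod_congr rfl fun ℓ _ => hE ℓ, Finset.prod_const, Finset.card_range]
  · have key : ∀ i j, i ≤ j →
        ∫ ω, (∏ ℓ ∈ Finset.range (i+1), h ℓ ω) * ∏ ℓ ∈ Finset.range (j+1), h ℓ ω ∂P
          = (∏ ℓ ∈ Finset.range (i+1), m2 ℓ) * c^(j-i) := by
      intro i j hij
      rw [integral_mul_prod_range_of_iIndepFun P h hindep hmeas h0 i j hij]
      congr 1
      · exact Finset.prod_congr rfl fun ℓ _ => hE2 ℓ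
      · rw [Finset.prod_congr rfl fun ℓ _ => hE ℓ, Finset.prod_const, Nat.card_Ico]
        congr 1; omega
    intro i j
    rcases le_total i j with hij | hji
    · rw [min_eq_left hij, max_eq_right hij]; exact key i j hij
    · rw [min_eq_right hji, max_eq_left hji]
      rw [show (fun ω => (∏ ℓ ∈ Finset.range (i+1), h ℓ ω) * ∏ ℓ ∈ Finset.range (j+1), h ℓ ω)
            = fun ω => (∏ ℓ ∈ Finset.range (j+1), h ℓ ω) * ∏ ℓ ∈ Finset.range (i+1), h ℓ ω
          from funext fun ω => mul_comm _ _]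
      exact key j i hji

lemma rbTerm_eq_prod {X : Type*} (a : X → ℝ) (Y : ℕ → X) (U : ℕ → ℝ) (k j : ℕ) :
    rbTerm a Y U k j = ∏ ℓ ∈ Finset.range (j + 1),
      (if ℓ < k then 1 - a (Y ℓ) else if a (Y ℓ) ≤ U ℓ then (1:ℝ) else 0) := by
  rw [rbTerm]
  rcases le_or_gt k (j+1) with hk | hk
  · rw [min_eq_left hk,
      ← Finset.prod_range_mul_prod_Ico
        (fun ℓ => if ℓ < k then 1 - a (Y ℓ) else if a (Y ℓ) ≤ U ℓ then (1:ℝ) else 0) hk]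
    congr 1
    · exact Finset.prod_congr rfl fun ℓ hℓ =>
        (if_pos (Finset.mem_range.mp hℓ)).symm
    · exact Finset.prod_congr rfl fun ℓ hℓ =>
        (if_neg (by have := (Finset.mem_Ico.mp hℓ).1; omega)).symm
  · rw [min_eq_right hk.le, Finset.Ico_eq_empty (by omega), Finset.prod_empty, mul_one]
    exact Finset.prod_congr rfl fun ℓ hℓ =>
      (if_pos (by have := Finset.mem_range.mp hℓ; omega)).symm

lemma integral_indicator_Ioo (t : ℝ) (ht0 : 0 ≤ t) (ht1 : t ≤ 1) :
    ∫ u, (if t ≤ u then (1:ℝ) else 0) ∂(volume.restrict (Set.Ioo (0:ℝ) 1)) = 1 - t := by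
  have h1 : (fun u : ℝ => if t ≤ u then (1:ℝ) else 0)
      = (Set.Ici t).indicator (fun _ => (1:ℝ)) := by
    funext u; by_cases h : t ≤ u <;> simp [Set.indicator, h]
  rw [h1, integral_indicator_const (1:ℝ) measurableSet_Ici,
      measureReal_def, Measure.restrict_apply measurableSet_Ici]
  have hle : volume (Set.Ici t ∩ Set.Ioo (0:ℝ) 1) ≤ ENNReal.ofReal (1 - t) := by
    rw [← Real.volume_Ico (a := t) (b := 1)]
    refine measure_mono fun u hu => ?_
    exact ⟨hu.1, hu.2.2⟩
  have hge : ENNReal.ofReal (1 - t) ≤ volume (Set.Ici t ∩ Set.Ioo (0:ℝ) 1) := by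
    rw [← Real.volume_Ioo (a := t) (b := 1)]
    refine measure_mono fun u hu => ?_
    exact ⟨hu.1.le, lt_of_le_of_lt ht0 hu.1, hu.2⟩
  rw [le_antisymm hle hge, ENNReal.toReal_ofReal (by linarith)]
  simp

lemma integrable_of_bounded01 {α : Type*} [MeasurableSpace α] {Q : Measure α}
    [IsFiniteMeasure Q] {f : α → ℝ} (hf : Measurable f)
    (h0 : ∀ v, 0 ≤ f v) (h1 : ∀ v, f v ≤ 1) : Integrable f Q := by
  refine (integrable_const (1:ℝ)).mono' hf.aestronglyMeasurable ?_
  exact ae_of_all _ fun v => by rw [Real.norm_eq_abs, abs_of_nonneg (h0 v)]; exact h1 v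

/-- Fix `z` with `p(z) > 0`, and let `(y_ℓ, u_ℓ)_{ℓ ≥ 1}` be i.i.d. with
`y_ℓ` of density `q(·|z)` and `u_ℓ` uniform on `(0,1)`, independent.  Then `ξ̂⁰` equals the
geometric variable `n = 1 + ∑_{j ≥ 1} ∏_{ℓ ≤ j} 1{u_ℓ ≥ α(z,y_ℓ)}`, and for every `k ≥ 1`
the variances satisfy `Var(ξ̂) ≤ Var(ξ̂ᵏ) ≤ Var(ξ̂⁰) = (1 − p(z))/p(z)²`, where
`ξ̂ = 1 + ∑_{j ≥ 1} ∏_{ℓ ≤ j} (1 − α(z,y_ℓ))`. -/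
theorem vanillaRB_variance_sandwich
    {X : Type*} [MeasurableSpace X] (ν : Measure X) [SigmaFinite ν]
    (pi : X → ℝ) (qq : X → X → ℝ)
    (hpi : Measurable pi) (hqq : Measurable (Function.uncurry qq))
    (hpi0 : ∀ x, 0 ≤ pi x) (hqq0 : ∀ x y, 0 ≤ qq x y)
    (z : X)
    [IsProbabilityMeasure (ν.withDensity fun y => ENNReal.ofReal (qq z y))]
    (p : ℝ) (hp : p = ∫ y, mhAlpha pi qq z y * qq z y ∂ν) (hppos : 0 < p)
    (r : ℝ) (hr : r = ∫ y, (mhAlpha pi qq z y) ^ 2 * qq z y ∂ν)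
    {Ω : Type*} [MeasurableSpace Ω] (P : Measure Ω) [IsProbabilityMeasure P]
    (Y : ℕ → Ω → X) (U : ℕ → Ω → ℝ)
    (hmeas : ∀ ℓ, Measurable fun ω => (Y ℓ ω, U ℓ ω))
    (hindep : iIndepFun (fun ℓ ω => (Y ℓ ω, U ℓ ω)) P)
    (hlaw : ∀ ℓ, P.map (fun ω => (Y ℓ ω, U ℓ ω)) =
      (ν.withDensity fun y => ENNReal.ofReal (qq z y)).prod
        (volume.restrict (Set.Ioo (0:ℝ) 1))) :
    (∀ ω, 1 + (∑' j : ℕ, rbTerm (mhAlpha pi qq z) (fun ℓ => Y ℓ ω) (fun ℓ => U ℓ ω) 0 j) =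
        1 + ∑' j : ℕ, ∏ ℓ ∈ Finset.range (j + 1),
          (if mhAlpha pi qq z (Y ℓ ω) ≤ U ℓ ω then (1 : ℝ) else 0)) ∧
      ∀ k : ℕ, 1 ≤ k →
        variance (fun ω => 1 + ∑' j : ℕ, ∏ ℓ ∈ Finset.range (j + 1),
              (1 - mhAlpha pi qq z (Y ℓ ω))) P ≤
            variance (fun ω => 1 + ∑' j : ℕ,
              rbTerm (mhAlpha pi qq z) (fun ℓ => Y ℓ ω) (fun ℓ => U ℓ ω) k j) P ∧
          variance (fun ω => 1 + ∑' j : ℕ,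
              rbTerm (mhAlpha pi qq z) (fun ℓ => Y ℓ ω) (fun ℓ => U ℓ ω) k j) P ≤
            variance (fun ω => 1 + ∑' j : ℕ,
              rbTerm (mhAlpha pi qq z) (fun ℓ => Y ℓ ω) (fun ℓ => U ℓ ω) 0 j) P ∧
          variance (fun ω => 1 + ∑' j : ℕ,
              rbTerm (mhAlpha pi qq z) (fun ℓ => Y ℓ ω) (fun ℓ => U ℓ ω) 0 j) P =
            (1 - p) / p ^ 2 := by
  classical
  set a : X → ℝ := mhAlpha pi qq z with ha
  -- part 1
  have part1 : ∀ ω, 1 + (∑' j : ℕ, rbTerm a (fun ℓ => Y ℓ ω) (fun ℓ => U ℓ ω) 0 j) =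
      1 + ∑' j : ℕ, ∏ ℓ ∈ Finset.range (j + 1),
        (if a (Y ℓ ω) ≤ U ℓ ω then (1 : ℝ) else 0) := by
    intro ω
    congr 1
    refine tsum_congr fun j => ?_
    rw [rbTerm_eq_prod]
    exact Finset.prod_congr rfl fun ℓ _ => by rw [if_neg (Nat.not_lt_zero ℓ)]
  refine ⟨part1, ?_⟩
  -- measurability and bounds for `a`
  have hqz : Measurable fun y => qq z y := hqq.comp (measurable_const.prodMk measurable_id)
  have hqz' : Measurable fun y => qq y z := hqq.comp (measurable_id.prodMk measurable_const)
  have hameas : Measurable a := by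
    rw [ha]; unfold mhAlpha
    exact measurable_const.min ((hpi.mul hqz').div (measurable_const.mul hqz))
  have ha0 : ∀ y, 0 ≤ a y := fun y => by
    rw [ha]; unfold mhAlpha
    exact le_min zero_le_one (div_nonneg (mul_nonneg (hpi0 y) (hqq0 y z))
      (mul_nonneg (hpi0 z) (hqq0 z y)))
  have ha1 : ∀ y, a y ≤ 1 := fun y => by rw [ha]; unfold mhAlpha; exact min_le_left _ _
  set μ : Measure X := ν.withDensity fun y => ENNReal.ofReal (qq z y) with hμ
  set lam : Measure ℝ := volume.restrict (Set.Ioo (0:ℝ) 1) with hlam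
  haveI : IsProbabilityMeasure lam := by
    constructor
    rw [hlam, Measure.restrict_apply_univ]
    simp [Real.volume_Ioo]
  -- `p` as an integral over μ
  have hint_a : Integrable a μ := integrable_of_bounded01 hameas ha0 ha1
  have hpa : ∫ y, a y ∂μ = p := by
    have step : ∫ y, a y ∂μ = ∫ y, (qq z y).toNNReal • a y ∂ν :=
      integral_withDensity_eq_integral_smul
        (f := fun y => (qq z y).toNNReal) (hqz.real_toNNReal) a
    rw [step, hp]
    refine integral_congr_ae (ae_of_all _ fun y => ?_)
    show ((qq z y).toNNReal : ℝ) * a y = a y * qq z y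
    rw [Real.coe_toNNReal _ (hqq0 z y), mul_comm]
  have hp1 : p ≤ 1 := by
    rw [← hpa]
    calc ∫ y, a y ∂μ ≤ ∫ _, (1:ℝ) ∂μ :=
          integral_mono hint_a (integrable_const 1) ha1
      _ = 1 := by simp
  have hc0 : (0:ℝ) ≤ 1 - p := by linarith
  have hc1 : 1 - p < 1 := by linarith
  -- μ-integrals
  have hint_1a : Integrable (fun y => 1 - a y) μ :=
    integrable_of_bounded01 (measurable_const.sub hameas)
      (fun y => by have := ha1 y; linarith) (fun y => by have := ha0 y; linarith)
  have hI1μ : ∫ y, (1 - a y) ∂μ = 1 - p := by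
    rw [integral_sub (integrable_const 1) hint_a, hpa]; simp
  set m : ℝ := ∫ y, (1 - a y)^2 ∂μ with hm
  have hint_sqa : Integrable (fun y => (1 - a y)^2) μ :=
    integrable_of_bounded01 ((measurable_const.sub hameas).pow_const 2)
      (fun y => sq_nonneg _) (fun y => by
        have h0 := ha0 y; have h1 := ha1 y; nlinarith)
  have hmle : m ≤ 1 - p := by
    rw [hm, ← hI1μ]
    refine integral_mono hint_sqa hint_1a fun y => ?_
    have h0 := ha0 y; have h1 := ha1 y; nlinarith
  have hm0 : 0 ≤ m := integral_nonneg fun y => sq_nonneg _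
  -- transport of integrals from P to μ.prod lam
  have key : ∀ (f : X × ℝ → ℝ), Measurable f → ∀ ℓ,
      ∫ ω, f (Y ℓ ω, U ℓ ω) ∂P = ∫ v, f v ∂(μ.prod lam) := by
    intro f hf ℓ
    have h := integral_map (φ := fun ω => (Y ℓ ω, U ℓ ω)) (μ := P)
      (hmeas ℓ).aemeasurable hf.aestronglyMeasurable
    rw [hlaw ℓ] at h
    exact h.symm
  have fst_int : ∀ (g : X → ℝ), Measurable g →
      ∫ v : X × ℝ, g v.1 ∂(μ.prod lam) = ∫ y, g y ∂μ := by
    intro g hg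
    have h := integral_map (φ := (Prod.fst : X × ℝ → X)) (μ := μ.prod lam)
      measurable_fst.aemeasurable hg.aestronglyMeasurable
    rw [Measure.map_fst_prod] at h
    simpa [measure_univ] using h.symm
  -- the three one-coordinate expectations
  have hI1 : ∀ ℓ, ∫ ω, (1 - a (Y ℓ ω)) ∂P = 1 - p := by
    intro ℓ
    have := key (fun v => 1 - a v.1) (measurable_const.sub (hameas.comp measurable_fst)) ℓ
    rw [this, fst_int (fun y => 1 - a y) (measurable_const.sub hameas), hI1μ]
  have hI2 : ∀ ℓ, ∫ ω, (1 - a (Y ℓ ω))^2 ∂P = m := by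
    intro ℓ
    have := key (fun v => (1 - a v.1)^2)
      ((measurable_const.sub (hameas.comp measurable_fst)).pow_const 2) ℓ
    rw [this, fst_int (fun y => (1 - a y)^2) ((measurable_const.sub hameas).pow_const 2), hm]
  have hindmeas : Measurable (fun v : X × ℝ => if a v.1 ≤ v.2 then (1:ℝ) else 0) :=
    Measurable.ite (measurableSet_le (hameas.comp measurable_fst) measurable_snd)
      measurable_const measurable_const
  have hI3 : ∀ ℓ, ∫ ω, (if a (Y ℓ ω) ≤ U ℓ ω then (1:ℝ) else 0) ∂P = 1 - p := by
    intro ℓ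
    have := key (fun v => if a v.1 ≤ v.2 then (1:ℝ) else 0) hindmeas ℓ
    rw [this]
    rw [integral_prod _ (integrable_of_bounded01 hindmeas
      (fun v => by positivity) (fun v => by split_ifs <;> norm_num))]
    have inner : ∀ y : X, ∫ u, (if a y ≤ u then (1:ℝ) else 0) ∂lam = 1 - a y := fun y => by
      rw [hlam]; exact integral_indicator_Ioo (a y) (ha0 y) (ha1 y)
    rw [integral_congr_ae (ae_of_all _ inner), hI1μ]
  -- independence of the composed families
  have hindA : iIndepFun (fun ℓ ω => 1 - a (Y ℓ ω)) P := by
    exact hindep.comp (fun ℓ (v : X × ℝ) => 1 - a v.1)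
      (fun ℓ => measurable_const.sub (hameas.comp measurable_fst))
  have hindK : ∀ k : ℕ, iIndepFun
      (fun ℓ ω => if ℓ < k then 1 - a (Y ℓ ω)
        else if a (Y ℓ ω) ≤ U ℓ ω then (1:ℝ) else 0) P := by
    intro k
    exact hindep.comp (fun ℓ (v : X × ℝ) => if ℓ < k then 1 - a v.1
        else if a v.1 ≤ v.2 then (1:ℝ) else 0)
      (fun ℓ => by
        split_ifs with h
        · exact measurable_const.sub (hameas.comp measurable_fst)
        · exact hindmeas)
  -- variance of the fully Rao–Blackwellised estimator ξ̂
  have hvarInf : variance (fun ω => 1 + ∑' j : ℕ, ∏ ℓ ∈ Finset.range (j+1),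
        (1 - a (Y ℓ ω))) P
      = (1+(1-p))/(1-(1-p)) * (∑' i : ℕ, ∏ ℓ ∈ Finset.range (i+1), (fun _ : ℕ => m) ℓ)
        - ((1-p)/(1-(1-p)))^2 := by
    refine rb_core (fun ℓ ω => 1 - a (Y ℓ ω)) hindA
      (fun ℓ => measurable_const.sub
        (hameas.comp (measurable_fst.comp (hmeas ℓ))))
      (fun ℓ ω => by have := ha1 (Y ℓ ω); linarith)
      (fun ℓ ω => by have := ha0 (Y ℓ ω); linarith)
      hc0 hc1 hI1 (fun _ => m) hI2
  -- variance of the truncated estimator ξ̂ᵏ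
  have hvarK : ∀ k : ℕ, variance (fun ω => 1 + ∑' j : ℕ,
        rbTerm a (fun ℓ => Y ℓ ω) (fun ℓ => U ℓ ω) k j) P
      = (1+(1-p))/(1-(1-p)) * (∑' i : ℕ, ∏ ℓ ∈ Finset.range (i+1),
          (fun ℓ => if ℓ < k then m else 1 - p) ℓ) - ((1-p)/(1-(1-p)))^2 := by
    intro k
    have hrw : (fun ω => 1 + ∑' j : ℕ, rbTerm a (fun ℓ => Y ℓ ω) (fun ℓ => U ℓ ω) k j)
        = fun ω => 1 + ∑' j : ℕ, ∏ ℓ ∈ Finset.range (j+1),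
            (if ℓ < k then 1 - a (Y ℓ ω) else if a (Y ℓ ω) ≤ U ℓ ω then (1:ℝ) else 0) := by
      funext ω; congr 1; exact tsum_congr fun j => rbTerm_eq_prod a _ _ k j
    rw [hrw]
    refine rb_core _ (hindK k) ?_ ?_ ?_ hc0 hc1 ?_ _ ?_
    · intro ℓ
      by_cases hℓ : ℓ < k
      · simp only [if_pos hℓ]
        exact measurable_const.sub (hameas.comp (measurable_fst.comp (hmeas ℓ)))
      · simp only [if_neg hℓ]
        exact hindmeas.comp (hmeas ℓ)
    · intro ℓ ω
      split_ifs with h1' h2'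
      · have := ha1 (Y ℓ ω); linarith
      · norm_num
      · norm_num
    · intro ℓ ω
      split_ifs with h1' h2'
      · have := ha0 (Y ℓ ω); linarith
      · norm_num
      · norm_num
    · intro ℓ
      by_cases hℓ : ℓ < k
      · simp only [if_pos hℓ]; exact hI1 ℓ
      · simp only [if_neg hℓ]; exact hI3 ℓ
    · intro ℓ
      by_cases hℓ : ℓ < k
      · simp only [if_pos hℓ]; exact hI2 ℓ
      · simp only [if_neg hℓ]
        have hsq : (fun ω => (if a (Y ℓ ω) ≤ U ℓ ω then (1:ℝ) else 0)^2)
            = fun ω => (if a (Y ℓ ω) ≤ U ℓ ω then (1:ℝ) else 0) := by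
          funext ω; split_ifs <;> norm_num
        calc ∫ ω, (if a (Y ℓ ω) ≤ U ℓ ω then (1:ℝ) else 0)^2 ∂P
            = ∫ ω, (if a (Y ℓ ω) ≤ U ℓ ω then (1:ℝ) else 0) ∂P := by rw [hsq]
          _ = 1 - p := hI3 ℓ
  -- numeric comparisons
  have hconst_nn : (0:ℝ) ≤ (1+(1-p))/(1-(1-p)) :=
    div_nonneg (by linarith) (by linarith)
  have hgKnn : ∀ k i, (0:ℝ) ≤ ∏ ℓ ∈ Finset.range (i+1), (if ℓ < k then m else 1 - p) :=
    fun k i => Finset.prod_nonneg fun ℓ _ => by split_ifs; exacts [hm0, hc0]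
  have hgKle : ∀ k i, (∏ ℓ ∈ Finset.range (i+1), (if ℓ < k then m else 1 - p))
      ≤ (1-p)^(i+1) := by
    intro k i
    calc (∏ ℓ ∈ Finset.range (i+1), (if ℓ < k then m else 1 - p))
        ≤ ∏ ℓ ∈ Finset.range (i+1), (1 - p) :=
          Finset.prod_le_prod (fun ℓ _ => by split_ifs; exacts [hm0, hc0])
            (fun ℓ _ => by split_ifs; exacts [hmle, le_rfl])
      _ = (1-p)^(i+1) := by rw [Finset.prod_const, Finset.card_range]
  have hsumK : ∀ k, Summable (fun i : ℕ => ∏ ℓ ∈ Finset.range (i+1),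
      (if ℓ < k then m else 1 - p)) := fun k =>
    Summable.of_nonneg_of_le (hgKnn k) (hgKle k) (geo_succ_summable hc0 hc1)
  have hgInfnn : ∀ i, (0:ℝ) ≤ ∏ ℓ ∈ Finset.range (i+1), (fun _ : ℕ => m) ℓ :=
    fun i => Finset.prod_nonneg fun ℓ _ => hm0
  have hgInfle : ∀ k i, (∏ ℓ ∈ Finset.range (i+1), (fun _ : ℕ => m) ℓ)
      ≤ ∏ ℓ ∈ Finset.range (i+1), (if ℓ < k then m else 1 - p) := by
    intro k i
    refine Finset.prod_le_prod (fun ℓ _ => hm0) (fun ℓ _ => ?_)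
    split_ifs; exacts [le_rfl, hmle]
  have hsumInf : Summable (fun i : ℕ => ∏ ℓ ∈ Finset.range (i+1), (fun _ : ℕ => m) ℓ) :=
    Summable.of_nonneg_of_le hgInfnn
      (fun i => le_trans (hgInfle 0 i) (hgKle 0 i)) (geo_succ_summable hc0 hc1)
  have hG0 : ∀ i, (∏ ℓ ∈ Finset.range (i+1), (fun ℓ => if ℓ < 0 then m else 1 - p) ℓ)
      = (1-p)^(i+1) := by
    intro i
    rw [Finset.prod_congr rfl (fun ℓ _ => if_neg (Nat.not_lt_zero ℓ)),
        Finset.prod_const, Finset.card_range]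
  have hF0 : (∑' i : ℕ, ∏ ℓ ∈ Finset.range (i+1),
      (fun ℓ => if ℓ < 0 then m else 1 - p) ℓ) = (1-p)/(1-(1-p)) := by
    rw [tsum_congr hG0, geo_succ_sum hc0 hc1]
  intro k _
  refine ⟨?_, ?_, ?_⟩
  · rw [hvarInf, hvarK k]
    refine sub_le_sub_right (mul_le_mul_of_nonneg_left ?_ hconst_nn) _
    exact Summable.tsum_le_tsum (hgInfle k) hsumInf (hsumK k)
  · rw [hvarK k, hvarK 0]
    refine sub_le_sub_right (mul_le_mul_of_nonneg_left ?_ hconst_nn) _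
    refine Summable.tsum_le_tsum (fun i => ?_) (hsumK k) (hsumK 0)
    rw [hG0 i]
    exact hgKle k i
  · rw [hvarK 0, hF0]
    have hq : 1 - (1 - p) = p := by ring
    rw [hq]
    have hpne : p ≠ 0 := ne_of_gt hppos
    field_simp
    ring
end

section
/- Fix z ∈ 𝒳 with p(z) > 0, let (y_ℓ)_{ℓ≥1} be i.i.d. random variables with density q(·|z) and (u_ℓ)_{ℓ≥1} be i.i.d. uniform random variables on (0,1), independent of (y_ℓ). For k ≥ 0 define ξ̂^k = 1 + Σ_{j=1}^∞ [Π_{1≤ℓ≤min(k,j)} (1 − α(z,y_ℓ))]·[Π_{k+1≤ℓ≤j} 1{u_ℓ ≥ α(z,y_ℓ)}]. Then, writing p = p(z) and r = r(z), for every integer k ≥ 0 the one-step variance decrement satisfies Var(ξ̂^k) − Var(ξ̂^{k+1}) = (1 − 2p + r)^k · [(2 − p)/p²] · (p − r). -/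
open MeasureTheory ProbabilityTheory Filter Set

open scoped ENNReal

lemma real_tsum_eq_toReal {ι : Type*} (f : ι → ℝ) (hf : ∀ i, 0 ≤ f i) :
    ∑' i, f i = (∑' i, ENNReal.ofReal (f i)).toReal := by
  by_cases h : Summable f
  · rw [← ENNReal.ofReal_tsum_of_nonneg hf h, ENNReal.toReal_ofReal (tsum_nonneg hf)]
  · rw [tsum_eq_zero_of_not_summable h]
    have h2 : ∑' i, ENNReal.ofReal (f i) = ∞ := by
      by_contra hne
      apply h
      have h3 : Summable fun i => (f i).toNNReal := by
        rw [← ENNReal.tsum_coe_ne_top_iff_summable]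
        simpa [ENNReal.ofReal] using hne
      exact (NNReal.summable_coe.2 h3).congr fun i => Real.coe_toNNReal _ (hf i)
    simp [h2]

lemma measurable_tsum_real {ι Ω : Type*} [Countable ι] [MeasurableSpace Ω]
    {f : ι → Ω → ℝ} (hm : ∀ i, Measurable (f i)) (h0 : ∀ i ω, 0 ≤ f i ω) :
    Measurable fun ω => ∑' i, f i ω := by
  have h : (fun ω => ∑' i, f i ω) = fun ω => (∑' i, ENNReal.ofReal (f i ω)).toReal := by
    funext ω; exact real_tsum_eq_toReal _ (fun i => h0 i ω)
  rw [h]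
  exact (Measurable.ennreal_tsum fun i => (hm i).ennreal_ofReal).ennreal_toReal

lemma integrable_of_le_one {Ω : Type*} [MeasurableSpace Ω] {P : Measure Ω}
    [IsProbabilityMeasure P] {f : Ω → ℝ} (hm : AEStronglyMeasurable f P)
    (h0 : ∀ ω, 0 ≤ f ω) (h1 : ∀ ω, f ω ≤ 1) : Integrable f P :=
  (integrable_const (1:ℝ)).mono' hm (ae_of_all _ fun ω => by
    rw [Real.norm_eq_abs, abs_of_nonneg (h0 ω)]; exact h1 ω)

lemma ofReal_tsum_le {ι : Type*} (f : ι → ℝ) (hf : ∀ i, 0 ≤ f i) :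
    ENNReal.ofReal (∑' i, f i) ≤ ∑' i, ENNReal.ofReal (f i) := by
  rw [real_tsum_eq_toReal f hf]
  exact ENNReal.ofReal_toReal_le

lemma lintegral_ofReal_tsum_eq {ι Ω : Type*} [Countable ι] [MeasurableSpace Ω]
    {P : Measure Ω} {f : ι → Ω → ℝ}
    (hm : ∀ i, Measurable (f i)) (h0 : ∀ i ω, 0 ≤ f i ω)
    (hi : ∀ i, Integrable (f i) P) (hs : Summable fun i => ∫ ω, f i ω ∂P) :
    ∫⁻ ω, ∑' i, ENNReal.ofReal (f i ω) ∂P = ENNReal.ofReal (∑' i, ∫ ω, f i ω ∂P) := by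
  rw [lintegral_tsum fun i => ((hm i).ennreal_ofReal).aemeasurable]
  rw [tsum_congr fun i => (ofReal_integral_eq_lintegral_ofReal (hi i) (ae_of_all _ (h0 i))).symm]
  exact (ENNReal.ofReal_tsum_of_nonneg (fun i => integral_nonneg (h0 i)) hs).symm

lemma integrable_tsum_of_nonneg {ι Ω : Type*} [Countable ι] [MeasurableSpace Ω]
    {P : Measure Ω} {f : ι → Ω → ℝ}
    (hm : ∀ i, Measurable (f i)) (h0 : ∀ i ω, 0 ≤ f i ω)
    (hi : ∀ i, Integrable (f i) P) (hs : Summable fun i => ∫ ω, f i ω ∂P) :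
    Integrable (fun ω => ∑' i, f i ω) P := by
  refine ⟨(measurable_tsum_real hm h0).aestronglyMeasurable, ?_⟩
  rw [hasFiniteIntegral_iff_norm]
  calc ∫⁻ ω, ENNReal.ofReal ‖∑' i, f i ω‖ ∂P
      = ∫⁻ ω, ENNReal.ofReal (∑' i, f i ω) ∂P := by
        apply lintegral_congr; intro ω
        rw [Real.norm_of_nonneg (tsum_nonneg (fun i => h0 i ω))]
    _ ≤ ∫⁻ ω, ∑' i, ENNReal.ofReal (f i ω) ∂P :=
        lintegral_mono fun ω => ofReal_tsum_le _ (fun i => h0 i ω)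
    _ = ENNReal.ofReal (∑' i, ∫ ω, f i ω ∂P) := lintegral_ofReal_tsum_eq hm h0 hi hs
    _ < ∞ := ENNReal.ofReal_lt_top

lemma ae_summable_of_summable_integral {ι Ω : Type*} [Countable ι] [MeasurableSpace Ω]
    {P : Measure Ω} {f : ι → Ω → ℝ}
    (hm : ∀ i, Measurable (f i)) (h0 : ∀ i ω, 0 ≤ f i ω)
    (hi : ∀ i, Integrable (f i) P) (hs : Summable fun i => ∫ ω, f i ω ∂P) :
    ∀ᵐ ω ∂P, Summable fun i => f i ω := by
  have h1 : ∫⁻ ω, ∑' i, ENNReal.ofReal (f i ω) ∂P ≠ ∞ := by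
    rw [lintegral_ofReal_tsum_eq hm h0 hi hs]; exact ENNReal.ofReal_ne_top
  have h2 := ae_lt_top (Measurable.ennreal_tsum fun i => (hm i).ennreal_ofReal) h1
  filter_upwards [h2] with ω hω
  have h3 : Summable fun i => (f i ω).toNNReal := by
    rw [← ENNReal.tsum_coe_ne_top_iff_summable]
    simpa [ENNReal.ofReal] using hω.ne
  exact (NNReal.summable_coe.2 h3).congr fun i => Real.coe_toNNReal _ (h0 i ω)

lemma prod_ite_pow (s c : ℝ) (k n : ℕ) :
    ∏ ℓ ∈ Finset.range n, (if ℓ < k then s else c) = s ^ min k n * c ^ (n - min k n) := by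
  induction n with
  | zero => simp
  | succ n ih =>
    rw [Finset.prod_range_succ, ih]
    rcases lt_or_ge n k with h | h
    · have h1 : min k n = n := by omega
      have h2 : min k (n+1) = n+1 := by omega
      simp [h, h1, h2, pow_succ]
    · have h1 : min k n = k := by omega
      have h2 : min k (n+1) = k := by omega
      have h3 : n + 1 - k = (n - k) + 1 := by omega
      simp only [not_lt.mpr h, if_false, h1, h2, h3, pow_succ]
      ring



lemma integrable_of_le_one' {Ω : Type*} [MeasurableSpace Ω] {P : Measure Ω}
    [IsProbabilityMeasure P] {f : Ω → ℝ} (hm : AEStronglyMeasurable f P)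
    (h0 : ∀ ω, 0 ≤ f ω) (h1 : ∀ ω, f ω ≤ 1) : Integrable f P :=
  (integrable_const (1:ℝ)).mono' hm (ae_of_all _ fun ω => by
    rw [Real.norm_eq_abs, abs_of_nonneg (h0 ω)]; exact h1 ω)

lemma integral_indep_prod {E Ω : Type*} [MeasurableSpace E] [MeasurableSpace Ω]
    (P : Measure Ω) [IsProbabilityMeasure P]
    (W : ℕ → Ω → E) (hW : ∀ ℓ, Measurable (W ℓ))
    (hindep : iIndepFun W P)
    (g : ℕ → E → ℝ) (hgm : ∀ ℓ, Measurable (g ℓ))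
    (hg0 : ∀ ℓ e, 0 ≤ g ℓ e) (hg1 : ∀ ℓ e, g ℓ e ≤ 1)
    (F : Finset ℕ) :
    ∫ ω, ∏ ℓ ∈ F, g ℓ (W ℓ ω) ∂P = ∏ ℓ ∈ F, ∫ ω, g ℓ (W ℓ ω) ∂P := by
  classical
  have hci : iIndepFun (fun ℓ => g ℓ ∘ W ℓ) P :=
    hindep.comp g hgm
  have hsm : ∀ ℓ, Measurable (g ℓ ∘ W ℓ) := fun ℓ => (hgm ℓ).comp (hW ℓ)
  induction F using Finset.induction_on with
  | empty => simp
  | insert a F' ha ih =>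
    have hIF : IndepFun (∏ j ∈ F', (fun ω => g j (W j ω))) (fun ω => g a (W a ω)) P :=
      hci.indepFun_finsetProd_of_notMem hsm ha
    have hprodeq : (∏ j ∈ F', (fun ω => g j (W j ω))) = fun ω => ∏ j ∈ F', g j (W j ω) := by
      funext ω; exact Finset.prod_apply ω F' _
    rw [hprodeq] at hIF
    have hInt1 : Integrable (fun ω => ∏ j ∈ F', g j (W j ω)) P :=
      integrable_of_le_one' (Finset.measurable_prod _ fun ℓ _ => hsm ℓ).aestronglyMeasurable
        (fun ω => Finset.prod_nonneg fun ℓ _ => hg0 ℓ _)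
        (fun ω => Finset.prod_le_one (fun ℓ _ => hg0 ℓ _) (fun ℓ _ => hg1 ℓ _))
    have hInt2 : Integrable (fun ω => g a (W a ω)) P :=
      integrable_of_le_one' (hsm a).aestronglyMeasurable (fun ω => hg0 a _) (fun ω => hg1 a _)
    have hmul := hIF.integral_mul_eq_mul_integral hInt1.aestronglyMeasurable hInt2.aestronglyMeasurable
    have heq : (fun ω => ∏ ℓ ∈ insert a F', g ℓ (W ℓ ω)) =
        fun ω => (∏ j ∈ F', g j (W j ω)) * g a (W a ω) := by
      funext ω; rw [Finset.prod_insert ha, mul_comm]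
    calc ∫ ω, ∏ ℓ ∈ insert a F', g ℓ (W ℓ ω) ∂P
        = ∫ ω, (∏ j ∈ F', g j (W j ω)) * g a (W a ω) ∂P := by rw [heq]
      _ = (∫ ω, ∏ j ∈ F', g j (W j ω) ∂P) * ∫ ω, g a (W a ω) ∂P := hmul
      _ = ∏ ℓ ∈ insert a F', ∫ ω, g ℓ (W ℓ ω) ∂P := by
          rw [ih, Finset.prod_insert ha, mul_comm]



set_option maxHeartbeats 2000000 in
lemma core_variance {E Ω : Type*} [MeasurableSpace E] [MeasurableSpace Ω]
    (P : Measure Ω) [IsProbabilityMeasure P] (μ2 : Measure E) [IsProbabilityMeasure μ2]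
    (W : ℕ → Ω → E) (hW : ∀ ℓ, Measurable (W ℓ))
    (hindep : iIndepFun W P)
    (hlaw : ∀ ℓ, P.map (W ℓ) = μ2)
    (A B : E → ℝ) (hAm : Measurable A) (hBm : Measurable B)
    (hA0 : ∀ e, 0 ≤ A e) (hA1 : ∀ e, A e ≤ 1)
    (hB0 : ∀ e, 0 ≤ B e) (hB1 : ∀ e, B e ≤ 1)
    (c s : ℝ) (hc0 : 0 ≤ c) (hc1 : c < 1) (hs0 : 0 ≤ s) (hsc : s ≤ c)
    (hEA : ∫ e, A e ∂μ2 = c) (hEB : ∫ e, B e ∂μ2 = c)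
    (hEA2 : ∫ e, A e * A e ∂μ2 = s) (hEB2 : ∫ e, B e * B e ∂μ2 = c)
    (k : ℕ) :
    variance (fun ω => 1 + ∑' j : ℕ,
        (∏ ℓ ∈ Finset.range (min k (j + 1)), A (W ℓ ω)) *
          ∏ ℓ ∈ Finset.Ico k (j + 1), B (W ℓ ω)) P =
      1 + 2 * (c / (1 - c)) + (1 + c) / (1 - c) *
          ((∑ i ∈ Finset.range k, s ^ (i + 1)) + s ^ k * (c / (1 - c)))
        - (1 + c / (1 - c)) ^ 2 := by
  classical
  have h1c : (0:ℝ) < 1 - c := by linarith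
  -- the per-coordinate functions
  set h : ℕ → E → ℝ := fun ℓ => if ℓ < k then A else B with hh
  have hhm : ∀ ℓ, Measurable (h ℓ) := fun ℓ => by
    by_cases hℓ : ℓ < k <;> simp [hh, hℓ, hAm, hBm]
  have hh0 : ∀ ℓ e, 0 ≤ h ℓ e := fun ℓ e => by
    by_cases hℓ : ℓ < k <;> simp [hh, hℓ, hA0 e, hB0 e]
  have hh1 : ∀ ℓ e, h ℓ e ≤ 1 := fun ℓ e => by
    by_cases hℓ : ℓ < k <;> simp [hh, hℓ, hA1 e, hB1 e]
  have hEh : ∀ ℓ, ∫ e, h ℓ e ∂μ2 = c := fun ℓ => by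
    by_cases hℓ : ℓ < k <;> simp [hh, hℓ, hEA, hEB]
  have hEh2 : ∀ ℓ, ∫ e, h ℓ e * h ℓ e ∂μ2 = (if ℓ < k then s else c) := fun ℓ => by
    by_cases hℓ : ℓ < k <;> simp [hh, hℓ, hEA2, hEB2]
  -- the terms
  set t : ℕ → Ω → ℝ := fun j ω => ∏ ℓ ∈ Finset.range (j+1), h ℓ (W ℓ ω) with ht
  have hteq : ∀ ω j, (∏ ℓ ∈ Finset.range (min k (j + 1)), A (W ℓ ω)) *
      ∏ ℓ ∈ Finset.Ico k (j + 1), B (W ℓ ω) = t j ω := by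
    intro ω j
    rcases le_or_gt k (j+1) with hk | hk
    · have h1 : min k (j+1) = k := min_eq_left hk
      rw [h1, ht]
      simp only
      rw [← Finset.prod_range_mul_prod_Ico (fun ℓ => h ℓ (W ℓ ω)) hk]
      congr 1
      · refine Finset.prod_congr rfl fun ℓ hℓ => ?_
        have : ℓ < k := Finset.mem_range.mp hℓ
        simp [hh, this]
      · refine Finset.prod_congr rfl fun ℓ hℓ => ?_
        have : ¬ ℓ < k := not_lt.mpr (Finset.mem_Ico.mp hℓ).1
        simp [hh, this]
    · have h1 : min k (j+1) = j+1 := min_eq_right hk.le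
      have h2 : Finset.Ico k (j+1) = ∅ := Finset.Ico_eq_empty (by omega)
      rw [h1, h2, ht]
      simp only [Finset.prod_empty, mul_one]
      refine Finset.prod_congr rfl fun ℓ hℓ => ?_
      have : ℓ < k := by have := Finset.mem_range.mp hℓ; omega
      simp [hh, this]
  have htm : ∀ j, Measurable (t j) := fun j =>
    Finset.measurable_prod _ fun ℓ _ => (hhm ℓ).comp (hW ℓ)
  have ht0 : ∀ j ω, 0 ≤ t j ω := fun j ω => Finset.prod_nonneg fun ℓ _ => hh0 ℓ _
  have ht1 : ∀ j ω, t j ω ≤ 1 := fun j ω =>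
    Finset.prod_le_one (fun ℓ _ => hh0 ℓ _) (fun ℓ _ => hh1 ℓ _)
  have hti : ∀ j, Integrable (t j) P := fun j =>
    integrable_of_le_one (htm j).aestronglyMeasurable (ht0 j) (ht1 j)
  have hmap : ∀ (ℓ : ℕ) (g : E → ℝ), Measurable g →
      ∫ ω, g (W ℓ ω) ∂P = ∫ e, g e ∂μ2 := by
    intro ℓ g hg
    rw [← hlaw ℓ, integral_map (hW ℓ).aemeasurable hg.aestronglyMeasurable]
  -- first moments of the terms
  have hEt : ∀ j, ∫ ω, t j ω ∂P = c ^ (j+1) := by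
    intro j
    rw [ht]
    simp only
    rw [integral_indep_prod P W hW hindep h hhm hh0 hh1 (Finset.range (j+1))]
    rw [Finset.prod_congr rfl fun ℓ _ => (hmap ℓ (h ℓ) (hhm ℓ)).trans (hEh ℓ)]
    rw [Finset.prod_const, Finset.card_range]
  -- second moments
  set G : ℕ → ℝ := fun i => s ^ min k (i+1) * c ^ (i + 1 - min k (i+1)) with hG
  have hG0 : ∀ i, 0 ≤ G i := fun i =>
    mul_nonneg (pow_nonneg hs0 _) (pow_nonneg hc0 _)
  have hGle : ∀ i, G i ≤ c ^ (i+1) := by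
    intro i
    have h1 : s ^ min k (i+1) ≤ c ^ min k (i+1) := pow_le_pow_left₀ hs0 hsc _
    calc G i ≤ c ^ min k (i+1) * c ^ (i + 1 - min k (i+1)) :=
          mul_le_mul_of_nonneg_right h1 (pow_nonneg hc0 _)
      _ = c ^ (i+1) := by rw [← pow_add]; congr 1; omega
  have hEtt : ∀ i j, i ≤ j → ∫ ω, t i ω * t j ω ∂P = G i * c ^ (j - i) := by
    intro i j hij
    set g2 : ℕ → E → ℝ := fun ℓ => if ℓ < i+1 then (fun e => h ℓ e * h ℓ e) else h ℓ with hg2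
    have hg2m : ∀ ℓ, Measurable (g2 ℓ) := fun ℓ => by
      by_cases hℓ : ℓ < i+1 <;> simp only [Nat.lt_add_one_iff] at hℓ <;> simp [hg2, hℓ, hhm ℓ] <;> exact (hhm ℓ).mul (hhm ℓ)
    have hg20 : ∀ ℓ e, 0 ≤ g2 ℓ e := fun ℓ e => by
      by_cases hℓ : ℓ < i+1 <;> simp only [Nat.lt_add_one_iff] at hℓ <;> simp [hg2, hℓ, mul_nonneg (hh0 ℓ e) (hh0 ℓ e), hh0 ℓ e]
    have hg21 : ∀ ℓ e, g2 ℓ e ≤ 1 := fun ℓ e => by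
      by_cases hℓ : ℓ < i+1
      · simp only [hg2, hℓ, if_true]
        exact mul_le_one₀ (hh1 ℓ e) (hh0 ℓ e) (hh1 ℓ e)
      · simp [hg2, mt Nat.lt_add_one_iff.mpr hℓ, hh1 ℓ e]
    have hptw : ∀ ω, t i ω * t j ω = ∏ ℓ ∈ Finset.range (j+1), g2 ℓ (W ℓ ω) := by
      intro ω
      have hs1 : t j ω = (∏ ℓ ∈ Finset.range (i+1), h ℓ (W ℓ ω)) *
          ∏ ℓ ∈ Finset.Ico (i+1) (j+1), h ℓ (W ℓ ω) :=
        (Finset.prod_range_mul_prod_Ico _ (by omega)).symm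
      have hs2 : (∏ ℓ ∈ Finset.range (j+1), g2 ℓ (W ℓ ω)) =
          (∏ ℓ ∈ Finset.range (i+1), g2 ℓ (W ℓ ω)) *
          ∏ ℓ ∈ Finset.Ico (i+1) (j+1), g2 ℓ (W ℓ ω) :=
        (Finset.prod_range_mul_prod_Ico _ (by omega)).symm
      calc t i ω * t j ω
          = ((∏ ℓ ∈ Finset.range (i+1), h ℓ (W ℓ ω)) * ∏ ℓ ∈ Finset.range (i+1), h ℓ (W ℓ ω)) *
            ∏ ℓ ∈ Finset.Ico (i+1) (j+1), h ℓ (W ℓ ω) := by rw [hs1, ht]; ring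
        _ = (∏ ℓ ∈ Finset.range (i+1), h ℓ (W ℓ ω) * h ℓ (W ℓ ω)) *
            ∏ ℓ ∈ Finset.Ico (i+1) (j+1), h ℓ (W ℓ ω) := by rw [← Finset.prod_mul_distrib]
        _ = (∏ ℓ ∈ Finset.range (i+1), g2 ℓ (W ℓ ω)) *
            ∏ ℓ ∈ Finset.Ico (i+1) (j+1), g2 ℓ (W ℓ ω) := by
            congr 1
            · refine Finset.prod_congr rfl fun ℓ hℓ => ?_
              have hℓ' : ℓ < i+1 := Finset.mem_range.mp hℓ
              simp [hg2, Nat.lt_add_one_iff.mp hℓ']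
            · refine Finset.prod_congr rfl fun ℓ hℓ => ?_
              have hℓ' : ¬ ℓ < i+1 := not_lt.mpr (Finset.mem_Ico.mp hℓ).1
              simp [hg2, mt Nat.lt_add_one_iff.mpr hℓ']
        _ = ∏ ℓ ∈ Finset.range (j+1), g2 ℓ (W ℓ ω) :=
            Finset.prod_range_mul_prod_Ico _ (by omega)
    have hval : ∀ ℓ, ∫ ω, g2 ℓ (W ℓ ω) ∂P = if ℓ < i+1 then (if ℓ < k then s else c) else c := by
      intro ℓ
      rw [hmap ℓ (g2 ℓ) (hg2m ℓ)]
      by_cases hℓ : ℓ < i+1 <;> simp only [Nat.lt_add_one_iff] at hℓ <;> simp [hg2, hℓ, hEh2 ℓ, hEh ℓ]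
    calc ∫ ω, t i ω * t j ω ∂P
        = ∫ ω, ∏ ℓ ∈ Finset.range (j+1), g2 ℓ (W ℓ ω) ∂P := by
          exact integral_congr_ae (ae_of_all _ fun ω => hptw ω)
      _ = ∏ ℓ ∈ Finset.range (j+1), ∫ ω, g2 ℓ (W ℓ ω) ∂P :=
          integral_indep_prod P W hW hindep g2 hg2m hg20 hg21 _
      _ = (∏ ℓ ∈ Finset.range (i+1), ∫ ω, g2 ℓ (W ℓ ω) ∂P) *
          ∏ ℓ ∈ Finset.Ico (i+1) (j+1), ∫ ω, g2 ℓ (W ℓ ω) ∂P :=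
          (Finset.prod_range_mul_prod_Ico _ (by omega)).symm
      _ = (∏ ℓ ∈ Finset.range (i+1), (if ℓ < k then s else c)) *
          ∏ ℓ ∈ Finset.Ico (i+1) (j+1), c := by
          congr 1
          · refine Finset.prod_congr rfl fun ℓ hℓ => ?_
            have hℓ' : ℓ < i+1 := Finset.mem_range.mp hℓ
            rw [hval ℓ, if_pos hℓ']
          · refine Finset.prod_congr rfl fun ℓ hℓ => ?_
            have hℓ' : ¬ ℓ < i+1 := not_lt.mpr (Finset.mem_Ico.mp hℓ).1
            rw [hval ℓ, if_neg hℓ']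
      _ = G i * c ^ (j - i) := by
          rw [prod_ite_pow, Finset.prod_const, Nat.card_Ico, hG]
          simp only
          have hme : (j + 1 - (i+1)) = j - i := by omega
          rw [hme]
  -- symmetric pair values
  set EP : ℕ × ℕ → ℝ := fun x => G (min x.1 x.2) * c ^ (max x.1 x.2 - min x.1 x.2) with hEP
  have hEPval : ∀ x : ℕ × ℕ, ∫ ω, t x.1 ω * t x.2 ω ∂P = EP x := by
    rintro ⟨i, j⟩
    rcases le_total i j with hij | hij
    · rw [hEtt i j hij, hEP]; simp only
      rw [min_eq_left hij, max_eq_right hij]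
    · have hcomm : ∀ ω, t i ω * t j ω = t j ω * t i ω := fun ω => mul_comm _ _
      rw [integral_congr_ae (ae_of_all _ hcomm), hEtt j i hij, hEP]
      simp only
      rw [min_eq_right hij, max_eq_left hij]
  have hEP0 : ∀ x : ℕ × ℕ, 0 ≤ EP x := fun x => mul_nonneg (hG0 _) (pow_nonneg hc0 _)
  -- dominating geometric family
  set d : ℝ := Real.sqrt c with hd
  have hd0 : 0 ≤ d := Real.sqrt_nonneg c
  have hcd : c = d ^ 2 := (Real.sq_sqrt hc0).symm
  have hd1 : d < 1 := by nlinarith [Real.sqrt_nonneg c]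
  have hkey : ∀ i j : ℕ, c ^ (max i j + 1) ≤ d ^ i * d ^ j := by
    intro i j
    rw [← pow_add, hcd, ← pow_mul]
    exact pow_le_pow_of_le_one hd0 hd1.le (by omega)
  have hEPle : ∀ x : ℕ × ℕ, EP x ≤ d ^ x.1 * d ^ x.2 := by
    rintro ⟨i, j⟩
    refine le_trans ?_ (hkey i j)
    calc EP (i, j) ≤ c ^ (min i j + 1) * c ^ (max i j - min i j) :=
          mul_le_mul_of_nonneg_right (hGle _) (pow_nonneg hc0 _)
      _ = c ^ (max i j + 1) := by rw [← pow_add]; congr 1; omega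
  have hsumgeo : Summable fun n : ℕ => d ^ n := summable_geometric_of_lt_one hd0 hd1
  have hsumd : Summable fun x : ℕ × ℕ => d ^ x.1 * d ^ x.2 :=
    hsumgeo.mul_of_nonneg hsumgeo (fun i => pow_nonneg hd0 i) (fun j => pow_nonneg hd0 j)
  have hsumEP : Summable EP := Summable.of_nonneg_of_le hEP0 hEPle hsumd
  have hsumc1 : Summable (fun n : ℕ => c ^ (n+1)) := by
    refine ((summable_geometric_of_lt_one hc0 hc1).mul_left c).congr fun n => ?_
    rw [← pow_succ']
  have hts1 : ∑' n : ℕ, c ^ (n+1) = c / (1 - c) := by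
    calc ∑' n : ℕ, c ^ (n+1) = ∑' n : ℕ, c * c ^ n := tsum_congr fun n => pow_succ' c n
      _ = c * (1 - c)⁻¹ := by rw [tsum_mul_left, tsum_geometric_of_lt_one hc0 hc1]
      _ = c / (1 - c) := (div_eq_mul_inv _ _).symm
  have hsumG : Summable G := Summable.of_nonneg_of_le hG0 hGle hsumc1
  have hGsum : ∑' i, G i = (∑ i ∈ Finset.range k, s ^ (i+1)) + s ^ k * (c / (1 - c)) := by
    rw [← Summable.sum_add_tsum_nat_add k hsumG]
    congr 1
    · refine Finset.sum_congr rfl fun i hi => ?_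
      have h1 : min k (i+1) = i+1 := by have := Finset.mem_range.mp hi; omega
      rw [hG]; simp only
      rw [h1]; simp
    · have h2 : ∀ n : ℕ, G (n + k) = s ^ k * c ^ (n+1) := by
        intro n
        have h3 : min k (n + k + 1) = k := by omega
        have h4 : n + k + 1 - k = n + 1 := by omega
        rw [hG]; simp only
        rw [h3, h4]
      rw [tsum_congr h2, tsum_mul_left, hts1]
  -- double sum over pairs
  have hrow : ∀ i, Summable fun j => EP (i, j) := fun i =>
    Summable.of_nonneg_of_le (fun j => hEP0 (i, j)) (fun j => hEPle (i, j))
      (hsumgeo.mul_left (d ^ i))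
  have hgeo0 : ∑' n : ℕ, c ^ n = (1 - c)⁻¹ := tsum_geometric_of_lt_one hc0 hc1
  set D : ℕ → ℝ := fun i => ∑ j ∈ Finset.range i, G j * c ^ (i - j) with hD
  have hinner : ∀ i, ∑' j, EP (i, j) = D i + G i * (1 - c)⁻¹ := by
    intro i
    rw [← Summable.sum_add_tsum_nat_add i (hrow i)]
    congr 1
    · rw [hD]
      refine Finset.sum_congr rfl fun j hj => ?_
      have hji : j < i := Finset.mem_range.mp hj
      rw [hEP]; simp only
      rw [min_eq_right hji.le, max_eq_left hji.le]
    · have h2 : ∀ n : ℕ, EP (i, n + i) = G i * c ^ n := by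
        intro n
        rw [hEP]; simp only
        rw [min_eq_left (by omega), max_eq_right (by omega)]
        have hee : n + i - i = n := by omega
        rw [hee]
      rw [tsum_congr h2, tsum_mul_left, hgeo0]
  have hD0 : ∀ i, 0 ≤ D i := fun i =>
    Finset.sum_nonneg fun j _ => mul_nonneg (hG0 j) (pow_nonneg hc0 _)
  have hDle : ∀ i, D i ≤ i * c ^ (i+1) := by
    intro i
    rw [hD]; simp only
    calc ∑ j ∈ Finset.range i, G j * c ^ (i - j)
        ≤ ∑ _j ∈ Finset.range i, c ^ (i+1) := by
          refine Finset.sum_le_sum fun j hj => ?_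
          have hji : j < i := Finset.mem_range.mp hj
          calc G j * c ^ (i - j) ≤ c ^ (j+1) * c ^ (i - j) :=
                mul_le_mul_of_nonneg_right (hGle j) (pow_nonneg hc0 _)
            _ = c ^ (i+1) := by rw [← pow_add]; congr 1; omega
      _ = i * c ^ (i+1) := by rw [Finset.sum_const, Finset.card_range, nsmul_eq_mul]
  have hsumD : Summable D := by
    refine Summable.of_nonneg_of_le hD0 hDle ?_
    have h1 : Summable fun n : ℕ => (n : ℝ) ^ 1 * c ^ n :=
      summable_pow_mul_geometric_of_norm_lt_one 1 (by rwa [Real.norm_eq_abs, abs_of_nonneg hc0])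
    refine (h1.mul_right c).congr fun n => ?_
    rw [pow_one, pow_succ]; ring
  set H : ℕ × ℕ → ℝ := fun x => if x.2 < x.1 then G x.2 * c ^ (x.1 - x.2) else 0 with hH
  have hH0 : ∀ x, 0 ≤ H x := by
    rintro ⟨i, j⟩; rw [hH]; simp only
    split
    · exact mul_nonneg (hG0 _) (pow_nonneg hc0 _)
    · exact le_refl 0
  have hHle : ∀ x : ℕ × ℕ, H x ≤ d ^ x.1 * d ^ x.2 := by
    rintro ⟨i, j⟩
    rw [hH]; simp only
    split
    · rename_i hji
      refine le_trans ?_ (hkey i j)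
      have hmax : max i j = i := max_eq_left (le_of_lt hji)
      rw [hmax]
      calc G j * c ^ (i - j) ≤ c ^ (j+1) * c ^ (i - j) :=
            mul_le_mul_of_nonneg_right (hGle j) (pow_nonneg hc0 _)
        _ = c ^ (i+1) := by rw [← pow_add]; congr 1; omega
    · positivity
  have hsumH : Summable H := Summable.of_nonneg_of_le hH0 hHle hsumd
  have hDeq : ∀ i, ∑' j, H (i, j) = D i := by
    intro i
    have hz : ∀ j ∉ Finset.range i, H (i, j) = 0 := by
      intro j hj
      have hji : ¬ j < i := fun hcon => hj (Finset.mem_range.mpr hcon)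
      simp [hH, hji]
    rw [tsum_eq_sum hz, hD]
    refine Finset.sum_congr rfl fun j hj => ?_
    have hji : j < i := Finset.mem_range.mp hj
    simp [hH, hji]
  have hcol : ∀ j, ∑' i, H (i, j) = G j * (c / (1 - c)) := by
    intro j
    have hcolsum : Summable fun i => H (i, j) :=
      Summable.of_nonneg_of_le (fun i => hH0 (i, j)) (fun i => hHle (i, j))
        (hsumgeo.mul_right (d ^ j))
    rw [← Summable.sum_add_tsum_nat_add (j+1) hcolsum]
    have hz : ∀ i ∈ Finset.range (j+1), H (i, j) = 0 := by
      intro i hi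
      have hni : ¬ j < i := by have := Finset.mem_range.mp hi; omega
      simp [hH, hni]
    rw [Finset.sum_congr rfl hz, Finset.sum_const, smul_zero, zero_add]
    have h2 : ∀ n : ℕ, H (n + (j+1), j) = G j * c ^ (n+1) := by
      intro n
      have hlt : j < n + (j+1) := by omega
      have hee : n + (j+1) - j = n + 1 := by omega
      rw [hH]; simp only
      rw [if_pos hlt, hee]
    rw [tsum_congr h2, tsum_mul_left, hts1]
  have hHsum_val : ∑' x : ℕ × ℕ, H x = (∑' j, G j) * (c / (1 - c)) := by
    have he : ∑' x : ℕ × ℕ, H (Prod.swap x) = ∑' x : ℕ × ℕ, H x :=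
      (Equiv.prodComm ℕ ℕ).tsum_eq H
    rw [← he, Summable.tsum_prod hsumH.prod_symm]
    calc ∑' (j : ℕ) (i : ℕ), H (Prod.swap (j, i))
        = ∑' (j : ℕ), G j * (c / (1 - c)) := tsum_congr fun j => hcol j
      _ = (∑' j, G j) * (c / (1 - c)) := tsum_mul_right
  have hDval : ∑' i, D i = (∑' j, G j) * (c / (1 - c)) := by
    calc ∑' i, D i = ∑' i, ∑' j, H (i, j) := tsum_congr fun i => (hDeq i).symm
      _ = ∑' x : ℕ × ℕ, H x := (Summable.tsum_prod hsumH).symm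
      _ = (∑' j, G j) * (c / (1 - c)) := hHsum_val
  have hEPsum_val : ∑' x : ℕ × ℕ, EP x =
      (∑' i, G i) * (c / (1 - c)) + (∑' i, G i) * (1 - c)⁻¹ := by
    rw [Summable.tsum_prod hsumEP]
    calc ∑' (i : ℕ) (j : ℕ), EP (i, j)
        = ∑' i, (D i + G i * (1 - c)⁻¹) := tsum_congr fun i => hinner i
      _ = (∑' i, D i) + ∑' i, G i * (1 - c)⁻¹ := Summable.tsum_add hsumD (hsumG.mul_right _)
      _ = (∑' i, G i) * (c / (1 - c)) + (∑' i, G i) * (1 - c)⁻¹ := by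
          rw [hDval, tsum_mul_right]
  -- probabilistic integrals
  set S : Ω → ℝ := fun ω => ∑' j, t j ω with hS
  have hSm : Measurable S := measurable_tsum_real htm ht0
  have hsumEt : Summable fun j => ∫ ω, t j ω ∂P :=
    hsumc1.congr fun j => (hEt j).symm
  have hIntS : Integrable S P := integrable_tsum_of_nonneg htm ht0 hti hsumEt
  have habs : ∀ j, ∫ ω, ‖t j ω‖ ∂P = ∫ ω, t j ω ∂P := fun j =>
    integral_congr_ae (ae_of_all _ fun ω => by exact Real.norm_of_nonneg (ht0 j ω))
  have hnorm : Summable fun j => ∫ ω, ‖t j ω‖ ∂P := hsumEt.congr fun j => (habs j).symm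
  have hES : ∫ ω, S ω ∂P = c / (1 - c) := by
    calc ∫ ω, S ω ∂P = ∑' j, ∫ ω, t j ω ∂P :=
          (integral_tsum_of_summable_integral_norm hti hnorm).symm
      _ = ∑' j, c ^ (j+1) := tsum_congr hEt
      _ = c / (1 - c) := hts1
  have haes : ∀ᵐ ω ∂P, Summable fun j => t j ω :=
    ae_summable_of_summable_integral htm ht0 hti hsumEt
  set T : ℕ × ℕ → Ω → ℝ := fun x ω => t x.1 ω * t x.2 ω with hT
  have hTm : ∀ x, Measurable (T x) := fun x => (htm x.1).mul (htm x.2)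
  have hT0 : ∀ x ω, 0 ≤ T x ω := fun x ω => mul_nonneg (ht0 _ _) (ht0 _ _)
  have hT1 : ∀ x ω, T x ω ≤ 1 := fun x ω => mul_le_one₀ (ht1 _ _) (ht0 _ _) (ht1 _ _)
  have hTi : ∀ x, Integrable (T x) P := fun x =>
    integrable_of_le_one (hTm x).aestronglyMeasurable (hT0 x) (hT1 x)
  have hsumET : Summable fun x : ℕ × ℕ => ∫ ω, T x ω ∂P :=
    hsumEP.congr fun x => (hEPval x).symm
  have hSq : ∀ᵐ ω ∂P, S ω * S ω = ∑' x : ℕ × ℕ, T x ω := by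
    filter_upwards [haes] with ω hω
    exact Summable.tsum_mul_tsum hω hω (hω.mul_of_nonneg hω (fun i => ht0 i ω) (fun j => ht0 j ω))
  have hTabs : Summable fun x : ℕ × ℕ => ∫ ω, ‖T x ω‖ ∂P :=
    hsumET.congr fun x =>
      (integral_congr_ae (ae_of_all _ fun ω => by exact Real.norm_of_nonneg (hT0 x ω))).symm
  have hES2 : ∫ ω, S ω * S ω ∂P = ∑' x : ℕ × ℕ, EP x := by
    rw [integral_congr_ae hSq, ← integral_tsum_of_summable_integral_norm hTi hTabs]
    exact tsum_congr hEPval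
  have hIntS2 : Integrable (fun ω => S ω * S ω) P := by
    refine (integrable_tsum_of_nonneg hTm hT0 hTi hsumET).congr ?_
    filter_upwards [hSq] with ω hω
    exact hω.symm
  -- moments of the estimator
  have hXm : AEStronglyMeasurable (fun ω => 1 + S ω) P :=
    (measurable_const.add hSm).aestronglyMeasurable
  have hfe : (fun ω => (1 + S ω) ^ 2) = fun ω => 1 + (2 * S ω + S ω * S ω) := by
    funext ω; ring
  have hIntX2 : Integrable (fun ω => (1 + S ω) ^ 2) P := by
    rw [hfe]
    exact (integrable_const 1).add ((hIntS.const_mul 2).add hIntS2)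
  have hmem : MemLp (fun ω => 1 + S ω) 2 P := (memLp_two_iff_integrable_sq hXm).mpr hIntX2
  have hvar := variance_eq_sub hmem
  have hEX : ∫ ω, (1 + S ω) ∂P = 1 + c / (1 - c) := by
    rw [integral_add (integrable_const 1) hIntS, integral_const]
    simp [hES]
  have hI21 : Integrable (fun ω => 2 * S ω) P := hIntS.const_mul 2
  have hEX2 : ∫ ω, (1 + S ω) ^ 2 ∂P = 1 + (2 * (c / (1 - c)) + ∑' x : ℕ × ℕ, EP x) := by
    calc ∫ ω, (1 + S ω) ^ 2 ∂P
        = ∫ ω, (1 + (2 * S ω + S ω * S ω)) ∂P := by rw [hfe]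
      _ = (∫ _ω, (1:ℝ) ∂P) + ∫ ω, (2 * S ω + S ω * S ω) ∂P :=
          integral_add (integrable_const 1) (hI21.add hIntS2)
      _ = (∫ _ω, (1:ℝ) ∂P) + ((∫ ω, 2 * S ω ∂P) + ∫ ω, S ω * S ω ∂P) := by
          rw [integral_add hI21 hIntS2]
      _ = 1 + (2 * (c / (1 - c)) + ∑' x : ℕ × ℕ, EP x) := by
          rw [integral_const_mul, integral_const, hES, hES2]
          simp
  -- assemble
  have hfun : (fun ω => 1 + ∑' j : ℕ,
      (∏ ℓ ∈ Finset.range (min k (j + 1)), A (W ℓ ω)) *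
        ∏ ℓ ∈ Finset.Ico k (j + 1), B (W ℓ ω)) = fun ω => 1 + S ω := by
    funext ω
    rw [hS]; simp only
    congr 1
    exact tsum_congr fun j => hteq ω j
  rw [hfun, hvar]
  have hpow : (fun ω => 1 + S ω) ^ 2 = fun ω => (1 + S ω) ^ 2 := by
    funext ω; simp [Pi.pow_apply]
  rw [hpow]
  show (∫ ω, (1 + S ω) ^ 2 ∂P) - (∫ ω, (1 + S ω) ∂P) ^ 2 = _
  rw [hEX2, hEX, hEPsum_val, hGsum]
  have h1cne : (1:ℝ) - c ≠ 0 := ne_of_gt h1c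
  field_simp
  ring


set_option maxHeartbeats 1000000 in
/-- Fix `z` with `p(z) > 0`, and let `(y_ℓ, u_ℓ)_{ℓ ≥ 1}` be i.i.d. with
`y_ℓ` of density `q(·|z)` and `u_ℓ` uniform on `(0,1)`, independent.  Writing `p = p(z)`
and `r = r(z) = ∫ α(z,y)² q(y|z) dy`, for every `k ≥ 0` the one-step variance decrement
satisfies `Var(ξ̂ᵏ) − Var(ξ̂ᵏ⁺¹) = (1 − 2p + r)ᵏ · [(2 − p)/p²] · (p − r)`. -/
theorem vanillaRB_variance_decrement
    {X : Type*} [MeasurableSpace X] (ν : Measure X) [SigmaFinite ν]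
    (pi : X → ℝ) (qq : X → X → ℝ)
    (hpi : Measurable pi) (hqq : Measurable (Function.uncurry qq))
    (hpi0 : ∀ x, 0 ≤ pi x) (hqq0 : ∀ x y, 0 ≤ qq x y)
    (z : X)
    [IsProbabilityMeasure (ν.withDensity fun y => ENNReal.ofReal (qq z y))]
    (p : ℝ) (hp : p = ∫ y, mhAlpha pi qq z y * qq z y ∂ν) (hppos : 0 < p)
    (r : ℝ) (hr : r = ∫ y, (mhAlpha pi qq z y) ^ 2 * qq z y ∂ν)
    {Ω : Type*} [MeasurableSpace Ω] (P : Measure Ω) [IsProbabilityMeasure P]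
    (Y : ℕ → Ω → X) (U : ℕ → Ω → ℝ)
    (hmeas : ∀ ℓ, Measurable fun ω => (Y ℓ ω, U ℓ ω))
    (hindep : iIndepFun (fun ℓ ω => (Y ℓ ω, U ℓ ω)) P)
    (hlaw : ∀ ℓ, P.map (fun ω => (Y ℓ ω, U ℓ ω)) =
      (ν.withDensity fun y => ENNReal.ofReal (qq z y)).prod
        (volume.restrict (Set.Ioo (0:ℝ) 1)))
    (k : ℕ) :
    variance (fun ω => 1 + ∑' j : ℕ,
        rbTerm (mhAlpha pi qq z) (fun ℓ => Y ℓ ω) (fun ℓ => U ℓ ω) k j) P -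
      variance (fun ω => 1 + ∑' j : ℕ,
        rbTerm (mhAlpha pi qq z) (fun ℓ => Y ℓ ω) (fun ℓ => U ℓ ω) (k + 1) j) P =
      (1 - 2 * p + r) ^ k * ((2 - p) / p ^ 2) * (p - r) := by
  classical
  set a : X → ℝ := mhAlpha pi qq z with ha
  have hqzm : Measurable (fun y => qq z y) := hqq.comp (measurable_const.prodMk measurable_id)
  have ham : Measurable a := by
    rw [ha]
    have hnum : Measurable (fun y => pi y * qq y z) :=
      hpi.mul (hqq.comp (measurable_id.prodMk measurable_const))
    have hden : Measurable (fun y => pi z * qq z y) := hqzm.const_mul (pi z)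
    exact measurable_const.min (hnum.div hden)
  have ha0 : ∀ y, 0 ≤ a y := fun y =>
    le_min zero_le_one (div_nonneg (mul_nonneg (hpi0 y) (hqq0 y z))
      (mul_nonneg (hpi0 z) (hqq0 z y)))
  have ha1 : ∀ y, a y ≤ 1 := fun y => min_le_left _ _
  set μ : Measure X := ν.withDensity (fun y => ENNReal.ofReal (qq z y)) with hμ
  have hμeq : ∀ g : X → ℝ, Measurable g → ∫ y, g y ∂μ = ∫ y, g y * qq z y ∂ν := by
    intro g hg
    rw [hμ]
    have hwd : (fun y => ENNReal.ofReal (qq z y)) = fun y => ((qq z y).toNNReal : ℝ≥0∞) := rfl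
    rw [hwd, integral_withDensity_eq_integral_smul hqzm.real_toNNReal g]
    refine integral_congr_ae (ae_of_all _ fun y => ?_)
    show (qq z y).toNNReal • g y = g y * qq z y
    rw [NNReal.smul_def, Real.coe_toNNReal _ (hqq0 z y), mul_comm, smul_eq_mul]
  have hIa : Integrable a μ := integrable_of_le_one ham.aestronglyMeasurable ha0 ha1
  have hIaa : Integrable (fun y => a y * a y) μ :=
    integrable_of_le_one (ham.mul ham).aestronglyMeasurable
      (fun y => mul_nonneg (ha0 y) (ha0 y))
      (fun y => mul_le_one₀ (ha1 y) (ha0 y) (ha1 y))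
  have hI1a : Integrable (fun y => 1 - a y) μ :=
    integrable_of_le_one (measurable_const.sub ham).aestronglyMeasurable
      (fun y => by linarith [ha1 y]) (fun y => by linarith [ha0 y])
  have hI1a2 : Integrable (fun y => (1 - a y) * (1 - a y)) μ :=
    integrable_of_le_one ((measurable_const.sub ham).mul
      (measurable_const.sub ham)).aestronglyMeasurable
      (fun y => mul_nonneg (by linarith [ha1 y]) (by linarith [ha1 y]))
      (fun y => mul_le_one₀ (by linarith [ha0 y]) (by linarith [ha1 y]) (by linarith [ha0 y]))
  have hpa : ∫ y, a y ∂μ = p := by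
    rw [hμeq a ham, hp]
  have hra : ∫ y, a y * a y ∂μ = r := by
    rw [hμeq (fun y => a y * a y) (ham.mul ham), hr]
    refine integral_congr_ae (ae_of_all _ fun y => ?_)
    rw [ha]; ring
  have hp1 : p ≤ 1 := by
    rw [← hpa]
    calc ∫ y, a y ∂μ ≤ ∫ _y, (1:ℝ) ∂μ := integral_mono hIa (integrable_const 1) ha1
      _ = 1 := by simp
  have h1a : ∫ y, (1 - a y) ∂μ = 1 - p := by
    rw [integral_sub (integrable_const 1) hIa, hpa]
    simp
  have hsint : ∫ y, (1 - a y) * (1 - a y) ∂μ = 1 - 2*p + r := by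
    have hexp : (fun y => (1 - a y) * (1 - a y)) =
        fun y => (1 : ℝ) - 2 * a y + a y * a y := by funext y; ring
    rw [hexp]
    have hI2a : Integrable (fun y => 2 * a y) μ := hIa.const_mul 2
    calc ∫ y, (1 - 2 * a y + a y * a y) ∂μ
        = (∫ y, (1 - 2 * a y) ∂μ) + ∫ y, a y * a y ∂μ :=
          integral_add ((integrable_const 1).sub hI2a) hIaa
      _ = ((∫ _y, (1:ℝ) ∂μ) - ∫ y, 2 * a y ∂μ) + r := by
          rw [integral_sub (integrable_const 1) hI2a, hra]
      _ = 1 - 2*p + r := by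
          rw [integral_const_mul, hpa]
          simp
  have hs0 : (0:ℝ) ≤ 1 - 2*p + r := by
    rw [← hsint]
    exact integral_nonneg fun y => mul_self_nonneg _
  have hsc : 1 - 2*p + r ≤ 1 - p := by
    rw [← hsint, ← h1a]
    refine integral_mono hI1a2 hI1a fun y => ?_
    nlinarith [ha0 y, ha1 y]
  -- the product measure
  set κ : Measure ℝ := volume.restrict (Set.Ioo (0:ℝ) 1) with hκ
  haveI hκP : IsProbabilityMeasure κ := by
    constructor
    rw [hκ, Measure.restrict_apply_univ, Real.volume_Ioo]
    norm_num
  set μ2 : Measure (X × ℝ) := μ.prod κ with hμ2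
  haveI : IsProbabilityMeasure μ2 := by rw [hμ2]; infer_instance
  set Af : X × ℝ → ℝ := fun w => 1 - a w.1 with hAf
  set Bf : X × ℝ → ℝ := fun w => if a w.1 ≤ w.2 then (1:ℝ) else 0 with hBf
  have hAfm : Measurable Af := measurable_const.sub (ham.comp measurable_fst)
  have hBfm : Measurable Bf :=
    Measurable.ite (measurableSet_le (ham.comp measurable_fst) measurable_snd)
      measurable_const measurable_const
  have hAf0 : ∀ w, 0 ≤ Af w := fun w => by rw [hAf]; simp only; linarith [ha1 w.1]
  have hAf1 : ∀ w, Af w ≤ 1 := fun w => by rw [hAf]; simp only; linarith [ha0 w.1]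
  have hBf0 : ∀ w, 0 ≤ Bf w := fun w => by rw [hBf]; simp only; split <;> norm_num
  have hBf1 : ∀ w, Bf w ≤ 1 := fun w => by rw [hBf]; simp only; split <;> norm_num
  have hIAf : Integrable Af μ2 := integrable_of_le_one hAfm.aestronglyMeasurable hAf0 hAf1
  have hIAf2 : Integrable (fun w => Af w * Af w) μ2 :=
    integrable_of_le_one (hAfm.mul hAfm).aestronglyMeasurable
      (fun w => mul_nonneg (hAf0 w) (hAf0 w))
      (fun w => mul_le_one₀ (hAf1 w) (hAf0 w) (hAf1 w))
  have hIBf : Integrable Bf μ2 := integrable_of_le_one hBfm.aestronglyMeasurable hBf0 hBf1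
  have hEA : ∫ w, Af w ∂μ2 = 1 - p := by
    rw [hμ2, integral_prod _ (hμ2 ▸ hIAf)]
    refine (integral_congr_ae (ae_of_all _ fun y => ?_)).trans h1a
    rw [hAf]
    simp
  have hEA2 : ∫ w, Af w * Af w ∂μ2 = 1 - 2*p + r := by
    rw [hμ2, integral_prod _ (hμ2 ▸ hIAf2)]
    refine (integral_congr_ae (ae_of_all _ fun y => ?_)).trans hsint
    rw [hAf]
    simp
  have hinner : ∀ y : X, ∫ u, Bf (y, u) ∂κ = 1 - a y := by
    intro y
    have hsi : ∀ u : ℝ, Bf (y, u) = (Set.Ici (a y)).indicator 1 u := by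
      intro u
      rw [hBf]
      simp [Set.indicator_apply, Set.mem_Ici]
    rw [integral_congr_ae (ae_of_all _ hsi), integral_indicator_one measurableSet_Ici, hκ,
      measureReal_def, Measure.restrict_apply measurableSet_Ici]
    rcases eq_or_lt_of_le (ha0 y) with h0 | h0
    · have hset : Set.Ici (a y) ∩ Set.Ioo 0 1 = Set.Ioo (0:ℝ) 1 := by
        rw [← h0]
        ext u
        simp only [Set.mem_inter_iff, Set.mem_Ici, Set.mem_Ioo, and_iff_right_iff_imp]
        rintro ⟨h1, _⟩
        linarith
      rw [hset, Real.volume_Ioo, ← h0]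
      norm_num
    · have hset : Set.Ici (a y) ∩ Set.Ioo 0 1 = Set.Ico (a y) 1 := by
        ext u
        simp only [Set.mem_inter_iff, Set.mem_Ici, Set.mem_Ioo, Set.mem_Ico]
        constructor
        · rintro ⟨h1, _, h3⟩; exact ⟨h1, h3⟩
        · rintro ⟨h1, h2⟩; exact ⟨h1, lt_of_lt_of_le h0 h1, h2⟩
      rw [hset, Real.volume_Ico, ENNReal.toReal_ofReal (by linarith [ha1 y])]
  have hEB : ∫ w, Bf w ∂μ2 = 1 - p := by
    rw [hμ2, integral_prod _ (hμ2 ▸ hIBf)]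
    refine (integral_congr_ae (ae_of_all _ fun y => ?_)).trans h1a
    exact hinner y
  have hBB : ∀ w, Bf w * Bf w = Bf w := fun w => by
    rw [hBf]; simp only; split <;> norm_num
  have hEB2 : ∫ w, Bf w * Bf w ∂μ2 = 1 - p := by
    rw [integral_congr_ae (ae_of_all _ hBB)]
    exact hEB
  have hcore := fun k' : ℕ => core_variance P μ2 (fun ℓ ω => (Y ℓ ω, U ℓ ω)) hmeas hindep hlaw
    Af Bf hAfm hBfm hAf0 hAf1 hBf0 hBf1 (1 - p) (1 - 2*p + r)
    (by linarith) (by linarith) hs0 hsc hEA hEB hEA2 hEB2 k'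
  have hfun : ∀ k' : ℕ, (fun ω => 1 + ∑' j : ℕ,
      rbTerm (mhAlpha pi qq z) (fun ℓ => Y ℓ ω) (fun ℓ => U ℓ ω) k' j) =
      (fun ω => 1 + ∑' j : ℕ,
        (∏ ℓ ∈ Finset.range (min k' (j + 1)), Af ((fun ℓ ω => (Y ℓ ω, U ℓ ω)) ℓ ω)) *
          ∏ ℓ ∈ Finset.Ico k' (j + 1), Bf ((fun ℓ ω => (Y ℓ ω, U ℓ ω)) ℓ ω)) := by
    intro k'
    rfl
  rw [hfun k, hfun (k+1), hcore k, hcore (k+1)]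
  rw [Finset.sum_range_succ]
  have h1 : (1:ℝ) - (1 - p) = p := by ring
  rw [h1]
  have hpne : p ≠ 0 := ne_of_gt hppos
  field_simp
  ring
end
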